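/- arXiv:1801.06148 — 6 statements merged into one kernel-verified Lean document; each statement's English description precedes it below -/
import Mathlib

section
/- Equip ℝ^d with a Euclidean norm (a norm induced by an inner product). Let (b_1, …, b_{d+1}) be an affine basis of ℝ^d and let b_0 be a point in the interior of the convex hull of {b_1, …, b_{d+1}} (this interior is nonempty). Set Γ = {0, b_1 − b_0, …, b_{d+1} − b_0}. Then the open Voronoi cell V^o_0(Γ) generated by 0 is a bounded set. -/
open MeasureTheory

/-- The open Voronoi cell of `x` in the grid `Γ`:
points strictly closer to `x` than to any other point of `Γ`. -/
def openVoronoiCell {E : Type*} [NormedAddCommGroup E] (Γ : Set E) (x : E) : Set E :=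
  {ξ | ∀ y ∈ Γ, y ≠ x → ‖ξ - x‖ < ‖ξ - y‖}

/-- in `ℝ^d` with a Euclidean norm (a norm induced by an inner product), if
`(b_1, …, b_{d+1})` is an affine basis and `b₀` lies in the interior of the convex hull of the
`b_i`, then for `Γ = {0, b_1 - b₀, …, b_{d+1} - b₀}` the open Voronoi cell generated by `0`
is bounded. -/
theorem stmt1 {E : Type*} [NormedAddCommGroup E] [InnerProductSpace ℝ E]
    [FiniteDimensional ℝ E] (d : ℕ) (hd : Module.finrank ℝ E = d)
    (b : AffineBasis (Fin (d + 1)) ℝ E) (b₀ : E)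
    (hb₀ : b₀ ∈ interior (convexHull ℝ (Set.range b)))
    (Γ : Set E) (hΓ : Γ = insert (0 : E) (Set.range fun i => b i - b₀)) :
    Bornology.IsBounded (openVoronoiCell Γ 0) := by
  -- get ε-ball around b₀ inside the convex hull
  rw [mem_interior_iff_mem_nhds, Metric.mem_nhds_iff] at hb₀
  obtain ⟨ε, hε, hball⟩ := hb₀
  -- the max of ‖b i - b₀‖²
  set v : Fin (d + 1) → E := fun i => b i - b₀ with hv
  obtain ⟨C, hC0, hC⟩ : ∃ C : ℝ, 0 ≤ C ∧ ∀ i, ‖v i‖ ^ 2 ≤ C := by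
    refine ⟨Finset.univ.sup' (by simp) (fun i => ‖v i‖ ^ 2), ?_, ?_⟩
    · exact le_trans (by positivity) (Finset.le_sup' (fun i => ‖v i‖ ^ 2) (Finset.mem_univ 0))
    · intro i; exact Finset.le_sup' (fun i => ‖v i‖ ^ 2) (Finset.mem_univ i)
  apply Bornology.IsBounded.subset (Metric.isBounded_closedBall (x := (0 : E)) (r := C / ε))
  intro ξ hξ
  simp only [Metric.mem_closedBall, dist_zero_right]
  -- key bound: 2⟪ξ, v i⟫ ≤ C for all i
  have key : ∀ i, 2 * (inner ℝ ξ (v i) : ℝ) ≤ C := by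
    intro i
    rcases eq_or_ne (v i) 0 with h0 | h0
    · rw [h0, inner_zero_right]; linarith [hC]
    · have hmem : v i ∈ Γ := by
        rw [hΓ]; exact Set.mem_insert_of_mem _ ⟨i, rfl⟩
      have hlt := hξ (v i) hmem h0
      rw [sub_zero] at hlt
      have hsq : ‖ξ‖ ^ 2 < ‖ξ - v i‖ ^ 2 := by
        apply pow_lt_pow_left₀ hlt (norm_nonneg _)
        norm_num
      rw [@norm_sub_sq_real] at hsq
      nlinarith [hC i]
  rcases eq_or_ne ξ 0 with rfl | hξ0
  · simp; positivity
  · have hn : (0 : ℝ) < ‖ξ‖ := norm_pos_iff.mpr hξ0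
    -- the point p = (ε/(2‖ξ‖)) • ξ; p + b₀ is in the ball around b₀
    set c : ℝ := ε / (2 * ‖ξ‖) with hc
    have hc0 : 0 < c := by positivity
    have hp : c • ξ + b₀ ∈ convexHull ℝ (Set.range ⇑b) := by
      apply hball
      simp only [Metric.mem_ball, dist_eq_norm, add_sub_cancel_right, norm_smul,
        Real.norm_eq_abs, abs_of_pos hc0, hc]
      rw [abs_of_pos (by positivity)]
      rw [div_mul_eq_mul_div, mul_comm]
      rw [div_lt_iff₀ (by positivity)]
      nlinarith
    rw [convexHull_range_eq_exists_affineCombination] at hp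
    obtain ⟨s, w, hw0, hw1, hcomb⟩ := hp
    have hcomb' : c • ξ = ∑ i ∈ s, w i • v i := by
      have := Finset.affineCombination_eq_weightedVSubOfPoint_vadd_of_sum_eq_one s w b hw1 b₀
      rw [this] at hcomb
      simp only [Finset.weightedVSubOfPoint_apply, vsub_eq_sub, vadd_eq_add] at hcomb
      have := congrArg (fun x => x - b₀) hcomb
      simpa using this.symm
    -- inner product with ξ
    have hinner : c * ‖ξ‖ ^ 2 = ∑ i ∈ s, w i * (inner ℝ ξ (v i) : ℝ) := by
      have := congrArg (fun x => (inner ℝ ξ x : ℝ)) hcomb'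
      simpa [inner_smul_right, inner_sum, real_inner_self_eq_norm_sq] using this
    have hbound : ∑ i ∈ s, w i * (inner ℝ ξ (v i) : ℝ) ≤ C / 2 := by
      calc ∑ i ∈ s, w i * (inner ℝ ξ (v i) : ℝ) ≤ ∑ i ∈ s, w i * (C / 2) := by
            apply Finset.sum_le_sum
            intro i hi
            exact mul_le_mul_of_nonneg_left (by linarith [key i]) (hw0 i hi)
        _ = C / 2 := by rw [← Finset.sum_mul, hw1, one_mul]
    -- conclude
    have : c * ‖ξ‖ ^ 2 = (ε / 2) * ‖ξ‖ := by
      rw [hc]; field_simp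
    rw [this] at hinner
    rw [le_div_iff₀ hε]
    nlinarith
end

section
/- Let ‖·‖ be any norm on ℝ^d and let a_1, …, a_k be points on the unit sphere S(0,1) = {ξ : ‖ξ‖ = 1} such that S(0,1) is contained in the union of the closed balls B̄(a_i, 1), i = 1, …, k. Set Γ = {0, a_1, …, a_k}. Then the open Voronoi cell V^o_0(Γ) is contained in the closed unit ball B̄(0, 1), and its d-dimensional Lebesgue measure is strictly positive. -/
open MeasureTheory
open scoped ENNReal

/-!
A point `ξ` with `‖ξ‖ > r` lies at distance `‖ξ‖ - r` from its radial projection `u` onto the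
sphere `S(0, r)`; a centre `y ≠ 0` of `Γ` with `‖u - y‖ ≤ r` is then at distance at most `‖ξ‖`
from `ξ`, so `ξ` is not strictly closer to `0`. Conversely every centre other than `x` is at
distance at least `2ρ` from `x`, so the ball `B(x, ρ)` lies in the cell, which therefore has
positive measure.
-/

open Metric

lemma norm_sub_div_norm_smul_self {E : Type*} [NormedAddCommGroup E] [NormedSpace ℝ E]
    {r : ℝ} {ξ : E} (hr : r ≤ ‖ξ‖) (hξ : 0 < ‖ξ‖) :
    ‖ξ - (r / ‖ξ‖) • ξ‖ = ‖ξ‖ - r := by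
  have hcoef : 0 ≤ 1 - r / ‖ξ‖ := sub_nonneg.2 ((div_le_one hξ).2 hr)
  have hsub : ξ - (r / ‖ξ‖) • ξ = (1 - r / ‖ξ‖) • ξ := by rw [sub_smul, one_smul]
  rw [hsub, norm_smul, Real.norm_of_nonneg hcoef, sub_mul, one_mul, div_mul_cancel₀ _ hξ.ne']

lemma openVoronoiCell_zero_subset_closedBall {E : Type*} [NormedAddCommGroup E]
    [NormedSpace ℝ E] {Γ : Set E} {r : ℝ} (hr : 0 ≤ r)
    (hcov : ∀ u ∈ sphere (0 : E) r, ∃ y ∈ Γ, y ≠ 0 ∧ ‖u - y‖ ≤ r) :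
    openVoronoiCell Γ 0 ⊆ closedBall (0 : E) r := by
  intro ξ hξ
  rw [mem_closedBall_zero_iff]
  by_contra! hrξ
  have hξpos : 0 < ‖ξ‖ := hr.trans_lt hrξ
  set u := (r / ‖ξ‖) • ξ
  have hu : u ∈ sphere (0 : E) r := by
    rw [mem_sphere_zero_iff_norm, norm_smul, Real.norm_of_nonneg (div_nonneg hr hξpos.le),
      div_mul_cancel₀ _ hξpos.ne']
  obtain ⟨y, hyΓ, hy0, huy⟩ := hcov u hu
  have hcloser : ‖ξ - 0‖ < ‖ξ - y‖ := hξ y hyΓ hy0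
  have hfar : ‖ξ - y‖ ≤ ‖ξ‖ :=
    calc ‖ξ - y‖ ≤ ‖ξ - u‖ + ‖u - y‖ := norm_sub_le_norm_sub_add_norm_sub ξ u y
      _ ≤ (‖ξ‖ - r) + r := by
        rw [norm_sub_div_norm_smul_self hrξ.le hξpos]; gcongr
      _ = ‖ξ‖ := by ring
  rw [sub_zero] at hcloser
  linarith

lemma ball_subset_openVoronoiCell {E : Type*} [NormedAddCommGroup E] {Γ : Set E}
    {x : E} {ρ : ℝ} (hsep : ∀ y ∈ Γ, y ≠ x → 2 * ρ ≤ ‖x - y‖) :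
    ball x ρ ⊆ openVoronoiCell Γ x := by
  intro ξ hξ y hyΓ hyx
  rw [mem_ball, dist_eq_norm] at hξ
  have := norm_sub_le_norm_sub_add_norm_sub x ξ y
  rw [norm_sub_rev x ξ] at this
  linarith [hsep y hyΓ hyx]

lemma measure_openVoronoiCell_pos {E : Type*} [NormedAddCommGroup E]
    [MeasurableSpace E] (μ : Measure E) [μ.IsOpenPosMeasure] {Γ : Set E} {x : E} {ρ : ℝ}
    (hρ : 0 < ρ) (hsep : ∀ y ∈ Γ, y ≠ x → 2 * ρ ≤ ‖x - y‖) :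
    0 < μ (openVoronoiCell Γ x) :=
  (measure_ball_pos μ x hρ).trans_le (measure_mono (ball_subset_openVoronoiCell hsep))

/-- for any norm on `ℝ^d` (a finite-dimensional real normed space), if
`a_1, …, a_k` lie on the unit sphere and the unit sphere is covered by the closed unit balls
`B̄(a_i, 1)`, then for `Γ = {0, a_1, …, a_k}` the open Voronoi cell of `0` is contained in the
closed unit ball and has strictly positive Lebesgue (Haar) measure. -/
theorem stmt2 {E : Type*} [NormedAddCommGroup E] [NormedSpace ℝ E]
    [FiniteDimensional ℝ E] [MeasurableSpace E] [BorelSpace E]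
    (k : ℕ) (a : Fin k → E) (ha : ∀ i, a i ∈ Metric.sphere (0 : E) 1)
    (hcov : Metric.sphere (0 : E) 1 ⊆ ⋃ i, Metric.closedBall (a i) 1)
    (Γ : Set E) (hΓ : Γ = insert (0 : E) (Set.range a)) :
    openVoronoiCell Γ 0 ⊆ Metric.closedBall (0 : E) 1 ∧
      0 < MeasureTheory.Measure.addHaar (openVoronoiCell Γ 0) := by
  have hnorm : ∀ y ∈ Γ, y ≠ 0 → ‖y‖ = 1 := by
    rintro y hy hy0
    obtain ⟨i, rfl⟩ := (hΓ ▸ hy).resolve_left hy0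
    exact mem_sphere_zero_iff_norm.1 (ha i)
  refine ⟨openVoronoiCell_zero_subset_closedBall zero_le_one fun u hu => ?_,
    measure_openVoronoiCell_pos _ (ρ := 1 / 2) one_half_pos fun y hy hy0 => ?_⟩
  · obtain ⟨_, ⟨i, rfl⟩, hui⟩ := hcov hu
    have hai : a i ≠ 0 := ne_zero_of_mem_sphere one_ne_zero ⟨a i, ha i⟩
    exact ⟨a i, hΓ ▸ Set.mem_insert_of_mem _ ⟨i, rfl⟩, hai, mem_closedBall_iff_norm.1 hui⟩
  · rw [zero_sub, norm_neg, hnorm y hy hy0]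
    norm_num
end

section
/- On ℝ², the minimal sphere covering number satisfies c(2, ‖·‖_1) = 2 for the ℓ^1-norm, and c(2, ‖·‖_r) = 3 for every ℓ^r-norm with 1 < r < ∞. That is: for the ℓ^1-norm there exist 2 points on the unit sphere whose closed unit balls cover the unit sphere; for each r ∈ (1, ∞) there exist 3 points on the ℓ^r-unit sphere whose closed unit balls cover the ℓ^r-unit sphere, but no 2 points on the ℓ^r-unit sphere have this property. -/
open scoped BigOperators

/-- The `ℓ^r`-norm on `ℝ^d`: `‖x‖_r = (∑ i, |x i| ^ r) ^ (1/r)`. -/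
noncomputable def lrNorm (d : ℕ) (r : ℝ) (x : Fin d → ℝ) : ℝ :=
  (∑ i, |x i| ^ r) ^ (1 / r)

/-- The minimal sphere covering number of `ℝ^d` for the norm `nrm`: the smallest `k` such that
there exist `k` points on the unit sphere whose closed unit balls cover the unit sphere. -/
noncomputable def coverNum (d : ℕ) (nrm : (Fin d → ℝ) → ℝ) : ℕ :=
  sInf {k | ∃ a : Fin k → Fin d → ℝ, (∀ i, nrm (a i) = 1) ∧
    ∀ x, nrm x = 1 → ∃ i, nrm (x - a i) ≤ 1}

/-!
The centres `±(1/2, 1/2)` cover the `ℓ¹` unit circle, while a single centre `a` never suffices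
because `‖-a - a‖ = 2`.

For `1 < r < ∞` the `ℓ^r` norm is strictly convex, so a closed unit ball centred on the sphere
contains no antipodal pair `z, -z` of unit vectors (for the centre `a`, the points `a - z` and
`a + z` of the unit ball would have the unit vector `a` as midpoint). Given two centres `a, b`,
connectedness of the sphere yields a unit vector `z` equidistant from them; `z` then lies in both
balls, so `-z` lies in neither. Three centres `(0, 1), (±u, -1/2)` with `u ^ r + 2 ^ (-r) = 1`
do cover; the one non-trivial estimate is the majorization inequality
`(s + 1/2) ^ r + (1/2) ^ r ≤ 1 + s ^ r` for `0 ≤ s ≤ 1/2`.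
-/

open scoped ENNReal

def IsSphereCover {V : Type*} [Sub V] (nrm : V → ℝ) {k : ℕ} (a : Fin k → V) : Prop :=
  (∀ i, nrm (a i) = 1) ∧ ∀ x, nrm x = 1 → ∃ i, nrm (x - a i) ≤ 1

theorem strictConvexOn_abs_rpow {p : ℝ} (hp : 1 < p) :
    StrictConvexOn ℝ Set.univ fun x : ℝ => |x| ^ p := by
  refine ⟨convex_univ, fun x _ y _ hxy a b ha hb hab => ?_⟩
  have hp0 : 0 < p := by linarith
  have hconv : (a * |x| + b * |y|) ^ p ≤ a * |x| ^ p + b * |y| ^ p :=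
    (convexOn_rpow hp.le).2 (abs_nonneg x) (abs_nonneg y) ha.le hb.le hab
  have htri : |a * x + b * y| ≤ a * |x| + b * |y| := by
    simpa [abs_mul, abs_of_pos ha, abs_of_pos hb] using abs_add_le (a * x) (b * y)
  simp only [smul_eq_mul]
  rcases eq_or_ne |x| |y| with hxy' | hxy'
  · -- `y = -x ≠ 0`, so the triangle inequality is strict
    have hy : y = -x := by
      rcases abs_eq_abs.1 hxy' with h | h
      exacts [absurd h hxy, by linarith]
    have hx : 0 < |x| := abs_pos.2 fun h => hxy (by simp [hy, h])
    have hab' : |a - b| < 1 := abs_sub_lt_iff.2 ⟨by linarith, by linarith⟩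
    have htri' : |a * x + b * y| < a * |x| + b * |y| := by
      rw [show a * x + b * y = (a - b) * x by rw [hy]; ring, abs_mul, ← hxy', ← add_mul, hab,
        one_mul]
      exact mul_lt_of_lt_one_left hx hab'
    exact (Real.rpow_lt_rpow (abs_nonneg _) htri' hp0).trans_le hconv
  · exact (Real.rpow_le_rpow (abs_nonneg _) htri hp0.le).trans_lt
      ((strictConvexOn_rpow hp).2 (abs_nonneg x) (abs_nonneg y) hxy' ha hb hab)

theorem PiLp.strictConvexSpace_of_one_lt_toReal {ι : Type*} [Fintype ι] {p : ℝ≥0∞}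
    [Fact (1 ≤ p)] (hp : 1 < p.toReal) : StrictConvexSpace ℝ (PiLp p fun _ : ι => ℝ) := by
  have hp0 : 0 < p.toReal := by linarith
  have hnorm (x : PiLp p fun _ : ι => ℝ) : ‖x‖ ^ p.toReal = ∑ i, |x i| ^ p.toReal := by
    rw [PiLp.norm_eq_sum hp0, one_div, Real.rpow_inv_rpow (by positivity) hp0.ne']
    simp only [Real.norm_eq_abs]
  refine StrictConvexSpace.of_norm_combo_lt_one fun x y hx hy hxy =>
    ⟨1 / 2, 1 / 2, by norm_num, ?_⟩
  obtain ⟨i, hi⟩ : ∃ i, x i ≠ y i := by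
    by_contra! h
    exact hxy (PiLp.ext h)
  have hf := strictConvexOn_abs_rpow hp
  have hsum : ‖(1 / 2 : ℝ) • x + (1 / 2 : ℝ) • y‖ ^ p.toReal < 1 := by
    calc ‖(1 / 2 : ℝ) • x + (1 / 2 : ℝ) • y‖ ^ p.toReal
        < ∑ j, ((1 / 2 : ℝ) * |x j| ^ p.toReal + (1 / 2 : ℝ) * |y j| ^ p.toReal) := by
          rw [hnorm]
          refine Finset.sum_lt_sum (fun j _ => ?_) ⟨i, Finset.mem_univ _, ?_⟩
          · exact hf.convexOn.2 trivial trivial (by norm_num) (by norm_num) (by norm_num)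
          · exact hf.2 trivial trivial hi (by norm_num) (by norm_num) (by norm_num)
      _ = 1 := by
        rw [Finset.sum_add_distrib, ← Finset.mul_sum, ← Finset.mul_sum, ← hnorm, ← hnorm]
        norm_num [hx, hy]
  by_contra! h
  exact (Real.one_le_rpow h hp0.le).not_gt hsum

section SphereCover

variable {E : Type*} [NormedAddCommGroup E] [NormedSpace ℝ E]

theorem two_le_of_isSphereCover [Nontrivial E] {k : ℕ} {a : Fin k → E}
    (h : IsSphereCover norm a) : 2 ≤ k := by
  obtain ⟨x, hx⟩ := exists_norm_eq E zero_le_one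
  obtain ⟨i, -⟩ := h.2 x hx
  by_contra! hk
  obtain rfl : k = 1 := by have := i.pos; omega
  obtain ⟨j, hj⟩ := h.2 (-a i) (by rw [norm_neg, h.1])
  rw [Subsingleton.elim j i, ← neg_add', norm_neg, ← two_smul ℝ, norm_smul, h.1] at hj
  norm_num at hj

theorem one_lt_norm_neg_sub_of_norm_sub_le_one [StrictConvexSpace ℝ E] {a z : E}
    (ha : ‖a‖ = 1) (hz : z ≠ 0) (h : ‖z - a‖ ≤ 1) : 1 < ‖-z - a‖ := by
  by_contra! h'
  rw [norm_sub_rev] at h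
  rw [← norm_neg, neg_sub, sub_neg_eq_add] at h'
  have hne : a - z ≠ a + z := fun heq => hz <| by
    have : (2 : ℝ) • z = 0 := by
      rw [show (2 : ℝ) • z = a + z - (a - z) by module, heq, sub_self]
    simpa using this
  have := norm_combo_lt_of_ne (a := 1 / 2) (b := 1 / 2) h h' hne (by norm_num) (by norm_num)
    (by norm_num)
  rw [show (1 / 2 : ℝ) • (a - z) + (1 / 2 : ℝ) • (a + z) = a by module, ha] at this
  exact this.false

theorem exists_norm_eq_one_norm_sub_eq (hE : 1 < Module.rank ℝ E) {a b : E} (ha : ‖a‖ = 1)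
    (hb : ‖b‖ = 1) : ∃ z, ‖z‖ = 1 ∧ ‖z - a‖ = ‖z - b‖ := by
  obtain ⟨z, hz, hzab⟩ :=
    (isConnected_sphere hE 0 zero_le_one).isPreconnected.intermediate_value₂
      (f := fun z => ‖z - a‖) (g := fun z => ‖z - b‖)
      (by simpa using ha) (by simpa using hb) (by fun_prop) (by fun_prop) (by simp) (by simp)
  exact ⟨z, by simpa using hz, hzab⟩

theorem three_le_of_isSphereCover [StrictConvexSpace ℝ E] (hE : 1 < Module.rank ℝ E) {k : ℕ}
    {a : Fin k → E} (h : IsSphereCover norm a) : 3 ≤ k := by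
  have : Nontrivial E := rank_pos_iff_nontrivial.1 (zero_lt_one.trans hE)
  have hk := two_le_of_isSphereCover h
  by_contra! hk'
  obtain rfl : k = 2 := by omega
  obtain ⟨z, hz, hzab⟩ := exists_norm_eq_one_norm_sub_eq hE (h.1 0) (h.1 1)
  have hcov : ∀ i, ‖z - a i‖ ≤ 1 := by
    obtain ⟨i, hi⟩ := h.2 z hz
    intro j
    fin_cases i <;> fin_cases j <;> simp_all
  obtain ⟨j, hj⟩ := h.2 (-z) (by rw [norm_neg, hz])
  exact (one_lt_norm_neg_sub_of_norm_sub_le_one (h.1 j) (norm_ne_zero_iff.1 (by simp [hz]))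
    (hcov j)).not_ge hj

end SphereCover

theorem rank_piLp_fin (p : ℝ≥0∞) (n : ℕ) :
    Module.rank ℝ (PiLp p fun _ : Fin n => ℝ) = n :=
  (WithLp.linearEquiv p ℝ (Fin n → ℝ)).rank_eq.trans (rank_fin_fun n)

section lrNorm

variable {d : ℕ} {r : ℝ}

theorem lrNorm_eq_norm_toLp (hr : 0 < r) (x : Fin d → ℝ) :
    lrNorm d r x = ‖WithLp.toLp (ENNReal.ofReal r) x‖ := by
  rw [PiLp.norm_eq_sum (by rwa [ENNReal.toReal_ofReal hr.le]), ENNReal.toReal_ofReal hr.le]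
  simp [lrNorm]

theorem IsSphereCover.toLp (hr : 0 < r) {k : ℕ} {a : Fin k → Fin d → ℝ}
    (h : IsSphereCover (lrNorm d r) a) :
    IsSphereCover norm fun i => WithLp.toLp (ENNReal.ofReal r) (a i) := by
  refine ⟨fun i => by rw [← lrNorm_eq_norm_toLp hr, h.1], fun x hx => ?_⟩
  obtain ⟨i, hi⟩ := h.2 x.ofLp (by rwa [lrNorm_eq_norm_toLp hr])
  exact ⟨i, by rwa [lrNorm_eq_norm_toLp hr, WithLp.toLp_sub] at hi⟩

theorem lrNorm_one (x : Fin d → ℝ) : lrNorm d 1 x = ∑ i, |x i| := by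
  simp [lrNorm]

theorem lrNorm_eq_one_iff (hr : 0 < r) (x : Fin d → ℝ) :
    lrNorm d r x = 1 ↔ ∑ i, |x i| ^ r = 1 := by
  rw [lrNorm, one_div, Real.rpow_inv_eq (by positivity) zero_le_one hr.ne', Real.one_rpow]

theorem lrNorm_le_one_iff (hr : 0 < r) (x : Fin d → ℝ) :
    lrNorm d r x ≤ 1 ↔ ∑ i, |x i| ^ r ≤ 1 := by
  rw [lrNorm, one_div, Real.rpow_inv_le_iff_of_pos (by positivity) zero_le_one hr, Real.one_rpow]

end lrNorm

theorem abs_sub_half_add_abs_sub_half_le_one {s t : ℝ} (h : |s| + |t| = 1) (hst : 0 ≤ s + t) :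
    |s - 1 / 2| + |t - 1 / 2| ≤ 1 := by
  rcases abs_cases s with ⟨hs, hs'⟩ | ⟨hs, hs'⟩ <;>
    rcases abs_cases t with ⟨ht, ht'⟩ | ⟨ht, ht'⟩ <;>
    rcases abs_cases (s - 1 / 2) with ⟨h₁, -⟩ | ⟨h₁, -⟩ <;>
    rcases abs_cases (t - 1 / 2) with ⟨h₂, -⟩ | ⟨h₂, -⟩ <;> linarith

theorem isSphereCover_lrNorm_one :
    IsSphereCover (lrNorm 2 1) ![![1 / 2, 1 / 2], ![-(1 / 2), -(1 / 2)]] := by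
  refine ⟨fun i => ?_, fun x hx => ?_⟩
  · fin_cases i <;> norm_num [lrNorm_one, Fin.sum_univ_two]
  rw [lrNorm_one, Fin.sum_univ_two] at hx
  rcases le_total 0 (x 0 + x 1) with h | h
  · refine ⟨0, ?_⟩
    rw [lrNorm_one, Fin.sum_univ_two]
    exact abs_sub_half_add_abs_sub_half_le_one hx h
  · refine ⟨1, ?_⟩
    have := abs_sub_half_add_abs_sub_half_le_one (s := -x 0) (t := -x 1) (by simpa using hx)
      (by linarith)
    rw [← neg_add', ← neg_add', abs_neg, abs_neg] at this
    rw [lrNorm_one, Fin.sum_univ_two]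
    show |x 0 - -(1 / 2)| + |x 1 - -(1 / 2)| ≤ 1
    rwa [sub_neg_eq_add, sub_neg_eq_add]

section ThreePointCover

variable {r : ℝ}

theorem rpow_add_half_add_half_rpow_le (hr : 1 ≤ r) {s : ℝ} (hs : 0 ≤ s) (hs' : s ≤ 1 / 2) :
    (s + 1 / 2) ^ r + (1 / 2 : ℝ) ^ r ≤ 1 + s ^ r := by
  -- `(1, s)` majorizes `(s + 1/2, 1/2)`: write both of the latter as convex combinations of `1, s`
  have hs₁ : 0 < 1 - s := by linarith
  set L : ℝ := 1 / (2 * (1 - s))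
  have hL0 : 0 < L := by positivity
  have hL1 : L ≤ 1 := by rw [div_le_one (by positivity)]; linarith
  have hLs : L * (1 - s) = 1 / 2 := by simp only [L]; field_simp
  have hf := (convexOn_rpow hr).2 (Set.mem_Ici.2 zero_le_one) (Set.mem_Ici.2 hs)
  have h₁ := hf hL0.le (sub_nonneg.2 hL1) (by ring)
  have h₂ := hf (sub_nonneg.2 hL1) hL0.le (by ring)
  simp only [smul_eq_mul, Real.one_rpow, mul_one] at h₁ h₂
  rw [show L + (1 - L) * s = s + 1 / 2 by linear_combination hLs] at h₁
  rw [show 1 - L + L * s = 1 / 2 by linear_combination -hLs] at h₂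
  linarith

theorem rpow_half_le_half (hr : 1 ≤ r) : (1 / 2 : ℝ) ^ r ≤ 1 / 2 := by
  simpa using Real.rpow_le_rpow_of_exponent_ge (by norm_num : (0 : ℝ) < 1 / 2) (by norm_num) hr

theorem abs_sub_add_abs_add_half_rpow_le_one (hr : 1 ≤ r) {u s t : ℝ} (hu : 0 ≤ u)
    (hu₁ : u ^ r + (1 / 2 : ℝ) ^ r = 1) (hs : 0 ≤ s) (hst : s ^ r + |t| ^ r = 1)
    (ht : t ≤ 1 / 2) :
    |s - u| ^ r + |t + 1 / 2| ^ r ≤ 1 := by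
  have hr0 : 0 < r := by linarith
  have hc := rpow_half_le_half hr
  have ht₁ : -1 ≤ t := neg_le_of_abs_le <|
    (Real.rpow_le_rpow_iff (abs_nonneg t) zero_le_one hr0).1
      (by rw [Real.one_rpow]; linarith [Real.rpow_nonneg hs r])
  rcases le_or_gt t (-(1 / 2)) with ht' | ht'
  · have h₁ : |t + 1 / 2| ^ r ≤ (1 / 2) ^ r :=
      Real.rpow_le_rpow (abs_nonneg _) (abs_le.2 ⟨by linarith, by linarith⟩) hr0.le
    have h₂ : (1 / 2) ^ r ≤ |t| ^ r :=
      Real.rpow_le_rpow (by norm_num) (by rw [abs_of_neg (by linarith)]; linarith) hr0.le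
    have hsu : s ≤ u := (Real.rpow_le_rpow_iff hs hu hr0).1 (by linarith)
    have h₃ : |s - u| ^ r ≤ u ^ r :=
      Real.rpow_le_rpow (abs_nonneg _) (abs_le.2 ⟨by linarith, by linarith⟩) hr0.le
    linarith
  · have h₁ : |t| ^ r ≤ (1 / 2) ^ r :=
      Real.rpow_le_rpow (abs_nonneg _) (abs_le.2 ⟨by linarith, ht⟩) hr0.le
    have hus : u ≤ s := (Real.rpow_le_rpow_iff hu hs hr0).1 (by linarith)
    have h₂ : (s - u) ^ r + u ^ r ≤ s ^ r := by
      simpa using Real.add_rpow_le_rpow_add (sub_nonneg.2 hus) hu hr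
    have h₃ : |t + 1 / 2| ^ r ≤ |t| ^ r + u ^ r := by
      rcases le_total 0 t with ht₀ | ht₀
      · rw [abs_of_nonneg ht₀, abs_of_nonneg (by linarith)]
        linarith [rpow_add_half_add_half_rpow_le hr ht₀ ht]
      · have : |t + 1 / 2| ^ r ≤ (1 / 2) ^ r :=
          Real.rpow_le_rpow (abs_nonneg _) (abs_le.2 ⟨by linarith, by linarith⟩) hr0.le
        linarith [Real.rpow_nonneg (abs_nonneg t) r]
    rw [abs_of_nonneg (sub_nonneg.2 hus)]
    linarith

end ThreePointCover

theorem exists_isSphereCover_lrNorm_three {r : ℝ} (hr : 1 ≤ r) :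
    ∃ a : Fin 3 → Fin 2 → ℝ, IsSphereCover (lrNorm 2 r) a := by
  have hr0 : 0 < r := by linarith
  have hc := rpow_half_le_half hr
  obtain ⟨u, hu0, hu⟩ : ∃ u : ℝ, 0 ≤ u ∧ u ^ r + (1 / 2 : ℝ) ^ r = 1 :=
    ⟨(1 - (1 / 2 : ℝ) ^ r) ^ r⁻¹, Real.rpow_nonneg (by linarith) _,
      by rw [Real.rpow_inv_rpow (by linarith) hr0.ne']; ring⟩
  refine ⟨![![0, 1], ![u, -(1 / 2)], ![-u, -(1 / 2)]], fun i => ?_, fun x hx => ?_⟩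
  · rw [lrNorm_eq_one_iff hr0]
    fin_cases i
    · simp [Fin.sum_univ_two, hr0.ne']
    all_goals simpa [Fin.sum_univ_two, abs_of_nonneg hu0] using hu
  rw [lrNorm_eq_one_iff hr0, Fin.sum_univ_two] at hx
  rcases le_or_gt (1 / 2) (x 1) with h | h
  · refine ⟨0, (lrNorm_le_one_iff hr0 _).2 ?_⟩
    have h₁ : |x 1 - 1| ≤ |x 1| := by
      rw [abs_of_nonneg (by linarith : 0 ≤ x 1)]
      exact abs_sub_le_iff.2 ⟨by linarith, by linarith⟩
    have h₂ : |x 0| ^ r + |x 1 - 1| ^ r ≤ 1 := by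
      linarith [Real.rpow_le_rpow (abs_nonneg _) h₁ hr0.le]
    simpa [Fin.sum_univ_two] using h₂
  rcases le_total 0 (x 0) with h₀ | h₀
  · refine ⟨1, (lrNorm_le_one_iff hr0 _).2 ?_⟩
    have := abs_sub_add_abs_add_half_rpow_le_one hr hu0 hu h₀ (by rwa [abs_of_nonneg h₀] at hx)
      h.le
    simpa [Fin.sum_univ_two] using this
  · refine ⟨2, (lrNorm_le_one_iff hr0 _).2 ?_⟩
    have := abs_sub_add_abs_add_half_rpow_le_one hr hu0 hu (neg_nonneg.2 h₀)
      (by rwa [abs_of_nonpos h₀] at hx) h.le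
    rw [← abs_neg, neg_sub', neg_neg] at this
    simpa [Fin.sum_univ_two] using this

/-- on `ℝ²`, the minimal sphere covering number is `2` for the `ℓ¹`-norm and `3`
for every `ℓ^r`-norm with `1 < r < ∞`. -/
theorem stmt3 :
    coverNum 2 (lrNorm 2 1) = 2 ∧ ∀ r : ℝ, 1 < r → coverNum 2 (lrNorm 2 r) = 3 := by
  refine ⟨IsLeast.csInf_eq ⟨⟨_, isSphereCover_lrNorm_one⟩, ?_⟩, fun r hr => ?_⟩
  · rintro k ⟨a, ha⟩
    have : Fact (1 ≤ ENNReal.ofReal 1) := ⟨by simp⟩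
    exact two_le_of_isSphereCover (IsSphereCover.toLp one_pos ha)
  · have : Fact (1 ≤ ENNReal.ofReal r) := ⟨ENNReal.one_le_ofReal.2 hr.le⟩
    have := PiLp.strictConvexSpace_of_one_lt_toReal (ι := Fin 2) (p := ENNReal.ofReal r)
      (by rwa [ENNReal.toReal_ofReal (by linarith)])
    obtain ⟨a, ha⟩ := exists_isSphereCover_lrNorm_three hr.le
    refine IsLeast.csInf_eq ⟨⟨a, ha⟩, ?_⟩
    rintro k ⟨b, hb⟩
    refine three_le_of_isSphereCover ?_ (IsSphereCover.toLp (by linarith) hb)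
    rw [rank_piLp_fin]
    norm_num
end

section
/- (Dimension one, p = 1, N = 1.) Let μ, ν and μ_n (n ≥ 1), μ_∞ be Borel probability measures on ℝ with finite first moments, and for a ∈ ℝ set e_{1,1}(μ, a) = ∫_ℝ |ξ − a| dμ(ξ). Then: (a) if e_{1,1}(μ, a) = e_{1,1}(ν, a) + C for all a ∈ ℝ and some real constant C, then μ = ν and C = 0; (b) the following are equivalent: (i) W_1(μ_n, μ_∞) → 0; (ii) e_{1,1}(μ_n, ·) → e_{1,1}(μ_∞, ·) uniformly on ℝ; (iii) e_{1,1}(μ_n, ·) → e_{1,1}(μ_∞, ·) pointwise on ℝ. Consequently Q_{1,1}(μ, ν) := sup_{a∈ℝ} |e_{1,1}(μ, a) − e_{1,1}(ν, a)| is a metric on the set of probability measures on ℝ with finite first moment, topologically equivalent to W_1. -/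
open MeasureTheory Filter Topology
open scoped ENNReal NNReal

/-- The `L¹`-quantization error function at level 1 on `ℝ`: `e_{1,1}(μ, a) = ∫ |ξ − a| dμ`. -/
noncomputable def e11 (μ : Measure ℝ) (a : ℝ) : ℝ := ∫ ξ, |ξ - a| ∂μ

/-- The `L^p`-Wasserstein distance on `ℝ`. -/
noncomputable def wassersteinDist (p : ℝ) (μ ν : Measure ℝ) : ℝ :=
  (⨅ π ∈ {π : Measure (ℝ × ℝ) | π.map Prod.fst = μ ∧ π.map Prod.snd = ν},
      ∫⁻ q, (‖q.1 - q.2‖₊ : ℝ≥0∞) ^ p ∂π).toReal ^ (1 / p)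

/-- `μ` has a finite first moment. -/
def HasFiniteMoment1 (μ : Measure ℝ) : Prop :=
  ∫⁻ ξ, (‖ξ‖₊ : ℝ≥0∞) ∂μ ≠ ∞

/-- `Q_{1,1}(μ, ν) = sup_{a ∈ ℝ} |e_{1,1}(μ, a) − e_{1,1}(ν, a)|`. -/
noncomputable def q11 (μ ν : Measure ℝ) : ℝ := ⨆ a : ℝ, |e11 μ a - e11 ν a|

namespace Stmt15Aux
open Set

/-- CDF of a measure on ℝ. -/
noncomputable def F (μ : Measure ℝ) (t : ℝ) : ℝ := (μ (Set.Iic t)).toReal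

lemma F_mono (μ : Measure ℝ) [IsFiniteMeasure μ] : Monotone (F μ) := fun a b hab =>
  ENNReal.toReal_mono (measure_ne_top _ _) (measure_mono (Iic_subset_Iic.2 hab))

lemma F_nonneg (μ : Measure ℝ) (t : ℝ) : 0 ≤ F μ t := ENNReal.toReal_nonneg

lemma F_le_one (μ : Measure ℝ) [IsProbabilityMeasure μ] (t : ℝ) : F μ t ≤ 1 := by
  have h := ENNReal.toReal_mono (a := μ (Iic t)) (b := μ univ) (by simp) (measure_mono (subset_univ _))
  simpa [F] using h

lemma F_measurable (μ : Measure ℝ) [IsFiniteMeasure μ] : Measurable (F μ) :=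
  (F_mono μ).measurable

lemma integrable_id' {μ : Measure ℝ} (hμ : HasFiniteMoment1 μ) [IsProbabilityMeasure μ] :
    Integrable (fun x : ℝ => x) μ :=
  ⟨measurable_id.aestronglyMeasurable, lt_top_iff_ne_top.2 hμ⟩

lemma integrable_abs_sub {μ : Measure ℝ} [IsProbabilityMeasure μ] (hμ : HasFiniteMoment1 μ)
    (a : ℝ) : Integrable (fun ξ => |ξ - a|) μ :=
  ((integrable_id' hμ).sub (integrable_const a)).abs

lemma sign_measurable (ξ : ℝ) : Measurable (fun t : ℝ => if ξ ≤ t then (1:ℝ) else -1) :=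
  Measurable.ite measurableSet_Ici measurable_const measurable_const

lemma sign_integrableOn (ξ : ℝ) {s : Set ℝ} (hs : volume s ≠ ∞) :
    IntegrableOn (fun t : ℝ => if ξ ≤ t then (1:ℝ) else -1) s := by
  refine Integrable.mono' (g := fun _ => (1:ℝ)) (integrableOn_const hs)
    (sign_measurable ξ).aestronglyMeasurable ?_
  filter_upwards with t
  split_ifs <;> simp

/-- pointwise: `|ξ-b| - |ξ-a| = ∫_{(a,b]} sign(t-ξ) dt`. -/
lemma abs_sub_abs_eq_integral {a b : ℝ} (hab : a ≤ b) (ξ : ℝ) :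
    |ξ - b| - |ξ - a| = ∫ t in Ioc a b, (if ξ ≤ t then (1:ℝ) else -1) := by
  rcases le_or_gt ξ a with h | h
  · have : ∀ t ∈ Ioc a b, (if ξ ≤ t then (1:ℝ) else -1) = 1 := by
      intro t ht; rw [if_pos (h.trans ht.1.le)]
    rw [setIntegral_congr_fun measurableSet_Ioc this]
    simp only [setIntegral_const, measureReal_def, Real.volume_Ioc, smul_eq_mul, mul_one,
      ENNReal.toReal_ofReal (sub_nonneg.2 hab)]
    rw [abs_of_nonpos (by linarith), abs_of_nonpos (by linarith)]
    ring
  rcases le_or_gt ξ b with h2 | h2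
  · have hsplit : Ioc a b = Ioc a ξ ∪ Ioc ξ b := (Ioc_union_Ioc_eq_Ioc h.le h2).symm
    rw [hsplit, setIntegral_union (Ioc_disjoint_Ioc_of_le le_rfl) measurableSet_Ioc
      (sign_integrableOn ξ (by simp)) (sign_integrableOn ξ (by simp))]
    have e1 : ∫ t in Ioc a ξ, (if ξ ≤ t then (1:ℝ) else -1) = -(ξ - a) := by
      rw [integral_Ioc_eq_integral_Ioo,
        setIntegral_congr_fun measurableSet_Ioo
          (fun t ht => if_neg (not_le.2 ht.2) : ∀ t ∈ Ioo a ξ, _ = (-1:ℝ))]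
      simp [Real.volume_Ioo, ENNReal.toReal_ofReal (sub_nonneg.2 h.le), h.le]
    have e2 : ∫ t in Ioc ξ b, (if ξ ≤ t then (1:ℝ) else -1) = b - ξ := by
      rw [setIntegral_congr_fun measurableSet_Ioc
          (fun t ht => if_pos ht.1.le : ∀ t ∈ Ioc ξ b, _ = (1:ℝ))]
      simp [Real.volume_Ioc, ENNReal.toReal_ofReal (sub_nonneg.2 h2), h2]
    rw [e1, e2, abs_of_nonpos (by linarith), abs_of_nonneg (by linarith)]
    ring
  · have : ∀ t ∈ Ioc a b, (if ξ ≤ t then (1:ℝ) else -1) = -1 := by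
      intro t ht; rw [if_neg (not_le.2 (lt_of_le_of_lt ht.2 h2))]
    rw [setIntegral_congr_fun measurableSet_Ioc this]
    simp only [setIntegral_const, measureReal_def, Real.volume_Ioc, smul_eq_mul,
      ENNReal.toReal_ofReal (sub_nonneg.2 hab)]
    rw [abs_of_nonneg (by linarith), abs_of_nonneg (by linarith)]
    ring

lemma integral_sign (μ : Measure ℝ) [IsProbabilityMeasure μ] (t : ℝ) :
    ∫ ξ, (if ξ ≤ t then (1:ℝ) else -1) ∂μ = 2 * F μ t - 1 := by
  have hptw : ∀ ξ : ℝ, (if ξ ≤ t then (1:ℝ) else -1)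
      = 2 * (Iic t).indicator (fun _ => (1:ℝ)) ξ - 1 := by
    intro ξ; by_cases h : ξ ≤ t <;> simp [indicator, h] <;> ring
  rw [integral_congr_ae (Eventually.of_forall hptw)]
  have hind : Integrable ((Iic t).indicator (fun _ => (1:ℝ))) μ :=
    (integrable_const (1:ℝ)).indicator measurableSet_Iic
  rw [integral_sub ((hind.const_mul 2)) (integrable_const 1),
    MeasureTheory.integral_const_mul, integral_indicator_const _ measurableSet_Iic]
  simp [F, measureReal_def]

/-- Key identity: increments of `e11` are integrals of `2F - 1`. -/
lemma e11_sub_e11 {μ : Measure ℝ} [IsProbabilityMeasure μ] (hμ : HasFiniteMoment1 μ)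
    {a b : ℝ} (hab : a ≤ b) :
    e11 μ b - e11 μ a = ∫ t in Ioc a b, (2 * F μ t - 1) := by
  have h1 : e11 μ b - e11 μ a = ∫ ξ, (|ξ - b| - |ξ - a|) ∂μ :=
    (integral_sub (integrable_abs_sub hμ b) (integrable_abs_sub hμ a)).symm
  have hfin : IsFiniteMeasure (volume.restrict (Ioc a b)) :=
    ⟨by simp [Real.volume_Ioc, ENNReal.ofReal_lt_top]⟩
  have h2 : ∫ ξ, (|ξ - b| - |ξ - a|) ∂μ
      = ∫ ξ, (∫ t in Ioc a b, (if ξ ≤ t then (1:ℝ) else -1)) ∂μ :=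
    integral_congr_ae (Eventually.of_forall fun ξ => abs_sub_abs_eq_integral hab ξ)
  have hmeas : Measurable (fun p : ℝ × ℝ => if p.1 ≤ p.2 then (1:ℝ) else -1) :=
    Measurable.ite (measurableSet_le measurable_fst measurable_snd)
      measurable_const measurable_const
  have hint : Integrable (Function.uncurry fun ξ t : ℝ => if ξ ≤ t then (1:ℝ) else -1)
      (μ.prod (volume.restrict (Ioc a b))) := by
    refine Integrable.mono' (g := fun _ => (1:ℝ)) (integrable_const 1)
      hmeas.aestronglyMeasurable ?_
    filter_upwards with p
    rw [Function.uncurry]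
    split_ifs <;> simp
  have h3 := integral_integral_swap hint
  have h4 : ∀ t : ℝ, ∫ ξ, (if ξ ≤ t then (1:ℝ) else -1) ∂μ = 2 * F μ t - 1 :=
    integral_sign μ
  rw [h1, h2]
  calc ∫ ξ, (∫ t in Ioc a b, (if ξ ≤ t then (1:ℝ) else -1)) ∂μ
      = ∫ t in Ioc a b, ∫ ξ, (if ξ ≤ t then (1:ℝ) else -1) ∂μ := h3
    _ = ∫ t in Ioc a b, (2 * F μ t - 1) := integral_congr_ae (Eventually.of_forall fun t => h4 t)

lemma F_integrableOn (μ : Measure ℝ) [IsProbabilityMeasure μ] {s : Set ℝ}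
    (hs : volume s ≠ ∞) : IntegrableOn (F μ) s := by
  refine Integrable.mono' (g := fun _ => (1:ℝ)) (integrableOn_const hs)
    (F_measurable μ).aestronglyMeasurable ?_
  filter_upwards with t
  rw [Real.norm_eq_abs, abs_of_nonneg (F_nonneg μ t)]
  exact F_le_one μ t

lemma setIntegral_F {μ : Measure ℝ} [IsProbabilityMeasure μ] (hμ : HasFiniteMoment1 μ)
    {a b : ℝ} (hab : a ≤ b) :
    ∫ t in Ioc a b, F μ t = (e11 μ b - e11 μ a + (b - a)) / 2 := by
  have h := e11_sub_e11 hμ hab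
  have h2 : ∫ t in Ioc a b, (2 * F μ t - 1)
      = 2 * (∫ t in Ioc a b, F μ t) - (b - a) := by
    rw [integral_sub ((F_integrableOn μ (by simp)).const_mul 2)
      (integrableOn_const (by simp [Real.volume_Ioc, ENNReal.ofReal_lt_top]))]
    rw [MeasureTheory.integral_const_mul]
    simp [Real.volume_Ioc, ENNReal.toReal_ofReal (sub_nonneg.2 hab), hab]
  rw [h2] at h
  linarith

lemma tendsto_F_right (μ : Measure ℝ) [IsProbabilityMeasure μ] (t : ℝ) :
    Tendsto (fun n : ℕ => F μ (t + 1/(n+1))) atTop (𝓝 (F μ t)) := by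
  have hI : ⋂ n : ℕ, Iic (t + 1/(n+1)) = Iic t := by
    ext x
    simp only [mem_iInter, mem_Iic]
    constructor
    · intro h
      by_contra hx
      push_neg at hx
      obtain ⟨n, hn⟩ := exists_nat_one_div_lt (sub_pos.2 hx)
      have := h n
      push_cast at this hn ⊢
      linarith
    · intro h n
      have : (0:ℝ) < 1/(n+1) := by positivity
      linarith
  have h : Tendsto (fun n : ℕ => μ (Iic (t + 1/(n+1)))) atTop (𝓝 (μ (Iic t))) := by
    have := tendsto_measure_iInter_atTop (μ := μ) (s := fun n : ℕ => Iic (t + 1/(n+1)))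
      (fun n => measurableSet_Iic.nullMeasurableSet)
      (fun m n hmn => Iic_subset_Iic.2 (by
        have : (1:ℝ)/(n+1) ≤ 1/(m+1) := by
          apply one_div_le_one_div_of_le (by positivity)
          push_cast; have := (Nat.cast_le (α := ℝ)).2 hmn; linarith
        linarith)) ⟨0, measure_ne_top _ _⟩
    rwa [hI] at this
  exact (ENNReal.tendsto_toReal (measure_ne_top _ _)).comp h

lemma tendsto_F_left (μ : Measure ℝ) [IsProbabilityMeasure μ] (t : ℝ) :
    Tendsto (fun n : ℕ => F μ (t - 1/(n+1))) atTop (𝓝 ((μ (Iio t)).toReal)) := by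
  have hI : ⋃ n : ℕ, Iic (t - 1/(n+1)) = Iio t := by
    ext x
    simp only [mem_iUnion, mem_Iic, mem_Iio]
    constructor
    · rintro ⟨n, hn⟩
      have : (0:ℝ) < 1/(n+1) := by positivity
      linarith
    · intro h
      obtain ⟨n, hn⟩ := exists_nat_one_div_lt (sub_pos.2 h)
      exact ⟨n, by push_cast at hn ⊢; linarith⟩
  have h : Tendsto (fun n : ℕ => μ (Iic (t - 1/(n+1)))) atTop (𝓝 (μ (Iio t))) := by
    have := tendsto_measure_iUnion_atTop (μ := μ) (s := fun n : ℕ => Iic (t - 1/(n+1)))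
      (fun m n hmn => Iic_subset_Iic.2 (by
        have : (1:ℝ)/(n+1) ≤ 1/(m+1) := by
          apply one_div_le_one_div_of_le (by positivity)
          push_cast; have := (Nat.cast_le (α := ℝ)).2 hmn; linarith
        linarith))
    rwa [hI] at this
  exact (ENNReal.tendsto_toReal (measure_ne_top _ _)).comp h

lemma avg_lower (μ : Measure ℝ) [IsProbabilityMeasure μ] {t h : ℝ} (hh : 0 < h) :
    F μ t * h ≤ ∫ s in Ioc t (t+h), F μ s := by
  have : ∫ s in Ioc t (t+h), F μ t ∂volume = F μ t * h := by
    simp [Real.volume_Ioc, ENNReal.toReal_ofReal hh.le, mul_comm, hh.le]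
  rw [← this]
  refine setIntegral_mono_on (integrableOn_const (by
    simp [Real.volume_Ioc, ENNReal.ofReal_lt_top])) (F_integrableOn μ (by simp))
    measurableSet_Ioc ?_
  intro s hs
  exact F_mono μ hs.1.le

lemma avg_upper (μ : Measure ℝ) [IsProbabilityMeasure μ] {t h : ℝ} (hh : 0 < h) :
    ∫ s in Ioc (t-h) t, F μ s ≤ F μ t * h := by
  have : ∫ s in Ioc (t-h) t, F μ t ∂volume = F μ t * h := by
    simp [Real.volume_Ioc, ENNReal.toReal_ofReal hh.le, mul_comm, hh.le]
  rw [← this]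
  refine setIntegral_mono_on (F_integrableOn μ (by simp)) (integrableOn_const (by
    simp [Real.volume_Ioc, ENNReal.ofReal_lt_top])) measurableSet_Ioc ?_
  intro s hs
  exact F_mono μ hs.2

/-- If the averaged CDFs agree then the CDFs agree. -/
lemma F_eq_of_setIntegrals {μ ν : Measure ℝ} [IsProbabilityMeasure μ] [IsProbabilityMeasure ν]
    (hint : ∀ a b : ℝ, a ≤ b → ∫ t in Ioc a b, F μ t = ∫ t in Ioc a b, F ν t) :
    F μ = F ν := by
  have key : ∀ (μ ν : Measure ℝ), IsProbabilityMeasure μ → IsProbabilityMeasure ν →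
      (∀ a b : ℝ, a ≤ b → ∫ t in Ioc a b, F μ t = ∫ t in Ioc a b, F ν t) →
      ∀ t, F μ t ≤ F ν t := by
    intro μ ν hμp hνp hint t
    have hle : ∀ n : ℕ, F μ t ≤ F ν (t + 1/(n+1)) := by
      intro n
      have hh : (0:ℝ) < 1/(n+1) := by positivity
      have h1 := avg_lower μ (t := t) hh
      have h2 := avg_upper ν (t := t + 1/(n+1)) hh
      rw [show (t + 1/(n+1) - 1/(n+1) : ℝ) = t by ring] at h2
      rw [hint t (t + 1/(n+1)) (by linarith)] at h1
      have := h1.trans h2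
      exact le_of_mul_le_mul_right this hh
    exact ge_of_tendsto (tendsto_F_right ν t) (Eventually.of_forall hle)
  ext t
  exact le_antisymm (key μ ν ‹_› ‹_› hint t) (key ν μ ‹_› ‹_› (fun a b hab => (hint a b hab).symm) t)

lemma measure_eq_of_F_eq {μ ν : Measure ℝ} [IsProbabilityMeasure μ] [IsProbabilityMeasure ν]
    (h : F μ = F ν) : μ = ν := by
  refine MeasureTheory.Measure.ext_of_Iic μ ν (fun a => ?_)
  have := congrFun h a
  simp only [F] at this
  exact (ENNReal.toReal_eq_toReal_iff' (measure_ne_top _ _) (measure_ne_top _ _)).1 this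

/-- Part (a). -/
lemma part_a {μ ν : Measure ℝ} [IsProbabilityMeasure μ] [IsProbabilityMeasure ν]
    (hμ : HasFiniteMoment1 μ) (hν : HasFiniteMoment1 ν) (C : ℝ)
    (h : ∀ a : ℝ, e11 μ a = e11 ν a + C) : μ = ν ∧ C = 0 := by
  have hint : ∀ a b : ℝ, a ≤ b → ∫ t in Ioc a b, F μ t = ∫ t in Ioc a b, F ν t := by
    intro a b hab
    rw [setIntegral_F hμ hab, setIntegral_F hν hab, h a, h b]
    ring_nf
  have hF := F_eq_of_setIntegrals hint
  have hμν := measure_eq_of_F_eq hF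
  refine ⟨hμν, ?_⟩
  have := h 0
  rw [hμν] at this
  linarith
lemma meas_abs_sub (a : ℝ) : Measurable fun x : ℝ => |x - a| :=
  (measurable_id.sub measurable_const).abs

lemma meas_abs_fst_snd : Measurable fun q : ℝ × ℝ => |q.1 - q.2| :=
  (measurable_fst.sub measurable_snd).abs

def couplings (μ ν : Measure ℝ) : Set (Measure (ℝ × ℝ)) :=
  {π | π.map Prod.fst = μ ∧ π.map Prod.snd = ν}

noncomputable def cost (π : Measure (ℝ × ℝ)) : ℝ≥0∞ := ∫⁻ q, (‖q.1 - q.2‖₊ : ℝ≥0∞) ∂π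

lemma wd_eq (μ ν : Measure ℝ) :
    wassersteinDist 1 μ ν = (⨅ π ∈ couplings μ ν, cost π).toReal := by
  have h1 : ∀ π : Measure (ℝ × ℝ), (∫⁻ q, (‖q.1 - q.2‖₊ : ℝ≥0∞) ^ (1:ℝ) ∂π) = cost π := by
    intro π; simp [cost, ENNReal.rpow_one]
  simp only [wassersteinDist, couplings, h1]
  norm_num

lemma prod_mem_couplings (μ ν : Measure ℝ) [IsProbabilityMeasure μ] [IsProbabilityMeasure ν] :
    μ.prod ν ∈ couplings μ ν := by
  constructor
  · rw [Measure.map_fst_prod]; simp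
  · rw [Measure.map_snd_prod]; simp

lemma lintegral_fst_of_coupling {μ ν : Measure ℝ} {π : Measure (ℝ × ℝ)}
    (hπ : π ∈ couplings μ ν) : ∫⁻ q, (‖q.1‖₊ : ℝ≥0∞) ∂π = ∫⁻ x, (‖x‖₊ : ℝ≥0∞) ∂μ := by
  rw [← hπ.1, lintegral_map (by fun_prop) measurable_fst]

lemma lintegral_snd_of_coupling {μ ν : Measure ℝ} {π : Measure (ℝ × ℝ)}
    (hπ : π ∈ couplings μ ν) : ∫⁻ q, (‖q.2‖₊ : ℝ≥0∞) ∂π = ∫⁻ x, (‖x‖₊ : ℝ≥0∞) ∂ν := by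
  rw [← hπ.2, lintegral_map (by fun_prop) measurable_snd]

lemma cost_prod_ne_top {μ ν : Measure ℝ} [IsProbabilityMeasure μ] [IsProbabilityMeasure ν]
    (hμ : HasFiniteMoment1 μ) (hν : HasFiniteMoment1 ν) : cost (μ.prod ν) ≠ ∞ := by
  have hb : cost (μ.prod ν) ≤ ∫⁻ q, ((‖q.1‖₊ : ℝ≥0∞) + (‖q.2‖₊ : ℝ≥0∞)) ∂(μ.prod ν) := by
    refine lintegral_mono fun q => ?_
    calc (‖q.1 - q.2‖₊ : ℝ≥0∞) ≤ ((‖q.1‖₊ + ‖q.2‖₊ : ℝ≥0) : ℝ≥0∞) := by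
          exact_mod_cast nnnorm_sub_le q.1 q.2
      _ = (‖q.1‖₊ : ℝ≥0∞) + (‖q.2‖₊ : ℝ≥0∞) := by push_cast; ring
  rw [lintegral_add_left (by fun_prop)] at hb
  rw [lintegral_fst_of_coupling (prod_mem_couplings μ ν),
    lintegral_snd_of_coupling (prod_mem_couplings μ ν)] at hb
  exact ne_top_of_le_ne_top (ENNReal.add_ne_top.2 ⟨hμ, hν⟩) hb

lemma e11_eq_coupling_fst {μ ν : Measure ℝ} {π : Measure (ℝ × ℝ)} (hπ : π ∈ couplings μ ν)
    (a : ℝ) : e11 μ a = ∫ q, |q.1 - a| ∂π := by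
  rw [e11, ← hπ.1, integral_map measurable_fst.aemeasurable (meas_abs_sub a).aestronglyMeasurable]

lemma e11_eq_coupling_snd {μ ν : Measure ℝ} {π : Measure (ℝ × ℝ)} (hπ : π ∈ couplings μ ν)
    (a : ℝ) : e11 ν a = ∫ q, |q.2 - a| ∂π := by
  rw [e11, ← hπ.2, integral_map measurable_snd.aemeasurable (meas_abs_sub a).aestronglyMeasurable]

lemma e11_diff_le_cost {μ ν : Measure ℝ} [IsProbabilityMeasure μ] [IsProbabilityMeasure ν]
    (hμ : HasFiniteMoment1 μ) (hν : HasFiniteMoment1 ν) {π : Measure (ℝ × ℝ)}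
    (hπ : π ∈ couplings μ ν) (hc : cost π ≠ ∞) (a : ℝ) :
    |e11 μ a - e11 ν a| ≤ (cost π).toReal := by
  have hint1 : Integrable (fun q : ℝ × ℝ => |q.1 - a|) π := by
    have := (integrable_map_measure (f := Prod.fst) (g := fun x : ℝ => |x - a|)
      (meas_abs_sub a).aestronglyMeasurable measurable_fst.aemeasurable).1
      (by rw [hπ.1]; exact integrable_abs_sub hμ a)
    simpa [Function.comp_def] using this
  have hint2 : Integrable (fun q : ℝ × ℝ => |q.2 - a|) π := by
    have := (integrable_map_measure (f := Prod.snd) (g := fun x : ℝ => |x - a|)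
      (meas_abs_sub a).aestronglyMeasurable measurable_snd.aemeasurable).1
      (by rw [hπ.2]; exact integrable_abs_sub hν a)
    simpa [Function.comp_def] using this
  have hint3 : Integrable (fun q : ℝ × ℝ => |q.1 - q.2|) π := by
    refine ⟨meas_abs_fst_snd.aestronglyMeasurable, ?_⟩
    have : (∫⁻ q : ℝ × ℝ, (‖|q.1 - q.2|‖₊ : ℝ≥0∞) ∂π) < ∞ := by
      simpa [Real.nnnorm_abs, cost, lt_top_iff_ne_top] using hc
    exact this
  have h1 : e11 μ a - e11 ν a = ∫ q, (|q.1 - a| - |q.2 - a|) ∂π := by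
    rw [e11_eq_coupling_fst hπ, e11_eq_coupling_snd hπ, integral_sub hint1 hint2]
  rw [h1]
  have h2 : |∫ q, (|q.1 - a| - |q.2 - a|) ∂π| ≤ ∫ q, |q.1 - q.2| ∂π := by
    have habs : ∀ q : ℝ × ℝ, |(|q.1 - a| - |q.2 - a|)| ≤ |q.1 - q.2| := fun q => by
      simpa [sub_sub_sub_cancel_right] using abs_abs_sub_abs_le_abs_sub (q.1 - a) (q.2 - a)
    calc |∫ q, (|q.1 - a| - |q.2 - a|) ∂π| ≤ ∫ q, |(|q.1 - a| - |q.2 - a|)| ∂π := by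
          simpa [Real.norm_eq_abs] using norm_integral_le_integral_norm
            (fun q : ℝ × ℝ => (|q.1 - a| - |q.2 - a|))
      _ ≤ ∫ q, |q.1 - q.2| ∂π := integral_mono ((hint1.sub hint2).abs) hint3 habs
  refine h2.trans (le_of_eq ?_)
  rw [integral_eq_lintegral_of_nonneg_ae (Eventually.of_forall fun q => abs_nonneg _)
    meas_abs_fst_snd.aestronglyMeasurable]
  congr 1
  refine lintegral_congr fun q => ?_
  rw [← Real.enorm_eq_ofReal_abs, enorm_eq_nnnorm]

lemma abs_e11_diff_le_wd {μ ν : Measure ℝ} [IsProbabilityMeasure μ] [IsProbabilityMeasure ν]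
    (hμ : HasFiniteMoment1 μ) (hν : HasFiniteMoment1 ν) (a : ℝ) :
    |e11 μ a - e11 ν a| ≤ wassersteinDist 1 μ ν := by
  rw [wd_eq]
  set I := ⨅ π ∈ couplings μ ν, cost π with hI
  have hIne : I ≠ ∞ := by
    refine ne_top_of_le_ne_top (cost_prod_ne_top hμ hν) ?_
    exact biInf_le cost (prod_mem_couplings μ ν)
  refine le_of_forall_pos_le_add fun ε hε => ?_
  have hlt : I < I + ENNReal.ofReal ε :=
    ENNReal.lt_add_right hIne (by simp [hε, ENNReal.ofReal_pos])
  rw [hI] at hlt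
  simp only [iInf_lt_iff] at hlt
  obtain ⟨π, hπ, hcost⟩ := hlt
  have hcne : cost π ≠ ∞ := (hcost.trans_le le_top).ne
  refine (e11_diff_le_cost hμ hν hπ hcne a).trans ?_
  have := ENNReal.toReal_mono (ENNReal.add_ne_top.2 ⟨hIne, ENNReal.ofReal_ne_top⟩) hcost.le
  rwa [ENNReal.toReal_add hIne (by simp), ENNReal.toReal_ofReal hε.le] at this

lemma wd_nonneg (μ ν : Measure ℝ) : 0 ≤ wassersteinDist 1 μ ν := by
  rw [wd_eq]; exact ENNReal.toReal_nonneg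
lemma tendsto_F_atTop (μ : Measure ℝ) [IsProbabilityMeasure μ] :
    Tendsto (F μ) atTop (𝓝 1) := by
  have h := tendsto_measure_iUnion_atTop (μ := μ) (s := fun x : ℝ => Iic x)
    (fun a b hab => Iic_subset_Iic.2 hab)
  rw [iUnion_Iic, measure_univ] at h
  have := (ENNReal.tendsto_toReal (by simp : (1:ℝ≥0∞) ≠ ∞)).comp h
  simp [Function.comp_def] at this; exact this

lemma tendsto_F_atBot (μ : Measure ℝ) [IsProbabilityMeasure μ] :
    Tendsto (F μ) atBot (𝓝 0) := by
  have h := tendsto_measure_iInter_atBot (μ := μ) (s := fun x : ℝ => Iic x)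
    (fun a => measurableSet_Iic.nullMeasurableSet) (fun a b hab => Iic_subset_Iic.2 hab)
    ⟨0, measure_ne_top _ _⟩
  have hE : ⋂ x : ℝ, Iic x = (∅ : Set ℝ) := by
    ext y
    simp only [mem_iInter, mem_Iic, mem_empty_iff_false, iff_false]
    push_neg
    exact ⟨y - 1, by linarith⟩
  rw [hE, measure_empty] at h
  have := (ENNReal.tendsto_toReal (by simp : (0:ℝ≥0∞) ≠ ∞)).comp h
  simp [Function.comp_def] at this; exact this

/-- Quantile function. -/
noncomputable def Q (μ : Measure ℝ) (u : ℝ) : ℝ := sInf {x | u ≤ F μ x}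

noncomputable def gQ (μ : Measure ℝ) (u : ℝ) : ℝ := if 0 < u ∧ u < 1 then Q μ u else 0

lemma Qset_nonempty (μ : Measure ℝ) [IsProbabilityMeasure μ] {u : ℝ} (hu1 : u < 1) :
    {x | u ≤ F μ x}.Nonempty := by
  have := (tendsto_F_atTop μ).eventually (eventually_ge_nhds hu1)
  obtain ⟨x, hx⟩ := this.exists
  exact ⟨x, hx⟩

lemma Qset_bddBelow (μ : Measure ℝ) [IsProbabilityMeasure μ] {u : ℝ} (hu : 0 < u) :
    BddBelow {x | u ≤ F μ x} := by
  have := (tendsto_F_atBot μ).eventually (eventually_lt_nhds hu)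
  obtain ⟨x₀, hx₀⟩ := this.exists
  refine ⟨x₀, fun y hy => ?_⟩
  by_contra hxy
  push_neg at hxy
  exact absurd (hy.trans (F_mono μ hxy.le)) (not_le.2 hx₀)

lemma Q_le_iff (μ : Measure ℝ) [IsProbabilityMeasure μ] {u t : ℝ} (hu : 0 < u) (hu1 : u < 1) :
    Q μ u ≤ t ↔ u ≤ F μ t := by
  constructor
  · intro h
    refine ge_of_tendsto (tendsto_F_right μ t) (Eventually.of_forall fun n => ?_)
    have hpos : (0:ℝ) < 1/(n+1) := by positivity
    have hlt : Q μ u < t + 1/(n+1) := lt_of_le_of_lt h (by linarith)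
    obtain ⟨x, hx, hxl⟩ := (csInf_lt_iff (Qset_bddBelow μ hu) (Qset_nonempty μ hu1)).1 hlt
    exact le_trans hx (F_mono μ hxl.le)
  · intro h
    exact csInf_le (Qset_bddBelow μ hu) h

lemma gQ_measurable (μ : Measure ℝ) [IsProbabilityMeasure μ] : Measurable (gQ μ) := by
  refine measurable_of_Iic fun c => ?_
  have : gQ μ ⁻¹' Iic c =
      (Ioo (0:ℝ) 1 ∩ Iic (F μ c)) ∪ (if (0:ℝ) ≤ c then (Ioo (0:ℝ) 1)ᶜ else ∅) := by
    ext u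
    by_cases hu : 0 < u ∧ u < 1
    · simp only [mem_preimage, mem_Iic, gQ, if_pos hu, mem_union, mem_inter_iff, mem_Ioo]
      rw [Q_le_iff μ hu.1 hu.2]
      constructor
      · intro h; exact Or.inl ⟨⟨hu.1, hu.2⟩, h⟩
      · rintro (⟨_, h⟩ | h)
        · exact h
        · exfalso; split_ifs at h with h0
          · exact h ⟨hu.1, hu.2⟩
          · exact h
    · simp only [mem_preimage, mem_Iic, gQ, if_neg hu, mem_union, mem_inter_iff, mem_Ioo]
      constructor
      · intro h; right; rw [if_pos h]; exact fun hc => hu ⟨hc.1, hc.2⟩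
      · rintro (⟨h1, _⟩ | h)
        · exact absurd h1 hu
        · split_ifs at h with h0
          · exact h0
          · exact absurd h (notMem_empty u)
  rw [this]
  refine MeasurableSet.union (measurableSet_Ioo.inter measurableSet_Iic) ?_
  split_ifs
  · exact measurableSet_Ioo.compl
  · exact MeasurableSet.empty

lemma vol_between {s : Set ℝ} {m M : ℝ} (h1 : Ioo m M ⊆ s) (h2 : s ⊆ Ioc m M) :
    volume s = ENNReal.ofReal (M - m) := by
  have hl := measure_mono (μ := volume) h1
  have hr := measure_mono (μ := volume) h2
  rw [Real.volume_Ioo] at hl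
  rw [Real.volume_Ioc] at hr
  exact le_antisymm hr hl

lemma map_gQ (μ : Measure ℝ) [IsProbabilityMeasure μ] :
    Measure.map (gQ μ) (volume.restrict (Ioo 0 1)) = μ := by
  have hfin : IsFiniteMeasure (Measure.map (gQ μ) (volume.restrict (Ioo (0:ℝ) 1))) := by
    constructor
    rw [Measure.map_apply (gQ_measurable μ) MeasurableSet.univ]
    simp [Real.volume_Ioo]
  refine Measure.ext_of_Iic _ _ fun a => ?_
  rw [Measure.map_apply (gQ_measurable μ) measurableSet_Iic,
    Measure.restrict_apply ((gQ_measurable μ) measurableSet_Iic)]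
  have hset : gQ μ ⁻¹' Iic a ∩ Ioo 0 1 = {u : ℝ | u ≤ F μ a} ∩ Ioo 0 1 := by
    ext u
    simp only [mem_inter_iff, mem_preimage, mem_Iic, mem_Ioo, mem_setOf_eq]
    constructor
    · rintro ⟨h1, h2⟩
      rw [gQ, if_pos ⟨h2.1, h2.2⟩, Q_le_iff μ h2.1 h2.2] at h1
      exact ⟨h1, h2⟩
    · rintro ⟨h1, h2⟩
      rw [gQ, if_pos ⟨h2.1, h2.2⟩, Q_le_iff μ h2.1 h2.2]
      exact ⟨h1, h2⟩
  rw [hset]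
  have h1 : Ioo (0:ℝ) (F μ a) ⊆ {u : ℝ | u ≤ F μ a} ∩ Ioo 0 1 := by
    intro u hu
    exact ⟨hu.2.le, hu.1, lt_of_lt_of_le hu.2 (F_le_one μ a)⟩
  have h2 : {u : ℝ | u ≤ F μ a} ∩ Ioo 0 1 ⊆ Ioc 0 (F μ a) := fun u hu => ⟨hu.2.1, hu.1⟩
  rw [vol_between h1 h2, sub_zero, F, ENNReal.ofReal_toReal (measure_ne_top _ _)]

lemma xor_set_Ioc (c d : ℝ) :
    {u : ℝ | (u ≤ c ∧ ¬ u ≤ d) ∨ (u ≤ d ∧ ¬ u ≤ c)} = Ioc (min c d) (max c d) := by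
  ext u
  simp only [mem_setOf_eq, mem_Ioc, lt_min_iff, min_lt_iff, le_max_iff, not_le]
  constructor
  · rintro (⟨h1, h2⟩ | ⟨h1, h2⟩)
    · exact ⟨Or.inr h2, Or.inl h1⟩
    · exact ⟨Or.inl h2, Or.inr h1⟩
  · rintro ⟨h1 | h1, h2 | h2⟩
    · exact absurd h1 (not_lt.2 h2)
    · exact Or.inr ⟨h2, h1⟩
    · exact Or.inl ⟨h2, h1⟩
    · exact absurd h1 (not_lt.2 h2)

lemma xor_set_Ico (a b : ℝ) :
    {t : ℝ | (a ≤ t ∧ ¬ b ≤ t) ∨ (b ≤ t ∧ ¬ a ≤ t)} = Ico (min a b) (max a b) := by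
  ext t
  simp only [mem_setOf_eq, mem_Ico, min_le_iff, lt_max_iff, not_le]
  constructor
  · rintro (⟨h1, h2⟩ | ⟨h1, h2⟩)
    · exact ⟨Or.inl h1, Or.inr h2⟩
    · exact ⟨Or.inr h1, Or.inl h2⟩
  · rintro ⟨h1 | h1, h2 | h2⟩
    · exact absurd h2 (not_lt.2 h1)
    · exact Or.inl ⟨h1, h2⟩
    · exact Or.inr ⟨h1, h2⟩
    · exact absurd h2 (not_lt.2 h1)

/-- The quantile coupling and its cost. -/
lemma exists_coupling_cost (μ ν : Measure ℝ) [IsProbabilityMeasure μ] [IsProbabilityMeasure ν] :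
    ∃ π ∈ couplings μ ν, cost π = ∫⁻ t, ENNReal.ofReal |F μ t - F ν t| := by
  set ρ := volume.restrict (Ioo (0:ℝ) 1) with hρ
  have hρfin : IsFiniteMeasure ρ := by
    constructor; simp [hρ, Real.volume_Ioo]
  set f : ℝ → ℝ × ℝ := fun u => (gQ μ u, gQ ν u) with hf
  have hfm : Measurable f := (gQ_measurable μ).prodMk (gQ_measurable ν)
  refine ⟨Measure.map f ρ, ⟨?_, ?_⟩, ?_⟩
  · rw [Measure.map_map measurable_fst hfm]
    exact map_gQ μ
  · rw [Measure.map_map measurable_snd hfm]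
    exact map_gQ ν
  · rw [cost, lintegral_map (by fun_prop) hfm]
    set S : Set (ℝ × ℝ) := {p | (gQ μ p.1 ≤ p.2 ∧ ¬ gQ ν p.1 ≤ p.2) ∨
      (gQ ν p.1 ≤ p.2 ∧ ¬ gQ μ p.1 ≤ p.2)} with hS
    have hSm : MeasurableSet S := by
      have h1 : MeasurableSet {p : ℝ × ℝ | gQ μ p.1 ≤ p.2} :=
        measurableSet_le ((gQ_measurable μ).comp measurable_fst) measurable_snd
      have h2 : MeasurableSet {p : ℝ × ℝ | gQ ν p.1 ≤ p.2} :=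
        measurableSet_le ((gQ_measurable ν).comp measurable_fst) measurable_snd
      exact (h1.inter h2.compl).union (h2.inter h1.compl)
    have hfiber1 : ∀ u : ℝ, volume (Prod.mk u ⁻¹' S) = (‖gQ μ u - gQ ν u‖₊ : ℝ≥0∞) := by
      intro u
      have : Prod.mk u ⁻¹' S = Ico (min (gQ μ u) (gQ ν u)) (max (gQ μ u) (gQ ν u)) := by
        rw [← xor_set_Ico (gQ μ u) (gQ ν u)]
        rfl
      rw [this, Real.volume_Ico, max_sub_min_eq_abs, ← enorm_eq_nnnorm, Real.enorm_eq_ofReal_abs, abs_sub_comm]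
    have step1 : ∫⁻ u, (‖gQ μ u - gQ ν u‖₊ : ℝ≥0∞) ∂ρ = (ρ.prod volume) S := by
      rw [Measure.prod_apply hSm]
      exact (lintegral_congr fun u => (hfiber1 u).symm)
    have step2 : (ρ.prod volume) S = ∫⁻ t, ENNReal.ofReal |F μ t - F ν t| := by
      rw [Measure.prod_apply_symm hSm]
      refine lintegral_congr fun t => ?_
      have hfib : (fun u => (u, t)) ⁻¹' S ∩ Ioo 0 1
          = Ioc (min (F μ t) (F ν t)) (max (F μ t) (F ν t)) ∩ Ioo 0 1 := by
        rw [← xor_set_Ioc (F μ t) (F ν t)]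
        ext u
        simp only [mem_inter_iff, mem_preimage, mem_setOf_eq, mem_Ioo, hS]
        constructor
        · rintro ⟨h1, h2⟩
          refine ⟨?_, h2⟩
          simp only [gQ, if_pos (And.intro h2.1 h2.2), Q_le_iff μ h2.1 h2.2,
            Q_le_iff ν h2.1 h2.2] at h1
          exact h1
        · rintro ⟨h1, h2⟩
          refine ⟨?_, h2⟩
          simp only [gQ, if_pos (And.intro h2.1 h2.2), Q_le_iff μ h2.1 h2.2,
            Q_le_iff ν h2.1 h2.2]
          exact h1
      have hmeas : MeasurableSet ((fun u => (u, t)) ⁻¹' S) :=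
        hSm.preimage (measurable_id.prodMk measurable_const)
      rw [hρ, Measure.restrict_apply hmeas, hfib]
      set m := min (F μ t) (F ν t)
      set M := max (F μ t) (F ν t)
      have hm0 : 0 ≤ m := le_min (F_nonneg μ t) (F_nonneg ν t)
      have hM1 : M ≤ 1 := max_le (F_le_one μ t) (F_le_one ν t)
      have h1 : Ioo m M ⊆ Ioc m M ∩ Ioo 0 1 := by
        intro u hu
        exact ⟨⟨hu.1, hu.2.le⟩, lt_of_le_of_lt hm0 hu.1, lt_of_lt_of_le hu.2 hM1⟩
      have h2 : Ioc m M ∩ Ioo 0 1 ⊆ Ioc m M := inter_subset_left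
      rw [vol_between h1 h2, max_sub_min_eq_abs, abs_sub_comm]
    rw [step1, step2]

/-- `W₁ ≤ ∫ |F μ - F ν|`. -/
lemma wd_le_integral_F {μ ν : Measure ℝ} [IsProbabilityMeasure μ] [IsProbabilityMeasure ν]
    (hint : Integrable (fun t => |F μ t - F ν t|)) :
    wassersteinDist 1 μ ν ≤ ∫ t, |F μ t - F ν t| := by
  rw [wd_eq]
  obtain ⟨π, hπ, hcost⟩ := exists_coupling_cost μ ν
  have h1 : (⨅ π ∈ couplings μ ν, cost π) ≤ cost π := biInf_le cost hπ
  rw [hcost, ← ofReal_integral_eq_lintegral_ofReal hint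
    (Eventually.of_forall fun t => abs_nonneg _)] at h1
  calc (⨅ π ∈ couplings μ ν, cost π).toReal
      ≤ (ENNReal.ofReal (∫ t, |F μ t - F ν t|)).toReal :=
        ENNReal.toReal_mono ENNReal.ofReal_ne_top h1
    _ = ∫ t, |F μ t - F ν t| := ENNReal.toReal_ofReal (integral_nonneg fun t => abs_nonneg _)
/-- `φ μ t` equals `F μ t` for `t ≤ 0` and `1 - F μ t` for `t > 0`. -/
noncomputable def phi (μ : Measure ℝ) (t : ℝ) : ℝ := if t ≤ 0 then F μ t else 1 - F μ t

lemma phi_nonneg (μ : Measure ℝ) [IsProbabilityMeasure μ] (t : ℝ) : 0 ≤ phi μ t := by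
  rw [phi]; split_ifs
  · exact F_nonneg μ t
  · linarith [F_le_one μ t]

lemma phi_measurable (μ : Measure ℝ) [IsProbabilityMeasure μ] : Measurable (phi μ) :=
  Measurable.ite measurableSet_Iic (F_measurable μ) (measurable_const.sub (F_measurable μ))

lemma ofReal_phi (μ : Measure ℝ) [IsProbabilityMeasure μ] (t : ℝ) :
    ENNReal.ofReal (phi μ t) = if t ≤ 0 then μ (Iic t) else μ (Ioi t) := by
  rw [phi]; split_ifs with h
  · exact ENNReal.ofReal_toReal (measure_ne_top _ _)
  · rw [← compl_Iic, measure_compl measurableSet_Iic (measure_ne_top _ _), measure_univ]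
    rw [ENNReal.ofReal_sub _ (F_nonneg μ t), ENNReal.ofReal_one, F,
      ENNReal.ofReal_toReal (measure_ne_top _ _)]

/-- Layer-cake: `∫⁻ ofReal (phi μ) = ∫⁻ ‖ξ‖₊ ∂μ`. -/
lemma lintegral_phi (μ : Measure ℝ) [IsProbabilityMeasure μ] :
    ∫⁻ t, ENNReal.ofReal (phi μ t) = ∫⁻ ξ, (‖ξ‖₊ : ℝ≥0∞) ∂μ := by
  set S : Set (ℝ × ℝ) := {p | (p.1 ≤ 0 ∧ p.2 ≤ p.1) ∨ (0 < p.1 ∧ p.1 < p.2)} with hS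
  have hSm : MeasurableSet S := by
    have h1 : MeasurableSet {p : ℝ × ℝ | p.1 ≤ 0} :=
      measurable_fst measurableSet_Iic
    have h2 : MeasurableSet {p : ℝ × ℝ | p.2 ≤ p.1} := measurableSet_le measurable_snd measurable_fst
    have h3 : MeasurableSet {p : ℝ × ℝ | 0 < p.1} := measurable_fst measurableSet_Ioi
    have h4 : MeasurableSet {p : ℝ × ℝ | p.1 < p.2} := measurableSet_lt measurable_fst measurable_snd
    exact (h1.inter h2).union (h3.inter h4)
  have left : ∫⁻ t, ENNReal.ofReal (phi μ t) = (volume.prod μ) S := by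
    rw [Measure.prod_apply hSm]
    refine lintegral_congr fun t => ?_
    have hfib : Prod.mk t ⁻¹' S = if t ≤ 0 then Iic t else Ioi t := by
      split_ifs with h
      · ext ξ
        simp only [mem_preimage, hS, mem_setOf_eq, mem_Iic]
        constructor
        · rintro (⟨_, h2⟩ | ⟨h1, _⟩)
          · exact h2
          · linarith
        · intro hξ; exact Or.inl ⟨h, hξ⟩
      · push_neg at h
        ext ξ
        simp only [mem_preimage, hS, mem_setOf_eq, mem_Ioi]
        constructor
        · rintro (⟨h1, _⟩ | ⟨_, h2⟩)
          · linarith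
          · exact h2
        · intro hξ; exact Or.inr ⟨h, hξ⟩
    rw [ofReal_phi, hfib]
    split_ifs <;> rfl
  have right : (volume.prod μ) S = ∫⁻ ξ, (‖ξ‖₊ : ℝ≥0∞) ∂μ := by
    rw [Measure.prod_apply_symm hSm]
    refine lintegral_congr fun ξ => ?_
    have hfib : (fun t => (t, ξ)) ⁻¹' S = if ξ ≤ 0 then Icc ξ 0 else Ioo 0 ξ := by
      split_ifs with h
      · ext t
        simp only [mem_preimage, hS, mem_setOf_eq, mem_Icc]
        constructor
        · rintro (⟨h1, h2⟩ | ⟨h1, h2⟩)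
          · exact ⟨h2, h1⟩
          · exact absurd (h2.trans_le h) (not_lt.2 h1.le)
        · rintro ⟨h1, h2⟩; exact Or.inl ⟨h2, h1⟩
      · push_neg at h
        ext t
        simp only [mem_preimage, hS, mem_setOf_eq, mem_Ioo]
        constructor
        · rintro (⟨h1, h2⟩ | hh)
          · exact absurd ((h.trans_le h2).trans_le h1) (lt_irrefl 0)
          · exact hh
        · intro hh; exact Or.inr hh
    rw [hfib]
    split_ifs with h
    · rw [Real.volume_Icc, ← enorm_eq_nnnorm, Real.enorm_eq_ofReal_abs, abs_of_nonpos h]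
      norm_num
    · push_neg at h
      rw [Real.volume_Ioo, ← enorm_eq_nnnorm, Real.enorm_eq_ofReal_abs, abs_of_nonneg h.le, sub_zero]
  rw [left, right]

lemma integrable_phi {μ : Measure ℝ} [IsProbabilityMeasure μ] (hμ : HasFiniteMoment1 μ) :
    Integrable (phi μ) := by
  refine ⟨(phi_measurable μ).aestronglyMeasurable, ?_⟩
  have : (∫⁻ t, (‖phi μ t‖₊ : ℝ≥0∞)) = ∫⁻ t, ENNReal.ofReal (phi μ t) :=
    lintegral_congr fun t => by
      rw [← enorm_eq_nnnorm, Real.enorm_eq_ofReal_abs, abs_of_nonneg (phi_nonneg μ t)]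
  have hfi : (∫⁻ t, (‖phi μ t‖₊ : ℝ≥0∞)) < ∞ := by
    rw [this, lintegral_phi μ]
    exact lt_top_iff_ne_top.2 hμ
  exact hfi

lemma integral_phi {μ : Measure ℝ} [IsProbabilityMeasure μ] (hμ : HasFiniteMoment1 μ) :
    ∫ t, phi μ t = e11 μ 0 := by
  rw [e11]
  have h1 : ∫ t, phi μ t = (∫⁻ t, ENNReal.ofReal (phi μ t)).toReal :=
    integral_eq_lintegral_of_nonneg_ae (Eventually.of_forall (phi_nonneg μ))
      (phi_measurable μ).aestronglyMeasurable
  have h2 : ∫ ξ, |ξ - 0| ∂μ = (∫⁻ ξ, ENNReal.ofReal |ξ - 0| ∂μ).toReal :=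
    integral_eq_lintegral_of_nonneg_ae (Eventually.of_forall fun ξ => abs_nonneg _)
      ((measurable_id.sub measurable_const).abs).aestronglyMeasurable
  rw [h1, h2, lintegral_phi μ]
  congr 1
  refine lintegral_congr fun ξ => ?_
  rw [← enorm_eq_nnnorm, Real.enorm_eq_ofReal_abs, sub_zero]

lemma abs_F_sub_le (μ ν : Measure ℝ) [IsProbabilityMeasure μ] [IsProbabilityMeasure ν] (t : ℝ) :
    |F μ t - F ν t| ≤ phi μ t + phi ν t := by
  have h1 := F_nonneg μ t; have h2 := F_nonneg ν t
  have h3 := F_le_one μ t; have h4 := F_le_one ν t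
  rw [phi, phi]
  split_ifs <;> rw [abs_le] <;> constructor <;> linarith

lemma integrable_abs_F_sub {μ ν : Measure ℝ} [IsProbabilityMeasure μ] [IsProbabilityMeasure ν]
    (hμ : HasFiniteMoment1 μ) (hν : HasFiniteMoment1 ν) :
    Integrable (fun t => |F μ t - F ν t|) := by
  refine Integrable.mono' ((integrable_phi hμ).add (integrable_phi hν))
    (((F_measurable μ).sub (F_measurable ν)).abs).aestronglyMeasurable ?_
  filter_upwards with t
  rw [Real.norm_eq_abs, abs_abs]
  exact abs_F_sub_le μ ν t
/-- Generalized dominated convergence. -/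
lemma gdct {fn : ℕ → ℝ → ℝ} {f : ℝ → ℝ} {φn : ℕ → ℝ → ℝ} {φ : ℝ → ℝ}
    (hfnm : ∀ n, Measurable (fn n)) (hfm : Measurable f)
    (hφnm : ∀ n, Measurable (φn n)) (hφm : Measurable φ)
    (hbound : ∀ n t, |fn n t - f t| ≤ φn n t + φ t)
    (hae : ∀ᵐ t, Tendsto (fun n => fn n t) atTop (𝓝 (f t)))
    (haeφ : ∀ᵐ t, Tendsto (fun n => φn n t) atTop (𝓝 (φ t)))
    (hφ0 : ∀ t, 0 ≤ φ t)
    (hφn_int : ∀ n, Integrable (φn n)) (hφ_int : Integrable φ)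
    (hφ_tendsto : Tendsto (fun n => ∫ t, φn n t) atTop (𝓝 (∫ t, φ t))) :
    Tendsto (fun n => ∫ t, |fn n t - f t|) atTop (𝓝 0) := by
  have hφn_nonneg : ∀ n t, 0 ≤ φn n t + φ t := fun n t =>
    le_trans (abs_nonneg _) (hbound n t)
  set A : ℕ → ℝ≥0∞ := fun n => ∫⁻ t, ENNReal.ofReal |fn n t - f t| with hA
  set W : ℕ → ℝ≥0∞ := fun n => ∫⁻ t, ENNReal.ofReal (φn n t + φ t - |fn n t - f t|) with hW
  set Y : ℕ → ℝ≥0∞ := fun n => ∫⁻ t, ENNReal.ofReal (φn n t + φ t) with hY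
  set Z : ℝ≥0∞ := ENNReal.ofReal (2 * ∫ t, φ t) with hZ
  have hAm : ∀ n, Measurable fun t => ENNReal.ofReal |fn n t - f t| := fun n =>
    (((hfnm n).sub hfm).abs).ennreal_ofReal
  have hWm : ∀ n, Measurable fun t => ENNReal.ofReal (φn n t + φ t - |fn n t - f t|) := fun n =>
    ((((hφnm n).add hφm).sub (((hfnm n).sub hfm).abs))).ennreal_ofReal
  have hAW : ∀ n, A n + W n = Y n := by
    intro n
    rw [hA, hW, hY, ← lintegral_add_left (hAm n)]
    refine lintegral_congr fun t => ?_
    rw [← ENNReal.ofReal_add (abs_nonneg _) (by linarith [hbound n t])]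
    ring_nf
  have hYn_eq : ∀ n, Y n = ENNReal.ofReal ((∫ t, φn n t) + ∫ t, φ t) := by
    intro n
    have h1 := ofReal_integral_eq_lintegral_ofReal (f := fun t => φn n t + φ t)
      ((hφn_int n).add hφ_int) (Eventually.of_forall (hφn_nonneg n))
    have h2 : ∫ t, (φn n t + φ t) = (∫ t, φn n t) + ∫ t, φ t := integral_add (hφn_int n) hφ_int
    rw [h2] at h1
    exact h1.symm
  have hYlim : Tendsto Y atTop (𝓝 Z) := by
    have h1 : Tendsto (fun n => (∫ t, φn n t) + ∫ t, φ t) atTop (𝓝 (2 * ∫ t, φ t)) := by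
      have := hφ_tendsto.add_const (∫ t, φ t)
      convert this using 2
      ring
    have h2 := (ENNReal.continuous_ofReal.tendsto _).comp h1
    simp only [Function.comp_def] at h2
    convert h2 using 1
    funext n
    exact hYn_eq n
  have hZne : Z ≠ ∞ := ENNReal.ofReal_ne_top
  have hZlint : Z = ∫⁻ t, ENNReal.ofReal (2 * φ t) := by
    have h1 := ofReal_integral_eq_lintegral_ofReal (f := fun t => 2 * φ t)
      (hφ_int.const_mul 2) (Eventually.of_forall fun t => by simp only [Pi.zero_apply]; linarith [hφ0 t])
    have h2 : ∫ t, (2 * φ t) = 2 * ∫ t, φ t := MeasureTheory.integral_const_mul 2 φ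
    rw [h2] at h1
    exact h1
  have hfatou : Z ≤ liminf W atTop := by
    rw [hZlint]
    refine le_trans (le_of_eq ?_) (lintegral_liminf_le hWm)
    refine (lintegral_congr_ae ?_).symm
    filter_upwards [hae, haeφ] with t h1 h2
    have h3 : Tendsto (fun n => φn n t + φ t - |fn n t - f t|) atTop (𝓝 (2 * φ t)) := by
      have h4 : Tendsto (fun n => |fn n t - f t|) atTop (𝓝 0) := by
        have := (h1.sub_const (f t)).abs
        simpa using this
      have := ((h2.add_const (φ t)).sub h4)
      simpa [two_mul] using this
    exact (((ENNReal.continuous_ofReal.tendsto _).comp h3).liminf_eq)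
  -- A n → 0
  have hAlim : Tendsto A atTop (𝓝 0) := by
    rw [ENNReal.tendsto_nhds_zero]
    intro ε hε
    rcases eq_or_ne Z 0 with hZ0 | hZ0
    · have : ∀ n, A n ≤ Y n := fun n => (hAW n) ▸ le_self_add
      filter_upwards [hYlim.eventually_lt_const (hZ0 ▸ hε)] with n hn
      exact (this n).trans hn.le
    · set ε' : ℝ≥0∞ := min (ε / 2) Z with hε'
      have hε'0 : ε' ≠ 0 :=
        (lt_min (ENNReal.half_pos hε.ne') (pos_iff_ne_zero.2 hZ0)).ne'
      have hε'Z : ε' ≤ Z := min_le_right _ _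
      have hsub : Z - ε' < Z := ENNReal.sub_lt_self hZne hZ0 hε'0
      have ev1 : ∀ᶠ n in atTop, Y n < Z + ε' :=
        hYlim.eventually_lt_const (ENNReal.lt_add_right hZne hε'0)
      have ev2 : ∀ᶠ n in atTop, Z - ε' < W n := eventually_lt_of_lt_liminf (hsub.trans_le hfatou)
      filter_upwards [ev1, ev2] with n h1 h2
      have hWn_ne : W n ≠ ∞ := by
        refine ne_top_of_le_ne_top (h1.trans_le le_top).ne ?_
        exact (hAW n) ▸ le_add_self
      have hAn : A n = Y n - W n := by
        rw [← hAW n, ENNReal.add_sub_cancel_right hWn_ne]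
      have : A n ≤ (Z + ε') - (Z - ε') := by
        rw [hAn]
        exact tsub_le_tsub h1.le h2.le
      refine this.trans ?_
      have hZrec : (Z - ε') + (ε' + ε') = Z + ε' := by
        rw [← add_assoc, tsub_add_cancel_of_le hε'Z]
      calc (Z + ε') - (Z - ε') ≤ ε' + ε' := by
            rw [tsub_le_iff_right, add_comm (ε' + ε') (Z - ε'), hZrec]
        _ ≤ ε / 2 + ε / 2 := add_le_add (min_le_left _ _) (min_le_left _ _)
        _ = ε := ENNReal.add_halves ε
  have hint_eq : ∀ n, ∫ t, |fn n t - f t| = (A n).toReal := fun n =>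
    integral_eq_lintegral_of_nonneg_ae (Eventually.of_forall fun t => abs_nonneg _)
      (((hfnm n).sub hfm).abs).aestronglyMeasurable
  have := (ENNReal.tendsto_toReal (by simp : (0:ℝ≥0∞) ≠ ∞)).comp hAlim
  simp only [Function.comp, ENNReal.toReal_zero] at this
  convert this using 1
  funext n
  exact hint_eq n
section Pointwise
variable {μ : ℕ → Measure ℝ} {μ' : Measure ℝ}

lemma F_tendsto_at_nonatom [∀ n, IsProbabilityMeasure (μ n)] [IsProbabilityMeasure μ']
    (hμ : ∀ n, HasFiniteMoment1 (μ n)) (hμ' : HasFiniteMoment1 μ')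
    (hpt : ∀ a, Tendsto (fun n => e11 (μ n) a) atTop (𝓝 (e11 μ' a)))
    {t : ℝ} (hat : μ' {t} = 0) :
    Tendsto (fun n => F (μ n) t) atTop (𝓝 (F μ' t)) := by
  have havg : ∀ a b : ℝ, a ≤ b →
      Tendsto (fun n => ∫ s in Ioc a b, F (μ n) s) atTop (𝓝 (∫ s in Ioc a b, F μ' s)) := by
    intro a b hab
    simp only [setIntegral_F (hμ _) hab, setIntegral_F hμ' hab]
    exact (((hpt b).sub (hpt a)).add_const (b - a)).div_const 2
  rw [Metric.tendsto_atTop]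
  intro ε hε
  obtain ⟨m₁, hm₁⟩ : ∃ m : ℕ, F μ' (t + 1/(m+1)) < F μ' t + ε/2 :=
    ((tendsto_F_right μ' t).eventually_lt_const (by linarith : F μ' t < F μ' t + ε/2)).exists
  have hio : (μ' (Iio t)).toReal = F μ' t := by
    have h0 : μ' (Iic t) = μ' (Iio t) := by
      rw [← Iio_union_right, measure_union (by simp) (measurableSet_singleton t), hat,
        add_zero]
    rw [F, h0]
  obtain ⟨m₂, hm₂⟩ : ∃ m : ℕ, F μ' t - ε/2 < F μ' (t - 1/(m+1)) := by
    have h1 := tendsto_F_left μ' t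
    rw [hio] at h1
    exact (h1.eventually_const_lt (by linarith : F μ' t - ε/2 < F μ' t)).exists
  set h1 : ℝ := 1/(m₁+1) with hh1
  set h2 : ℝ := 1/(m₂+1) with hh2
  have hh1pos : 0 < h1 := by positivity
  have hh2pos : 0 < h2 := by positivity
  have hup : ∀ᶠ n in atTop, F (μ n) t < F μ' t + ε := by
    have hlim := havg t (t + h1) (by linarith)
    have hlt : ∫ s in Ioc t (t + h1), F μ' s < (F μ' t + ε) * h1 := by
      have hu := avg_upper μ' (t := t + h1) hh1pos
      rw [show t + h1 - h1 = t by ring] at hu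
      have hmul : F μ' (t + h1) * h1 < (F μ' t + ε) * h1 :=
        mul_lt_mul_of_pos_right (by linarith) hh1pos
      linarith
    filter_upwards [hlim.eventually_lt_const hlt] with n hn
    have hlow := avg_lower (μ n) (t := t) hh1pos
    exact lt_of_mul_lt_mul_right (hlow.trans_lt hn) hh1pos.le
  have hdown : ∀ᶠ n in atTop, F μ' t - ε < F (μ n) t := by
    have hlim := havg (t - h2) t (by linarith)
    have hgt : (F μ' t - ε) * h2 < ∫ s in Ioc (t - h2) t, F μ' s := by
      have hl := avg_lower μ' (t := t - h2) hh2pos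
      rw [show t - h2 + h2 = t by ring] at hl
      have hmul : (F μ' t - ε) * h2 < F μ' (t - h2) * h2 :=
        mul_lt_mul_of_pos_right (by linarith) hh2pos
      linarith
    filter_upwards [hlim.eventually_const_lt hgt] with n hn
    have hupint := avg_upper (μ n) (t := t) hh2pos
    exact lt_of_mul_lt_mul_right (hn.trans_le hupint) hh2pos.le
  obtain ⟨N, hN⟩ := eventually_atTop.1 (hup.and hdown)
  refine ⟨N, fun n hn => ?_⟩
  have h := hN n hn
  rw [Real.dist_eq, abs_lt]
  constructor <;> linarith [h.1, h.2]

lemma F_tendsto_ae [∀ n, IsProbabilityMeasure (μ n)] [IsProbabilityMeasure μ']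
    (hμ : ∀ n, HasFiniteMoment1 (μ n)) (hμ' : HasFiniteMoment1 μ')
    (hpt : ∀ a, Tendsto (fun n => e11 (μ n) a) atTop (𝓝 (e11 μ' a))) :
    ∀ᵐ t : ℝ, Tendsto (fun n => F (μ n) t) atTop (𝓝 (F μ' t)) := by
  have hc : Set.Countable {t : ℝ | 0 < μ' {t}} := by
    refine Measure.countable_meas_pos_of_disjoint_iUnion (μ := μ')
      (As := fun t : ℝ => {t}) (fun t => measurableSet_singleton t) ?_
    intro i j hij
    simp [Function.onFun, hij]
  have hnull : volume {t : ℝ | 0 < μ' {t}} = 0 := hc.measure_zero _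
  rw [ae_iff]
  refine measure_mono_null ?_ hnull
  intro t ht
  simp only [mem_setOf_eq] at ht ⊢
  by_contra hpos
  push_neg at hpos
  exact ht (F_tendsto_at_nonatom hμ hμ' hpt (le_antisymm hpos zero_le))

lemma phi_tendsto_ae [∀ n, IsProbabilityMeasure (μ n)] [IsProbabilityMeasure μ']
    (hμ : ∀ n, HasFiniteMoment1 (μ n)) (hμ' : HasFiniteMoment1 μ')
    (hpt : ∀ a, Tendsto (fun n => e11 (μ n) a) atTop (𝓝 (e11 μ' a))) :
    ∀ᵐ t : ℝ, Tendsto (fun n => phi (μ n) t) atTop (𝓝 (phi μ' t)) := by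
  filter_upwards [F_tendsto_ae hμ hμ' hpt] with t ht
  rw [phi]
  by_cases h : t ≤ 0
  · simp only [phi, if_pos h]
    exact ht
  · simp only [phi, if_neg h]
    exact (tendsto_const_nhds.sub ht)

/-- pointwise e11 convergence implies `∫|F_n - F| → 0`. -/
lemma tendsto_integral_F_of_pointwise [∀ n, IsProbabilityMeasure (μ n)]
    [IsProbabilityMeasure μ']
    (hμ : ∀ n, HasFiniteMoment1 (μ n)) (hμ' : HasFiniteMoment1 μ')
    (hpt : ∀ a, Tendsto (fun n => e11 (μ n) a) atTop (𝓝 (e11 μ' a))) :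
    Tendsto (fun n => ∫ t, |F (μ n) t - F μ' t|) atTop (𝓝 0) := by
  have hmom : Tendsto (fun n => ∫ t, phi (μ n) t) atTop (𝓝 (∫ t, phi μ' t)) := by
    simp only [integral_phi (hμ _), integral_phi hμ']
    exact hpt 0
  exact gdct (fun n => F_measurable (μ n)) (F_measurable μ')
    (fun n => phi_measurable (μ n)) (phi_measurable μ')
    (fun n t => abs_F_sub_le (μ n) μ' t)
    (F_tendsto_ae hμ hμ' hpt) (phi_tendsto_ae hμ hμ' hpt)
    (phi_nonneg μ') (fun n => integrable_phi (hμ n)) (integrable_phi hμ') hmom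

lemma tendsto_wd_of_pointwise [∀ n, IsProbabilityMeasure (μ n)] [IsProbabilityMeasure μ']
    (hμ : ∀ n, HasFiniteMoment1 (μ n)) (hμ' : HasFiniteMoment1 μ')
    (hpt : ∀ a, Tendsto (fun n => e11 (μ n) a) atTop (𝓝 (e11 μ' a))) :
    Tendsto (fun n => wassersteinDist 1 (μ n) μ') atTop (𝓝 0) := by
  refine squeeze_zero (fun n => wd_nonneg _ _) (fun n => ?_)
    (tendsto_integral_F_of_pointwise hμ hμ' hpt)
  exact wd_le_integral_F (integrable_abs_F_sub (hμ n) hμ')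
end Pointwise

end Stmt15Aux

/-- dimension one, `p = 1`, `N = 1`: (a) `e_{1,1}(μ, ·) = e_{1,1}(ν, ·) + C`
forces `μ = ν` and `C = 0`; (b) `W₁(μ_n, μ_∞) → 0` iff `e_{1,1}(μ_n, ·) → e_{1,1}(μ_∞, ·)`
uniformly iff pointwise. Consequently `Q_{1,1}` is a metric on probability measures on `ℝ`
with finite first moment, topologically equivalent to `W₁`. -/
theorem stmt15 :
    (∀ (μ ν : Measure ℝ) (_ : IsProbabilityMeasure μ) (_ : IsProbabilityMeasure ν)
      (_ : HasFiniteMoment1 μ) (_ : HasFiniteMoment1 ν) (C : ℝ),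
      (∀ a : ℝ, e11 μ a = e11 ν a + C) → μ = ν ∧ C = 0) ∧
    (∀ (μ : ℕ → Measure ℝ) (μ' : Measure ℝ)
      (_ : ∀ n, IsProbabilityMeasure (μ n)) (_ : IsProbabilityMeasure μ')
      (_ : ∀ n, HasFiniteMoment1 (μ n)) (_ : HasFiniteMoment1 μ'),
      (Tendsto (fun n => wassersteinDist 1 (μ n) μ') atTop (𝓝 0) ↔
        TendstoUniformly (fun n => e11 (μ n)) (e11 μ') atTop) ∧
      (Tendsto (fun n => wassersteinDist 1 (μ n) μ') atTop (𝓝 0) ↔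
        ∀ a : ℝ, Tendsto (fun n => e11 (μ n) a) atTop (𝓝 (e11 μ' a)))) ∧
    (∀ (μ ν : Measure ℝ) (_ : IsProbabilityMeasure μ) (_ : IsProbabilityMeasure ν)
      (_ : HasFiniteMoment1 μ) (_ : HasFiniteMoment1 ν),
      BddAbove (Set.range fun a : ℝ => |e11 μ a - e11 ν a|) ∧
      q11 μ ν = q11 ν μ ∧
      (q11 μ ν = 0 ↔ μ = ν)) ∧
    (∀ (μ ν ρ : Measure ℝ) (_ : IsProbabilityMeasure μ) (_ : IsProbabilityMeasure ν)
      (_ : IsProbabilityMeasure ρ)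
      (_ : HasFiniteMoment1 μ) (_ : HasFiniteMoment1 ν) (_ : HasFiniteMoment1 ρ),
      q11 μ ρ ≤ q11 μ ν + q11 ν ρ) ∧
    (∀ (μ : ℕ → Measure ℝ) (μ' : Measure ℝ)
      (_ : ∀ n, IsProbabilityMeasure (μ n)) (_ : IsProbabilityMeasure μ')
      (_ : ∀ n, HasFiniteMoment1 (μ n)) (_ : HasFiniteMoment1 μ'),
      (Tendsto (fun n => q11 (μ n) μ') atTop (𝓝 0) ↔
        Tendsto (fun n => wassersteinDist 1 (μ n) μ') atTop (𝓝 0))) := by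
  -- auxiliary facts, with instance management
  classical
  have pointwise_of_unif : ∀ (μ : ℕ → Measure ℝ) (μ' : Measure ℝ),
      TendstoUniformly (fun n => e11 (μ n)) (e11 μ') atTop →
      ∀ a : ℝ, Tendsto (fun n => e11 (μ n) a) atTop (𝓝 (e11 μ' a)) :=
    fun μ μ' h a => h.tendsto_at a
  have unif_of_wd : ∀ (μ : ℕ → Measure ℝ) (μ' : Measure ℝ),
      (∀ n, IsProbabilityMeasure (μ n)) → IsProbabilityMeasure μ' →
      (∀ n, HasFiniteMoment1 (μ n)) → HasFiniteMoment1 μ' →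
      Tendsto (fun n => wassersteinDist 1 (μ n) μ') atTop (𝓝 0) →
      TendstoUniformly (fun n => e11 (μ n)) (e11 μ') atTop := by
    intro μ μ' hP hP' hm hm' hW
    haveI := hP'
    rw [Metric.tendstoUniformly_iff]
    intro ε hε
    filter_upwards [hW.eventually_lt_const hε] with n hn a
    haveI := hP n
    rw [Real.dist_eq, abs_sub_comm]
    exact lt_of_le_of_lt (Stmt15Aux.abs_e11_diff_le_wd (hm n) hm' a) hn
  have wd_of_pointwise : ∀ (μ : ℕ → Measure ℝ) (μ' : Measure ℝ),
      (∀ n, IsProbabilityMeasure (μ n)) → IsProbabilityMeasure μ' →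
      (∀ n, HasFiniteMoment1 (μ n)) → HasFiniteMoment1 μ' →
      (∀ a : ℝ, Tendsto (fun n => e11 (μ n) a) atTop (𝓝 (e11 μ' a))) →
      Tendsto (fun n => wassersteinDist 1 (μ n) μ') atTop (𝓝 0) := by
    intro μ μ' hP hP' hm hm' hpt
    haveI := hP'
    haveI := hP
    exact Stmt15Aux.tendsto_wd_of_pointwise hm hm' hpt
  have bdd : ∀ (μ ν : Measure ℝ), IsProbabilityMeasure μ → IsProbabilityMeasure ν →
      HasFiniteMoment1 μ → HasFiniteMoment1 ν →
      BddAbove (Set.range fun a : ℝ => |e11 μ a - e11 ν a|) := by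
    intro μ ν hμp hνp hμ hν
    haveI := hμp; haveI := hνp
    refine ⟨wassersteinDist 1 μ ν, ?_⟩
    rintro x ⟨a, rfl⟩
    exact Stmt15Aux.abs_e11_diff_le_wd hμ hν a
  have q11_le_wd : ∀ (μ ν : Measure ℝ), IsProbabilityMeasure μ → IsProbabilityMeasure ν →
      HasFiniteMoment1 μ → HasFiniteMoment1 ν →
      q11 μ ν ≤ wassersteinDist 1 μ ν := by
    intro μ ν hμp hνp hμ hν
    haveI := hμp; haveI := hνp
    exact ciSup_le fun a => Stmt15Aux.abs_e11_diff_le_wd hμ hν a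
  have q11_nonneg : ∀ (μ ν : Measure ℝ), IsProbabilityMeasure μ → IsProbabilityMeasure ν →
      HasFiniteMoment1 μ → HasFiniteMoment1 ν → 0 ≤ q11 μ ν := by
    intro μ ν hμp hνp hμ hν
    exact le_trans (abs_nonneg _) (le_ciSup (bdd μ ν hμp hνp hμ hν) 0)
  have abs_le_q11 : ∀ (μ ν : Measure ℝ), IsProbabilityMeasure μ → IsProbabilityMeasure ν →
      HasFiniteMoment1 μ → HasFiniteMoment1 ν →
      ∀ a, |e11 μ a - e11 ν a| ≤ q11 μ ν := by
    intro μ ν hμp hνp hμ hν a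
    exact le_ciSup (bdd μ ν hμp hνp hμ hν) a
  refine ⟨?_, ?_, ?_, ?_, ?_⟩
  · -- part (a)
    intro μ ν hμp hνp hμ hν C h
    haveI := hμp; haveI := hνp
    exact Stmt15Aux.part_a hμ hν C h
  · -- part (b)
    intro μ μ' hP hP' hm hm'
    constructor
    · constructor
      · exact unif_of_wd μ μ' hP hP' hm hm'
      · intro h
        exact wd_of_pointwise μ μ' hP hP' hm hm' (pointwise_of_unif μ μ' h)
    · constructor
      · intro h
        exact pointwise_of_unif μ μ' (unif_of_wd μ μ' hP hP' hm hm' h)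
      · exact wd_of_pointwise μ μ' hP hP' hm hm'
  · -- part (c)
    intro μ ν hμp hνp hμ hν
    haveI := hμp; haveI := hνp
    refine ⟨bdd μ ν hμp hνp hμ hν, ?_, ?_⟩
    · simp only [q11, abs_sub_comm]
    · constructor
      · intro h
        have he : ∀ a : ℝ, e11 μ a = e11 ν a + 0 := by
          intro a
          have h1 := abs_le_q11 μ ν hμp hνp hμ hν a
          rw [h] at h1
          have := abs_nonneg (e11 μ a - e11 ν a)
          have h2 : |e11 μ a - e11 ν a| = 0 := le_antisymm h1 this
          rw [abs_eq_zero] at h2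
          linarith
        exact (Stmt15Aux.part_a hμ hν 0 he).1
      · intro h
        subst h
        simp [q11]
  · -- part (d): triangle inequality
    intro μ ν ρ hμp hνp hρp hμ hν hρ
    refine ciSup_le fun a => ?_
    calc |e11 μ a - e11 ρ a| ≤ |e11 μ a - e11 ν a| + |e11 ν a - e11 ρ a| :=
          abs_sub_le _ _ _
      _ ≤ q11 μ ν + q11 ν ρ :=
          add_le_add (abs_le_q11 μ ν hμp hνp hμ hν a) (abs_le_q11 ν ρ hνp hρp hν hρ a)
  · -- part (e)
    intro μ μ' hP hP' hm hm'
    constructor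
    · intro hq
      refine wd_of_pointwise μ μ' hP hP' hm hm' fun a => ?_
      have hsq : Tendsto (fun n => |e11 (μ n) a - e11 μ' a|) atTop (𝓝 0) :=
        squeeze_zero (fun n => abs_nonneg _)
          (fun n => abs_le_q11 (μ n) μ' (hP n) hP' (hm n) hm' a) hq
      refine tendsto_iff_dist_tendsto_zero.2 ?_
      simpa [Real.dist_eq] using hsq
    · intro hW
      exact squeeze_zero (fun n => q11_nonneg (μ n) μ' (hP n) hP' (hm n) hm')
        (fun n => q11_le_wd (μ n) μ' (hP n) hP' (hm n) hm') hW
end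

section
/- Let p ≥ 4 be an even integer and let μ be a Borel probability measure on ℝ with finite p-th moment that is absolutely continuous with a continuous density f, i.e. μ(dξ) = f(ξ) dξ. Then for all a, b ∈ ℝ with a < b, the function (a, b) ↦ e_{2,p}(μ, (a,b))^p = ∫_ℝ min(|ξ − a|^p, |ξ − b|^p) f(ξ) dξ is twice continuously differentiable at (a, b) and e_{2,p−2}(μ, (a,b))^{p−2} = (1/(p(p−1))) [∂²_{aa} e_{2,p}^p(μ,(a,b)) + ∂²_{bb} e_{2,p}^p(μ,(a,b)) − 2 ∂²_{ab} e_{2,p}^p(μ,(a,b))]. -/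
open MeasureTheory
open scoped ENNReal NNReal

section aux
open Set Finset

/-! ### Combinatorial identities -/

lemma chooseId (n k : ℕ) : ((n - k) * n.choose k) = n * (n-1).choose k := by
  rcases n with _|m
  · simp
  · rcases lt_or_ge m k with h | h
    · have h2 : m.choose k = 0 := Nat.choose_eq_zero_of_lt h
      rcases eq_or_lt_of_le (Nat.succ_le_of_lt h) with rfl | h'
      · simp [h2]
      · simp [Nat.choose_eq_zero_of_lt h', h2]
    · have h1 := Nat.choose_succ_right_eq (m+1) k
      have h2 := Nat.add_one_mul_choose_eq m k
      simp only [Nat.succ_sub_one]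
      calc (m+1-k) * (m+1).choose k = (m+1).choose k * (m+1-k) := mul_comm _ _
        _ = (m+1).choose (k+1) * (k+1) := h1.symm
        _ = (m+1) * m.choose k := h2.symm

lemma chooseId2 (n k : ℕ) : (n-k)*(n-k-1)*n.choose k = n*(n-1)*((n-2).choose k) := by
  have h1 := chooseId n k
  have h2 := chooseId (n-1) k
  have e1 : n-1-k = n-k-1 := by omega
  have e2 : n-1-1 = n-2 := by omega
  calc (n-k)*(n-k-1)*n.choose k = (n-k-1)*((n-k)*n.choose k) := by ring
    _ = (n-k-1)*(n*(n-1).choose k) := by rw [h1]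
    _ = n*((n-1-k)*(n-1).choose k) := by rw [e1]; ring
    _ = n*((n-1)*(n-2).choose k) := by rw [h2, e2]
    _ = n*(n-1)*(n-2).choose k := by ring

noncomputable def ekf (n k : ℕ) (s : ℝ) : ℝ := -(((n-k) : ℕ) : ℝ) * (-s)^(n-k-1)
noncomputable def e2f (n k : ℕ) (s : ℝ) : ℝ := (((n-k)*(n-k-1) : ℕ) : ℝ) * (-s)^(n-k-2)

lemma Bsum (n : ℕ) (s x : ℝ) :
    ∑ k ∈ Finset.range (n+1), (n.choose k : ℝ) * (-s)^(n-k) * x^k = (x - s)^n := by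
  rw [sub_eq_add_neg, add_pow]
  apply Finset.sum_congr rfl
  intro k hk
  ring

lemma Dsum (n : ℕ) (s : ℝ) (x : ℝ) :
    ∑ k ∈ Finset.range (n+1), (n.choose k : ℝ) * ekf n k s * x^k
      = -(n:ℝ) * (x - s)^(n-1) := by
  rcases n with _|q
  · simp [ekf]
  · rw [Finset.sum_range_succ]
    have hlast : (((q+1).choose (q+1) : ℕ) : ℝ) * ekf (q+1) (q+1) s * x^(q+1) = 0 := by
      simp [ekf]
    rw [hlast, add_zero]
    have hterm : ∀ k ∈ Finset.range (q+1),
        ((q+1).choose k : ℝ) * ekf (q+1) k s * x^k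
          = -((q:ℝ)+1) * ((q.choose k : ℝ) * (-s)^(q-k) * x^k) := by
      intro k hk
      have h1 := chooseId (q+1) k
      simp only [Nat.add_sub_cancel] at h1
      have hc : ((q+1-k : ℕ) : ℝ) * ((q+1).choose k : ℝ) = ((q:ℝ)+1) * (q.choose k : ℝ) := by
        exact_mod_cast congrArg (Nat.cast (R := ℝ)) h1
      have he : q+1-k-1 = q-k := by omega
      simp only [ekf, he]
      linear_combination (-((-s)^(q-k) * x^k)) * hc
    rw [Finset.sum_congr rfl hterm, ← Finset.mul_sum, Bsum q s x]
    simp only [Nat.add_sub_cancel]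
    push_cast
    ring

lemma E2sum (n : ℕ) (hn : 2 ≤ n) (s : ℝ) (u : ℕ → ℝ) :
    ∑ k ∈ Finset.range (n+1), (n.choose k : ℝ) * e2f n k s * u k
      = (n:ℝ) * ((n:ℝ)-1) * ∑ k ∈ Finset.range (n-1), ((n-2).choose k : ℝ) * (-s)^(n-2-k) * u k := by
  obtain ⟨q, rfl⟩ : ∃ q, n = q + 2 := ⟨n - 2, by omega⟩
  rw [Finset.sum_range_succ, Finset.sum_range_succ]
  have h1 : (((q+2).choose (q+2) : ℕ) : ℝ) * e2f (q+2) (q+2) s * u (q+2) = 0 := by simp [e2f]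
  have h2 : (((q+2).choose (q+1) : ℕ) : ℝ) * e2f (q+2) (q+1) s * u (q+1) = 0 := by
    simp [e2f, show q+2-(q+1) = 1 by omega]
  rw [h1, h2, add_zero, add_zero]
  have he : q + 2 - 1 = q + 1 := by omega
  have he2 : q + 2 - 2 = q := by omega
  rw [he, he2, Finset.mul_sum]
  apply Finset.sum_congr rfl
  intro k hk
  have hc := chooseId2 (q+2) k
  have hcc : ((q+2-k : ℕ) : ℝ) * ((q+2-k-1 : ℕ) : ℝ) * ((q+2).choose k : ℝ)
      = ((q:ℝ)+2) * ((q:ℝ)+1) * (q.choose k : ℝ) := by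
    have := congrArg (Nat.cast (R := ℝ)) hc
    push_cast [he2, he] at this
    convert this using 2 <;> push_cast <;> ring
  have hee : q+2-k-2 = q-k := by omega
  simp only [e2f, hee]
  push_cast
  linear_combination ((-s)^(q-k) * u k) * hcc

/-! ### The moment functions -/

noncomputable def Mf (f : ℝ → ℝ) (k : ℕ) (c : ℝ) : ℝ := ∫ ξ in Set.Iic c, ξ ^ k * f ξ
noncomputable def muf (f : ℝ → ℝ) (k : ℕ) : ℝ := ∫ ξ, ξ ^ k * f ξ

lemma Mf_hasDerivAt (f : ℝ → ℝ) (hf_cont : Continuous f) (k : ℕ)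
    (hk : Integrable (fun ξ => ξ ^ k * f ξ)) (c : ℝ) :
    HasDerivAt (Mf f k) (c ^ k * f c) c := by
  set g : ℝ → ℝ := fun ξ => ξ ^ k * f ξ with hg
  have hgc : Continuous g := (continuous_pow k).mul hf_cont
  have heq : Mf f k = fun c => (∫ ξ in Set.Iic (0:ℝ), g ξ) + ∫ ξ in (0:ℝ)..c, g ξ := by
    funext c
    have := intervalIntegral.integral_Iic_sub_Iic (hk.integrableOn) (hk.integrableOn)
      (a := (0:ℝ)) (b := c)
    simp only [Mf]
    linarith [this]
  rw [heq]
  have hd : HasDerivAt (fun c => ∫ ξ in (0:ℝ)..c, g ξ) (g c) c :=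
    intervalIntegral.integral_hasDerivAt_right hk.intervalIntegrable
      (hgc.stronglyMeasurableAtFilter _ _) hgc.continuousAt
  simpa using hd.const_add (∫ ξ in Set.Iic (0:ℝ), g ξ)

lemma Mf_contDiffOne (f : ℝ → ℝ) (hf_cont : Continuous f) (k : ℕ)
    (hk : Integrable (fun ξ => ξ ^ k * f ξ)) : ContDiff ℝ 1 (Mf f k) := by
  rw [contDiff_one_iff_deriv]
  constructor
  · exact fun c => (Mf_hasDerivAt f hf_cont k hk c).differentiableAt
  · have : deriv (Mf f k) = fun c => c ^ k * f c :=
      funext fun c => (Mf_hasDerivAt f hf_cont k hk c).deriv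
    rw [this]; exact (continuous_pow k).mul hf_cont

lemma intPow (f : ℝ → ℝ) (p : ℕ) (hint : ∀ k ≤ p, Integrable (fun ξ => ξ ^ k * f ξ))
    (n : ℕ) (hn : n ≤ p) (s : ℝ) : Integrable (fun ξ => (ξ - s) ^ n * f ξ) := by
  have heq : (fun ξ => (ξ - s) ^ n * f ξ)
      = fun ξ => ∑ k ∈ Finset.range (n+1), ((n.choose k : ℝ) * (-s)^(n-k)) * (ξ ^ k * f ξ) := by
    funext ξ
    rw [← Bsum n s ξ, Finset.sum_mul]
    apply Finset.sum_congr rfl; intros; ring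
  rw [heq]
  exact integrable_finset_sum _ fun k hk =>
    ((hint k (le_trans (Nat.lt_succ_iff.mp (Finset.mem_range.mp hk)) hn)).const_mul _)

/-! ### Density / measure facts -/

lemma integral_density (f : ℝ → ℝ) (hf_cont : Continuous f) (hf_nonneg : ∀ ξ, 0 ≤ f ξ)
    (h : ℝ → ℝ) :
    ∫ ξ, h ξ ∂(MeasureTheory.volume.withDensity fun ξ => ENNReal.ofReal (f ξ))
      = ∫ ξ, f ξ * h ξ := by
  have hmeas : Measurable fun ξ => (f ξ).toNNReal :=
    hf_cont.measurable.real_toNNReal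
  have h0 : (fun ξ => ENNReal.ofReal (f ξ)) = fun ξ => ((f ξ).toNNReal : ℝ≥0∞) := rfl
  rw [h0, integral_withDensity_eq_integral_smul hmeas]
  congr 1
  funext ξ
  simp [NNReal.smul_def, Real.coe_toNNReal _ (hf_nonneg ξ)]

lemma f_integrable (f : ℝ → ℝ) (hf_cont : Continuous f) (hf_nonneg : ∀ ξ, 0 ≤ f ξ)
    (hprob : IsProbabilityMeasure
      (MeasureTheory.volume.withDensity fun ξ => ENNReal.ofReal (f ξ))) :
    Integrable f := by
  refine ⟨hf_cont.aestronglyMeasurable, ?_⟩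
  have h1 : (MeasureTheory.volume.withDensity fun ξ => ENNReal.ofReal (f ξ)) Set.univ = 1 :=
    hprob.measure_univ
  rw [MeasureTheory.withDensity_apply _ MeasurableSet.univ, Measure.restrict_univ] at h1
  rw [MeasureTheory.hasFiniteIntegral_def]
  have h2 : ∀ ξ, ‖f ξ‖ₑ = ENNReal.ofReal (f ξ) := fun ξ =>
    (Real.enorm_eq_ofReal (hf_nonneg ξ))
  simp only [h2, h1]
  exact ENNReal.one_lt_top

lemma mom_integrable (p : ℕ) (f : ℝ → ℝ) (hf_cont : Continuous f) (hf_nonneg : ∀ ξ, 0 ≤ f ξ)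
    (hmom : ∫⁻ ξ, (‖ξ‖₊ : ℝ≥0∞) ^ (p : ℝ)
        ∂(MeasureTheory.volume.withDensity fun ξ => ENNReal.ofReal (f ξ)) ≠ ∞) :
    Integrable (fun ξ => |ξ| ^ p * f ξ) := by
  refine ⟨((continuous_abs.pow p).mul hf_cont).aestronglyMeasurable, ?_⟩
  simp only [ENNReal.rpow_natCast] at hmom
  rw [MeasureTheory.lintegral_withDensity_eq_lintegral_mul _
    hf_cont.measurable.ennreal_ofReal
    ((measurable_nnnorm.coe_nnreal_ennreal).pow_const _)] at hmom
  rw [MeasureTheory.hasFiniteIntegral_def]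
  have heq : ∀ ξ : ℝ, ‖|ξ| ^ p * f ξ‖ₑ
      = (ENNReal.ofReal (f ξ)) * ((‖ξ‖₊ : ℝ≥0∞) ^ p) := by
    intro ξ
    rw [Real.enorm_eq_ofReal (mul_nonneg (by positivity) (hf_nonneg ξ)),
      ENNReal.ofReal_mul (by positivity),
      ENNReal.ofReal_pow (abs_nonneg ξ), mul_comm]
    congr 2
    rw [← Real.enorm_eq_ofReal (abs_nonneg ξ)]
    simp; rfl
  simp only [heq]
  exact lt_top_iff_ne_top.mpr hmom

lemma hint_all (p : ℕ) (f : ℝ → ℝ) (hf_cont : Continuous f) (hf_nonneg : ∀ ξ, 0 ≤ f ξ)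
    (hf : Integrable f) (hm : Integrable (fun ξ => |ξ| ^ p * f ξ)) :
    ∀ k ≤ p, Integrable (fun ξ => ξ ^ k * f ξ) := by
  intro k hk
  refine Integrable.mono' (g := fun ξ => f ξ + |ξ| ^ p * f ξ) (hf.add hm)
    ((continuous_pow k).mul hf_cont).aestronglyMeasurable ?_
  filter_upwards with ξ
  have h1 : |ξ| ^ k ≤ 1 + |ξ| ^ p := by
    rcases le_or_gt (|ξ|) 1 with h | h
    · have := pow_le_one₀ (abs_nonneg ξ) h (n := k)
      nlinarith [pow_nonneg (abs_nonneg ξ) p]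
    · have := pow_le_pow_right₀ (le_of_lt h) hk
      nlinarith
  have h2 : ‖ξ ^ k * f ξ‖ = |ξ| ^ k * f ξ := by
    rw [Real.norm_eq_abs, abs_mul, abs_pow, abs_of_nonneg (hf_nonneg ξ)]
  rw [h2]
  nlinarith [hf_nonneg ξ, pow_nonneg (abs_nonneg ξ) p, pow_nonneg (abs_nonneg ξ) k]

/-! ### Integral splitting identities -/

lemma Ssum (f : ℝ → ℝ) (p : ℕ) (hint : ∀ k ≤ p, Integrable (fun ξ => ξ ^ k * f ξ))
    (n : ℕ) (hn : n ≤ p) (s c : ℝ) :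
    ∫ ξ in Set.Iic c, (ξ - s) ^ n * f ξ
      = ∑ k ∈ Finset.range (n+1), (n.choose k : ℝ) * (-s)^(n-k) * Mf f k c := by
  have heq : ∀ ξ : ℝ, (ξ - s) ^ n * f ξ
      = ∑ k ∈ Finset.range (n+1), ((n.choose k : ℝ) * (-s)^(n-k)) * (ξ ^ k * f ξ) := by
    intro ξ
    rw [← Bsum n s ξ, Finset.sum_mul]
    apply Finset.sum_congr rfl; intros; ring
  rw [MeasureTheory.integral_congr_ae (Filter.Eventually.of_forall heq),
    MeasureTheory.integral_finset_sum]
  · apply Finset.sum_congr rfl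
    intro k hk
    rw [MeasureTheory.integral_const_mul]
    simp [Mf, mul_assoc]
  · intro k hk
    exact ((hint k (by have := Finset.mem_range.mp hk; omega)).integrableOn.const_mul _)

lemma Tsum (f : ℝ → ℝ) (p : ℕ) (hint : ∀ k ≤ p, Integrable (fun ξ => ξ ^ k * f ξ))
    (n : ℕ) (hn : n ≤ p) (s c : ℝ) :
    ∫ ξ in Set.Ioi c, (ξ - s) ^ n * f ξ
      = ∑ k ∈ Finset.range (n+1), (n.choose k : ℝ) * (-s)^(n-k) * (muf f k - Mf f k c) := by
  have heq : ∀ ξ : ℝ, (ξ - s) ^ n * f ξ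
      = ∑ k ∈ Finset.range (n+1), ((n.choose k : ℝ) * (-s)^(n-k)) * (ξ ^ k * f ξ) := by
    intro ξ
    rw [← Bsum n s ξ, Finset.sum_mul]
    apply Finset.sum_congr rfl; intros; ring
  rw [MeasureTheory.integral_congr_ae (Filter.Eventually.of_forall heq),
    MeasureTheory.integral_finset_sum]
  · apply Finset.sum_congr rfl
    intro k hk
    have hki : k ≤ p := by have := Finset.mem_range.mp hk; omega
    rw [MeasureTheory.integral_const_mul]
    have hsplit : Mf f k c + (∫ ξ in Set.Ioi c, ξ ^ k * f ξ) = muf f k :=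
      intervalIntegral.integral_Iic_add_Ioi (hint k hki).integrableOn (hint k hki).integrableOn
    have h3 : (∫ ξ in Set.Ioi c, ξ ^ k * f ξ) = muf f k - Mf f k c := by linarith
    rw [h3]
  · intro k hk
    exact ((hint k (by have := Finset.mem_range.mp hk; omega)).integrableOn.const_mul _)

lemma minSplit (f : ℝ → ℝ) (hf_cont : Continuous f) (hf_nonneg : ∀ ξ, 0 ≤ f ξ)
    (p : ℕ) (hIP : ∀ n ≤ p, ∀ s : ℝ, Integrable (fun ξ => (ξ - s) ^ n * f ξ))
    (n : ℕ) (hn : n ≤ p) (hne : Even n) (s t : ℝ) (hst : s < t) :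
    ∫ ξ, f ξ * min (|ξ - s| ^ n) (|ξ - t| ^ n)
      = (∫ ξ in Set.Iic ((s+t)/2), (ξ - s) ^ n * f ξ)
        + ∫ ξ in Set.Ioi ((s+t)/2), (ξ - t) ^ n * f ξ := by
  set m := (s+t)/2 with hm
  have hminint : Integrable (fun ξ => f ξ * min (|ξ - s| ^ n) (|ξ - t| ^ n)) := by
    refine Integrable.mono' (g := fun ξ => (ξ - s) ^ n * f ξ + (ξ - t) ^ n * f ξ)
      ((hIP n hn s).add (hIP n hn t))
      (hf_cont.mul (((continuous_abs.comp (continuous_id.sub continuous_const)).pow n).min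
        ((continuous_abs.comp (continuous_id.sub continuous_const)).pow n))).aestronglyMeasurable ?_
    filter_upwards with ξ
    have h1 : 0 ≤ min (|ξ - s| ^ n) (|ξ - t| ^ n) := le_min (by positivity) (by positivity)
    rw [Real.norm_eq_abs, abs_of_nonneg (mul_nonneg (hf_nonneg ξ) h1)]
    have h2 : min (|ξ - s| ^ n) (|ξ - t| ^ n) ≤ |ξ - s| ^ n := min_le_left _ _
    have h3 : (ξ - s) ^ n = |ξ - s| ^ n := (hne.pow_abs _).symm
    have h4 : (ξ - t) ^ n = |ξ - t| ^ n := (hne.pow_abs _).symm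
    nlinarith [hf_nonneg ξ, pow_nonneg (abs_nonneg (ξ - t)) n, h1,
      mul_le_mul_of_nonneg_left h2 (hf_nonneg ξ)]
  rw [← MeasureTheory.integral_add_compl (measurableSet_Iic (a := m)) hminint, compl_Iic]
  congr 1
  · apply MeasureTheory.setIntegral_congr_fun (measurableSet_Iic)
    intro ξ hξ
    simp only
    have habs : |ξ - s| ≤ |ξ - t| := by
      have hξm : ξ ≤ m := hξ
      rcases abs_cases (ξ - s) with ⟨e1, _⟩ | ⟨e1, _⟩ <;>
        rcases abs_cases (ξ - t) with ⟨e2, _⟩ | ⟨e2, _⟩ <;> rw [e1, e2] <;>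
        simp only [hm] at hξm <;> linarith
    rw [min_eq_left (pow_le_pow_left₀ (abs_nonneg _) habs n), hne.pow_abs]
    ring
  · apply MeasureTheory.setIntegral_congr_fun (measurableSet_Ioi)
    intro ξ hξ
    simp only
    have habs : |ξ - t| ≤ |ξ - s| := by
      have hξm : m < ξ := hξ
      rcases abs_cases (ξ - s) with ⟨e1, _⟩ | ⟨e1, _⟩ <;>
        rcases abs_cases (ξ - t) with ⟨e2, _⟩ | ⟨e2, _⟩ <;> rw [e1, e2] <;>
        simp only [hm] at hξm <;> linarith
    rw [min_eq_right (pow_le_pow_left₀ (abs_nonneg _) habs n), hne.pow_abs]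
    ring

/-! ### The smooth extension `Phi` and its derivatives -/

noncomputable def Phi (f : ℝ → ℝ) (p : ℕ) (y : ℝ × ℝ) : ℝ :=
  ∑ k ∈ Finset.range (p+1), (p.choose k : ℝ) *
    ((-y.1)^(p-k) * Mf f k ((y.1+y.2)/2) + (-y.2)^(p-k) * (muf f k - Mf f k ((y.1+y.2)/2)))

noncomputable def Phi1 (f : ℝ → ℝ) (p : ℕ) (y : ℝ × ℝ) : ℝ :=
  ∑ k ∈ Finset.range (p+1), (p.choose k : ℝ) * (ekf p k y.1 * Mf f k ((y.1+y.2)/2))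

noncomputable def Phi2 (f : ℝ → ℝ) (p : ℕ) (y : ℝ × ℝ) : ℝ :=
  ∑ k ∈ Finset.range (p+1), (p.choose k : ℝ) *
    (ekf p k y.2 * (muf f k - Mf f k ((y.1+y.2)/2)))

lemma hasDerivAt_negpow (m : ℕ) (s : ℝ) :
    HasDerivAt (fun u : ℝ => (-u)^m) (-((m : ℕ) : ℝ) * (-s)^(m-1)) s := by
  have h := (hasDerivAt_pow m (-s)).comp s (hasDerivAt_neg s)
  exact h.congr_deriv (by ring)

lemma hasDerivAt_ekf (n k : ℕ) (s : ℝ) :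
    HasDerivAt (fun u : ℝ => ekf n k u) (e2f n k s) s := by
  have h := (hasDerivAt_negpow (n-k-1) s).const_mul (-(((n-k) : ℕ) : ℝ))
  refine h.congr_deriv ?_
  simp only [e2f]
  push_cast
  rw [show n - k - 1 - 1 = n - k - 2 by omega]
  ring

noncomputable def Lmid : ℝ × ℝ →L[ℝ] ℝ :=
  (1/2 : ℝ) • ((ContinuousLinearMap.fst ℝ ℝ ℝ) + (ContinuousLinearMap.snd ℝ ℝ ℝ))

lemma hasFDerivAt_mid (y : ℝ × ℝ) :
    HasFDerivAt (fun y : ℝ × ℝ => (y.1 + y.2)/2) Lmid y := by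
  exact Lmid.hasFDerivAt.congr_of_eventuallyEq (Filter.Eventually.of_forall fun z => by
    simp [Lmid, ContinuousLinearMap.smul_apply, ContinuousLinearMap.add_apply]
    ring)

lemma keyA (f : ℝ → ℝ) (hf_cont : Continuous f) (p : ℕ) (hpeven : Even p)
    (hint : ∀ k ≤ p, Integrable (fun ξ => ξ ^ k * f ξ)) (y : ℝ × ℝ) :
    HasFDerivAt (Phi f p)
      ((Phi1 f p y) • (ContinuousLinearMap.fst ℝ ℝ ℝ)
        + (Phi2 f p y) • (ContinuousLinearMap.snd ℝ ℝ ℝ)) y := by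
  obtain ⟨s, t⟩ := y
  set m := (s + t)/2 with hm
  have hD : HasFDerivAt (Phi f p)
      (∑ k ∈ Finset.range (p+1), (p.choose k : ℝ) •
        (((-s)^(p-k) • ((m^k * f m) • Lmid)
            + (Mf f k m) • (ekf p k s • (ContinuousLinearMap.fst ℝ ℝ ℝ)))
         + ((-t)^(p-k) • (-((m^k * f m) • Lmid))
            + (muf f k - Mf f k m) • (ekf p k t • (ContinuousLinearMap.snd ℝ ℝ ℝ))))) (s, t) := by
    apply HasFDerivAt.fun_sum
    intro k hk
    have hki : k ≤ p := by have := Finset.mem_range.mp hk; omega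
    have hMc : HasFDerivAt (fun y : ℝ × ℝ => Mf f k ((y.1+y.2)/2)) ((m^k * f m) • Lmid) (s, t) := by
      have := (Mf_hasDerivAt f hf_cont k (hint k hki) m).comp_hasFDerivAt (s, t) (hasFDerivAt_mid (s, t)); exact this
    have hp1 : HasFDerivAt (fun y : ℝ × ℝ => (-y.1)^(p-k))
        (ekf p k s • (ContinuousLinearMap.fst ℝ ℝ ℝ)) (s, t) := by
      have := (hasDerivAt_negpow (p-k) s).comp_hasFDerivAt (s, t) (hasFDerivAt_fst (𝕜 := ℝ) (E := ℝ) (F := ℝ) (p := (s, t))); exact this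
    have hp2 : HasFDerivAt (fun y : ℝ × ℝ => (-y.2)^(p-k))
        (ekf p k t • (ContinuousLinearMap.snd ℝ ℝ ℝ)) (s, t) := by
      have := (hasDerivAt_negpow (p-k) t).comp_hasFDerivAt (s, t) (hasFDerivAt_snd (𝕜 := ℝ) (E := ℝ) (F := ℝ) (p := (s, t))); exact this
    have hsub : HasFDerivAt (fun y : ℝ × ℝ => muf f k - Mf f k ((y.1+y.2)/2))
        (-((m^k * f m) • Lmid)) (s, t) := hMc.const_sub _
    exact ((hp1.mul hMc).add (hp2.mul hsub)).const_mul _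
  convert hD using 1
  apply ContinuousLinearMap.ext
  intro v
  obtain ⟨v1, v2⟩ := v
  have hLm : Lmid (v1, v2) = (v1 + v2)/2 := by
    simp [Lmid, smul_eq_mul]; ring
  simp only [ContinuousLinearMap.add_apply, ContinuousLinearMap.smul_apply,
    ContinuousLinearMap.sum_apply, ContinuousLinearMap.neg_apply,
    ContinuousLinearMap.coe_fst', ContinuousLinearMap.coe_snd', hLm, smul_eq_mul]
  have keq : (m - s)^p = (m - t)^p := by
    have hms : m - s = -(m - t) := by rw [hm]; ring
    rw [hms, hpeven.neg_pow]
  have expand : ∀ k ∈ Finset.range (p+1),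
      (p.choose k : ℝ) * ((-s)^(p-k) * (m^k * f m * ((v1+v2)/2))
        + Mf f k m * (ekf p k s * v1)
        + ((-t)^(p-k) * -(m^k * f m * ((v1+v2)/2))
        + (muf f k - Mf f k m) * (ekf p k t * v2)))
      = ((p.choose k : ℝ) * (ekf p k s * Mf f k m) * v1
          + (p.choose k : ℝ) * (ekf p k t * (muf f k - Mf f k m)) * v2)
        + (f m * ((v1+v2)/2)) * ((p.choose k : ℝ) * (-s)^(p-k) * m^k)
        - (f m * ((v1+v2)/2)) * ((p.choose k : ℝ) * (-t)^(p-k) * m^k) := by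
    intro k hk; ring
  rw [Finset.sum_congr rfl expand]
  rw [Finset.sum_sub_distrib, Finset.sum_add_distrib, ← Finset.mul_sum, ← Finset.mul_sum,
    Bsum p s m, Bsum p t m, keq, Finset.sum_add_distrib, ← Finset.sum_mul, ← Finset.sum_mul]
  simp only [Phi1, Phi2]
  ring

lemma contDiff_mid : ContDiff ℝ 1 (fun y : ℝ × ℝ => (y.1 + y.2)/2) :=
  (contDiff_fst.add contDiff_snd).div_const 2

lemma Phi1_contDiff (f : ℝ → ℝ) (hf_cont : Continuous f) (p : ℕ)
    (hint : ∀ k ≤ p, Integrable (fun ξ => ξ ^ k * f ξ)) :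
    ContDiff ℝ 1 (Phi1 f p) := by
  apply ContDiff.sum
  intro k hk
  have hki : k ≤ p := by have := Finset.mem_range.mp hk; omega
  have h1 : ContDiff ℝ 1 (fun y : ℝ × ℝ => ekf p k y.1) :=
    contDiff_const.mul ((contDiff_fst.neg).pow _)
  have h2 : ContDiff ℝ 1 (fun y : ℝ × ℝ => Mf f k ((y.1+y.2)/2)) :=
    (Mf_contDiffOne f hf_cont k (hint k hki)).comp contDiff_mid
  exact contDiff_const.mul (h1.mul h2)

lemma Phi2_contDiff (f : ℝ → ℝ) (hf_cont : Continuous f) (p : ℕ)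
    (hint : ∀ k ≤ p, Integrable (fun ξ => ξ ^ k * f ξ)) :
    ContDiff ℝ 1 (Phi2 f p) := by
  apply ContDiff.sum
  intro k hk
  have hki : k ≤ p := by have := Finset.mem_range.mp hk; omega
  have h1 : ContDiff ℝ 1 (fun y : ℝ × ℝ => ekf p k y.2) :=
    contDiff_const.mul ((contDiff_snd.neg).pow _)
  have h2 : ContDiff ℝ 1 (fun y : ℝ × ℝ => muf f k - Mf f k ((y.1+y.2)/2)) :=
    contDiff_const.sub ((Mf_contDiffOne f hf_cont k (hint k hki)).comp contDiff_mid)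
  exact contDiff_const.mul (h1.mul h2)

lemma Phi_contDiffTwo (f : ℝ → ℝ) (hf_cont : Continuous f) (p : ℕ) (hpeven : Even p)
    (hint : ∀ k ≤ p, Integrable (fun ξ => ξ ^ k * f ξ)) :
    ContDiff ℝ 2 (Phi f p) := by
  rw [show (2 : WithTop ℕ∞) = 1 + 1 from rfl, contDiff_succ_iff_fderiv]
  refine ⟨fun y => (keyA f hf_cont p hpeven hint y).differentiableAt, ?_, ?_⟩
  · intro h; exact absurd h (by norm_num)
  · have : fderiv ℝ (Phi f p) = fun y =>
        (Phi1 f p y) • (ContinuousLinearMap.fst ℝ ℝ ℝ)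
          + (Phi2 f p y) • (ContinuousLinearMap.snd ℝ ℝ ℝ) :=
      funext fun y => (keyA f hf_cont p hpeven hint y).fderiv
    rw [this]
    exact ((Phi1_contDiff f hf_cont p hint).smul contDiff_const).add
      ((Phi2_contDiff f hf_cont p hint).smul contDiff_const)

lemma inner1 (f : ℝ → ℝ) (hf_cont : Continuous f) (p : ℕ) (hpeven : Even p)
    (hint : ∀ k ≤ p, Integrable (fun ξ => ξ ^ k * f ξ)) (s t : ℝ) :
    HasDerivAt (fun u => Phi f p (u, t)) (Phi1 f p (s, t)) s := by
  have h := (keyA f hf_cont p hpeven hint (s, t)).comp_hasDerivAt s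
    ((hasDerivAt_id s).prodMk (hasDerivAt_const s t))
  refine h.congr_deriv ?_
  simp [ContinuousLinearMap.add_apply, ContinuousLinearMap.smul_apply]

lemma inner2 (f : ℝ → ℝ) (hf_cont : Continuous f) (p : ℕ) (hpeven : Even p)
    (hint : ∀ k ≤ p, Integrable (fun ξ => ξ ^ k * f ξ)) (s t : ℝ) :
    HasDerivAt (fun u => Phi f p (s, u)) (Phi2 f p (s, t)) t := by
  have h := (keyA f hf_cont p hpeven hint (s, t)).comp_hasDerivAt t
    ((hasDerivAt_const t s).prodMk (hasDerivAt_id t))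
  refine h.congr_deriv ?_
  simp [ContinuousLinearMap.add_apply, ContinuousLinearMap.smul_apply]

end aux


/-- for an even integer `p ≥ 4` and an absolutely continuous probability measure
`μ = f·λ` on `ℝ` with continuous density `f` and finite `p`-th moment, the function
`F(a,b) = e_{2,p}(μ,(a,b))^p = ∫ min(|ξ−a|^p, |ξ−b|^p) dμ` is twice continuously
differentiable at every `(a, b)` with `a < b`, and
`e_{2,p−2}(μ,(a,b))^{p−2} = (1/(p(p−1))) (∂²_{aa}F + ∂²_{bb}F − 2 ∂²_{ab}F)` at `(a, b)`. -/
theorem stmt16 (p : ℕ) (hp : 4 ≤ p) (hpeven : Even p)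
    (f : ℝ → ℝ) (hf_cont : Continuous f) (hf_nonneg : ∀ ξ, 0 ≤ f ξ)
    (μ : Measure ℝ)
    (hμ : μ = MeasureTheory.volume.withDensity fun ξ => ENNReal.ofReal (f ξ))
    (hprob : IsProbabilityMeasure μ)
    (hmom : ∫⁻ ξ, (‖ξ‖₊ : ℝ≥0∞) ^ (p : ℝ) ∂μ ≠ ∞)
    (F : ℝ × ℝ → ℝ)
    (hF : F = fun q => ∫ ξ, min (|ξ - q.1| ^ p) (|ξ - q.2| ^ p) ∂μ)
    (a b : ℝ) (hab : a < b) :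
    ContDiffAt ℝ 2 F (a, b) ∧
    (∫ ξ, min (|ξ - a| ^ (p - 2)) (|ξ - b| ^ (p - 2)) ∂μ) =
      (1 / ((p : ℝ) * ((p : ℝ) - 1))) *
        (deriv (fun s => deriv (fun t => F (t, b)) s) a +
          deriv (fun s => deriv (fun t => F (a, t)) s) b -
          2 * deriv (fun s => deriv (fun t => F (s, t)) b) a) := by
  subst hμ
  subst hF
  -- integrability facts
  have hfint : Integrable f := f_integrable f hf_cont hf_nonneg hprob
  have hmint : Integrable (fun ξ => |ξ| ^ p * f ξ) :=
    mom_integrable p f hf_cont hf_nonneg hmom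
  have hint : ∀ k ≤ p, Integrable (fun ξ => ξ ^ k * f ξ) :=
    hint_all p f hf_cont hf_nonneg hfint hmint
  have hIP : ∀ n ≤ p, ∀ s : ℝ, Integrable (fun ξ => (ξ - s) ^ n * f ξ) :=
    intPow f p hint
  set F := (fun q : ℝ × ℝ =>
    ∫ ξ, min (|ξ - q.1| ^ p) (|ξ - q.2| ^ p)
      ∂(MeasureTheory.volume.withDensity fun ξ => ENNReal.ofReal (f ξ))) with hFdef
  -- F agrees with Phi on the open region s < t
  have hFPhi : ∀ s t : ℝ, s < t → F (s, t) = Phi f p (s, t) := by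
    intro s t hst
    rw [hFdef]
    simp only
    rw [integral_density f hf_cont hf_nonneg,
      minSplit f hf_cont hf_nonneg p hIP p le_rfl hpeven s t hst,
      Ssum f p hint p le_rfl s ((s+t)/2), Tsum f p hint p le_rfl t ((s+t)/2)]
    simp only [Phi]
    rw [← Finset.sum_add_distrib]
    apply Finset.sum_congr rfl
    intro k hk
    ring
  have hopen : IsOpen {y : ℝ × ℝ | y.1 < y.2} := isOpen_lt continuous_fst continuous_snd
  have hmemab : {y : ℝ × ℝ | y.1 < y.2} ∈ nhds (a, b) := hopen.mem_nhds hab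
  have hev : F =ᶠ[nhds (a, b)] Phi f p :=
    Filter.eventuallyEq_of_mem hmemab (fun y hy => by
      have := hFPhi y.1 y.2 hy
      simpa using this)
  constructor
  · exact ((Phi_contDiffTwo f hf_cont p hpeven hint).contDiffAt).congr_of_eventuallyEq hev
  · -- the second-derivative identity
    set m₀ := (a + b)/2 with hm₀
    -- outer derivative O1
    have O1 : HasDerivAt (fun s => Phi1 f p (s, b))
        (∑ k ∈ Finset.range (p+1), (p.choose k : ℝ) *
          (e2f p k a * Mf f k m₀ + ekf p k a * (m₀^k * f m₀ * (1/2)))) a := by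
      apply HasDerivAt.fun_sum
      intro k hk
      have hki : k ≤ p := by have := Finset.mem_range.mp hk; omega
      have hMk : HasDerivAt (fun s => Mf f k ((s + b)/2)) (m₀^k * f m₀ * (1/2)) a := by
        have h := (Mf_hasDerivAt f hf_cont k (hint k hki) m₀).comp a
          (((hasDerivAt_id a).add_const b).div_const 2)
        exact h
      exact ((hasDerivAt_ekf p k a).mul hMk).const_mul _
    have O2 : HasDerivAt (fun t => Phi2 f p (a, t))
        (∑ k ∈ Finset.range (p+1), (p.choose k : ℝ) *
          (e2f p k b * (muf f k - Mf f k m₀) + ekf p k b * (-(m₀^k * f m₀ * (1/2))))) b := by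
      apply HasDerivAt.fun_sum
      intro k hk
      have hki : k ≤ p := by have := Finset.mem_range.mp hk; omega
      have hMk : HasDerivAt (fun t => muf f k - Mf f k ((a + t)/2))
          (-(m₀^k * f m₀ * (1/2))) b := by
        have h := (Mf_hasDerivAt f hf_cont k (hint k hki) m₀).comp b
          (((hasDerivAt_id b).const_add a).div_const 2)
        have h2 := h.const_sub (muf f k)
        simpa [hm₀] using h2
      exact ((hasDerivAt_ekf p k b).mul hMk).const_mul _
    have O3 : HasDerivAt (fun s => Phi2 f p (s, b))
        (∑ k ∈ Finset.range (p+1), (p.choose k : ℝ) *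
          (ekf p k b * (-(m₀^k * f m₀ * (1/2))))) a := by
      apply HasDerivAt.fun_sum
      intro k hk
      have hki : k ≤ p := by have := Finset.mem_range.mp hk; omega
      have hMk : HasDerivAt (fun s => muf f k - Mf f k ((s + b)/2))
          (-(m₀^k * f m₀ * (1/2))) a := by
        have h := (Mf_hasDerivAt f hf_cont k (hint k hki) m₀).comp a
          (((hasDerivAt_id a).add_const b).div_const 2)
        have h2 := h.const_sub (muf f k)
        simpa [hm₀] using h2
      exact (hMk.const_mul (ekf p k b)).const_mul _
    -- transfer the iterated derivatives of F to the explicit values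
    have claim1 : (fun s => deriv (fun t => F (t, b)) s) =ᶠ[nhds a]
        (fun s => Phi1 f p (s, b)) := by
      filter_upwards [isOpen_Iio.mem_nhds (show a ∈ Set.Iio b from hab)] with s hs
      have h1 : (fun t => F (t, b)) =ᶠ[nhds s] (fun t => Phi f p (t, b)) :=
        Filter.eventuallyEq_of_mem (isOpen_Iio.mem_nhds hs) (fun t ht => hFPhi t b ht)
      rw [h1.deriv_eq]
      exact (inner1 f hf_cont p hpeven hint s b).deriv
    have claim2 : (fun u => deriv (fun t => F (a, t)) u) =ᶠ[nhds b]
        (fun u => Phi2 f p (a, u)) := by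
      filter_upwards [isOpen_Ioi.mem_nhds (show b ∈ Set.Ioi a from hab)] with u hu
      have h1 : (fun t => F (a, t)) =ᶠ[nhds u] (fun t => Phi f p (a, t)) :=
        Filter.eventuallyEq_of_mem (isOpen_Ioi.mem_nhds hu) (fun t ht => hFPhi a t ht)
      rw [h1.deriv_eq]
      exact (inner2 f hf_cont p hpeven hint a u).deriv
    have claim3 : (fun s => deriv (fun t => F (s, t)) b) =ᶠ[nhds a]
        (fun s => Phi2 f p (s, b)) := by
      filter_upwards [isOpen_Iio.mem_nhds (show a ∈ Set.Iio b from hab)] with s hs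
      have h1 : (fun t => F (s, t)) =ᶠ[nhds b] (fun t => Phi f p (s, t)) :=
        Filter.eventuallyEq_of_mem (isOpen_Ioi.mem_nhds (show b ∈ Set.Ioi s from hs))
          (fun t ht => hFPhi s t ht)
      rw [h1.deriv_eq]
      exact (inner2 f hf_cont p hpeven hint s b).deriv
    rw [claim1.deriv_eq, claim2.deriv_eq, claim3.deriv_eq, O1.deriv, O2.deriv, O3.deriv]
    -- now a purely algebraic computation
    have hp2 : (2:ℕ) ≤ p := by omega
    have hpe2 : Even (p - 2) := by
      obtain ⟨r, hr⟩ := hpeven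
      exact ⟨r - 1, by omega⟩
    -- LHS
    rw [integral_density f hf_cont hf_nonneg,
      minSplit f hf_cont hf_nonneg p hIP (p-2) (by omega) hpe2 a b hab,
      Ssum f p hint (p-2) (by omega) a m₀, Tsum f p hint (p-2) (by omega) b m₀]
    -- RHS simplification
    have hDa := Dsum p a m₀
    have hDb := Dsum p b m₀
    have hodd : Odd (p - 1) := Nat.Even.sub_odd (by omega) hpeven odd_one
    have hcancel : (m₀ - b)^(p-1) = -((m₀ - a)^(p-1)) := by
      have h1 : m₀ - b = -(m₀ - a) := by rw [hm₀]; ring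
      rw [h1, hodd.neg_pow]
    have hE2a := E2sum p hp2 a (fun k => Mf f k m₀)
    have hE2b := E2sum p hp2 b (fun k => muf f k - Mf f k m₀)
    -- combine the three sums
    have hcomb :
        (∑ k ∈ Finset.range (p+1), (p.choose k : ℝ) *
          (e2f p k a * Mf f k m₀ + ekf p k a * (m₀^k * f m₀ * (1/2))))
        + (∑ k ∈ Finset.range (p+1), (p.choose k : ℝ) *
          (e2f p k b * (muf f k - Mf f k m₀) + ekf p k b * (-(m₀^k * f m₀ * (1/2)))))
        - 2 * (∑ k ∈ Finset.range (p+1), (p.choose k : ℝ) *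
          (ekf p k b * (-(m₀^k * f m₀ * (1/2)))))
        = (∑ k ∈ Finset.range (p+1), (p.choose k : ℝ) * e2f p k a * Mf f k m₀)
          + (∑ k ∈ Finset.range (p+1), (p.choose k : ℝ) * e2f p k b * (muf f k - Mf f k m₀))
          + (f m₀ * (1/2)) *
            ((∑ k ∈ Finset.range (p+1), (p.choose k : ℝ) * ekf p k a * m₀^k)
              + (∑ k ∈ Finset.range (p+1), (p.choose k : ℝ) * ekf p k b * m₀^k)) := by
      simp only [Finset.mul_sum, ← Finset.sum_add_distrib, ← Finset.sum_sub_distrib]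
      apply Finset.sum_congr rfl
      intro k hk
      ring
    rw [hcomb, hDa, hDb, hcancel, hE2a, hE2b]
    have hpne : (p:ℝ) * ((p:ℝ) - 1) ≠ 0 := by
      have : (4:ℝ) ≤ (p:ℝ) := by exact_mod_cast hp
      nlinarith
    have hp1' : (p:ℝ) - 1 ≠ 0 := by
      have : (4:ℝ) ≤ (p:ℝ) := by exact_mod_cast hp
      linarith
    field_simp
    rw [show p - 2 + 1 = p - 1 from by omega]
    ring
end

section
/- The metric space (P_1(ℝ), Q_{1,1}) is complete, where P_1(ℝ) is the set of Borel probability measures on ℝ with finite first moment and Q_{1,1}(μ, ν) = sup_{a∈ℝ} |e_{1,1}(μ, a) − e_{1,1}(ν, a)|: every Cauchy sequence for Q_{1,1} in P_1(ℝ) converges for Q_{1,1} to some element of P_1(ℝ). -/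
open MeasureTheory Filter Topology
open scoped ENNReal NNReal

open Set

lemma integrable_id' {μ : Measure ℝ} (hm : HasFiniteMoment1 μ) :
    Integrable (fun ξ : ℝ => ξ) μ :=
  ⟨measurable_id.aestronglyMeasurable, lt_top_iff_ne_top.2 hm⟩

lemma integrable_abs_sub {μ : Measure ℝ} (hp : IsProbabilityMeasure μ)
    (hm : HasFiniteMoment1 μ) (a : ℝ) : Integrable (fun ξ : ℝ => |ξ - a|) μ := by
  haveI := hp
  exact ((integrable_id' hm).sub (integrable_const a)).abs

lemma integrable_abs' {μ : Measure ℝ} (hm : HasFiniteMoment1 μ) :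
    Integrable (fun ξ : ℝ => |ξ|) μ := (integrable_id' hm).abs

/-- `e11 μ` is 1-Lipschitz. -/
lemma e11_lip {μ : Measure ℝ} (hp : IsProbabilityMeasure μ) (hm : HasFiniteMoment1 μ)
    (a b : ℝ) : |e11 μ a - e11 μ b| ≤ |a - b| := by
  haveI := hp
  rw [e11, e11, ← integral_sub (integrable_abs_sub hp hm a) (integrable_abs_sub hp hm b)]
  calc |∫ ξ, (|ξ - a| - |ξ - b|) ∂μ| ≤ ∫ ξ, abs (|ξ - a| - |ξ - b|) ∂μ := by
        simpa [Real.norm_eq_abs] using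
          norm_integral_le_integral_norm (μ := μ) (f := fun ξ => |ξ - a| - |ξ - b|)
    _ ≤ ∫ _, |a - b| ∂μ := by
        refine integral_mono ((integrable_abs_sub hp hm a).sub (integrable_abs_sub hp hm b)).abs
          (integrable_const _) fun ξ => ?_
        have := abs_abs_sub_abs_le_abs_sub (ξ - a) (ξ - b)
        rw [sub_sub_sub_cancel_left] at this
        simpa [abs_sub_comm b a] using this
    _ = |a - b| := by simp

lemma e11_sub_abs {μ : Measure ℝ} (hp : IsProbabilityMeasure μ) (hm : HasFiniteMoment1 μ)
    (a : ℝ) : abs (e11 μ a - |a|) ≤ ∫ ξ, |ξ| ∂μ := by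
  haveI := hp
  have habs : (|a| : ℝ) = ∫ _, |a| ∂μ := by simp
  rw [e11, habs, ← integral_sub (integrable_abs_sub hp hm a) (integrable_const _)]
  calc |∫ ξ, (|ξ - a| - |a|) ∂μ| ≤ ∫ ξ, abs (|ξ - a| - |a|) ∂μ := by
        simpa [Real.norm_eq_abs] using
          norm_integral_le_integral_norm (μ := μ) (f := fun ξ => |ξ - a| - |a|)
    _ ≤ ∫ ξ, |ξ| ∂μ := by
        refine integral_mono ((integrable_abs_sub hp hm a).sub (integrable_const _)).abs
          (integrable_abs' hm) fun ξ => ?_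
        have : abs (|ξ - a| - |(-a)|) ≤ |ξ - a - -a| := abs_abs_sub_abs_le_abs_sub (ξ - a) (-a)
        simpa using this

lemma q11_nonneg (μ ν : Measure ℝ) : 0 ≤ q11 μ ν :=
  Real.iSup_nonneg fun _ => abs_nonneg _

lemma abs_e11_sub_le_q11 {μ ν : Measure ℝ} (hpμ : IsProbabilityMeasure μ)
    (hmμ : HasFiniteMoment1 μ) (hpν : IsProbabilityMeasure ν) (hmν : HasFiniteMoment1 ν)
    (a : ℝ) : |e11 μ a - e11 ν a| ≤ q11 μ ν := by
  refine le_ciSup (f := fun a => |e11 μ a - e11 ν a|) ⟨(∫ ξ, |ξ| ∂μ) + ∫ ξ, |ξ| ∂ν, ?_⟩ a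
  rintro x ⟨b, rfl⟩
  calc |e11 μ b - e11 ν b| ≤ abs (e11 μ b - |b|) + abs (e11 ν b - |b|) := by
        have h := abs_sub (e11 μ b - |b|) (e11 ν b - |b|)
        rw [sub_sub_sub_cancel_right] at h
        exact h
    _ ≤ (∫ ξ, |ξ| ∂μ) + ∫ ξ, |ξ| ∂ν :=
        add_le_add (e11_sub_abs hpμ hmμ b) (e11_sub_abs hpν hmν b)

lemma q11_le {μ ν : Measure ℝ} {c : ℝ} (h : ∀ a, |e11 μ a - e11 ν a| ≤ c) : q11 μ ν ≤ c :=
  ciSup_le h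
/-- Convexity inequality for `e11`. -/
lemma e11_convex {μ : Measure ℝ} (hp : IsProbabilityMeasure μ) (hm : HasFiniteMoment1 μ)
    {a b s t : ℝ} (hs : 0 ≤ s) (ht : 0 ≤ t) (hst : s + t = 1) :
    e11 μ (s * a + t * b) ≤ s * e11 μ a + t * e11 μ b := by
  haveI := hp
  have hmono : e11 μ (s * a + t * b) ≤ ∫ ξ, (s * |ξ - a| + t * |ξ - b|) ∂μ := by
    refine integral_mono (integrable_abs_sub hp hm _)
      (((integrable_abs_sub hp hm a).const_mul s).add
        ((integrable_abs_sub hp hm b).const_mul t)) fun ξ => ?_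
    have hξ : ξ - (s * a + t * b) = s * (ξ - a) + t * (ξ - b) := by
      have hs' : s = 1 - t := by linarith
      rw [hs']; ring
    calc |ξ - (s * a + t * b)| = |s * (ξ - a) + t * (ξ - b)| := by rw [hξ]
      _ ≤ |s * (ξ - a)| + |t * (ξ - b)| := abs_add_le _ _
      _ = s * |ξ - a| + t * |ξ - b| := by
          rw [abs_mul, abs_mul, abs_of_nonneg hs, abs_of_nonneg ht]
  rw [integral_add ((integrable_abs_sub hp hm a).const_mul s)
    ((integrable_abs_sub hp hm b).const_mul t), integral_const_mul, integral_const_mul] at hmono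
  exact hmono

/-- As `a → -∞`, `e11 μ a + a → ∫ ξ dμ`. -/
lemma e11_tendsto_atBot {μ : Measure ℝ} (hp : IsProbabilityMeasure μ)
    (hm : HasFiniteMoment1 μ) :
    Tendsto (fun a => e11 μ a + a) atBot (𝓝 (∫ ξ, ξ ∂μ)) := by
  haveI := hp
  have heq : ∀ a : ℝ, e11 μ a + a = ∫ ξ, (|ξ - a| + a) ∂μ := by
    intro a
    rw [e11, integral_add (integrable_abs_sub hp hm a) (integrable_const a), integral_const]
    simp
  simp only [heq]
  refine tendsto_integral_filter_of_dominated_convergence (fun ξ => |ξ|) ?_ ?_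
    (integrable_abs' hm) ?_
  · exact Eventually.of_forall fun a =>
      (((continuous_id.sub continuous_const).abs.add continuous_const).aestronglyMeasurable)
  · filter_upwards [eventually_le_atBot (0 : ℝ)] with a ha
    refine Eventually.of_forall fun ξ => ?_
    rw [Real.norm_eq_abs, abs_le]
    constructor
    · have h1 : ξ - a ≤ |ξ - a| := le_abs_self _
      linarith [le_abs_self ξ, neg_abs_le ξ]
    · have h2 : |ξ - a| ≤ |ξ| + |a| := abs_sub _ _
      have : |a| = -a := abs_of_nonpos ha
      nlinarith
  · refine Eventually.of_forall fun ξ => ?_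
    have : ∀ᶠ a in atBot, |ξ - a| + a = ξ := by
      filter_upwards [eventually_le_atBot ξ] with a ha
      rw [abs_of_nonneg (by linarith)]; ring
    exact Tendsto.congr' (by filter_upwards [this] with a ha using ha.symm) tendsto_const_nhds

/-- As `a → +∞`, `e11 μ a - a → -∫ ξ dμ`. -/
lemma e11_tendsto_atTop {μ : Measure ℝ} (hp : IsProbabilityMeasure μ)
    (hm : HasFiniteMoment1 μ) :
    Tendsto (fun a => e11 μ a - a) atTop (𝓝 (-∫ ξ, ξ ∂μ)) := by
  haveI := hp
  have heq : ∀ a : ℝ, e11 μ a - a = ∫ ξ, (|ξ - a| - a) ∂μ := by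
    intro a
    rw [e11, integral_sub (integrable_abs_sub hp hm a) (integrable_const a), integral_const]
    simp
  simp only [heq]
  have hnegint : (-∫ ξ, ξ ∂μ) = ∫ ξ, -ξ ∂μ := (integral_neg _).symm
  rw [hnegint]
  refine tendsto_integral_filter_of_dominated_convergence (fun ξ => |ξ|) ?_ ?_
    (integrable_abs' hm) ?_
  · exact Eventually.of_forall fun a =>
      (((continuous_id.sub continuous_const).abs.sub continuous_const).aestronglyMeasurable)
  · filter_upwards [eventually_ge_atTop (0 : ℝ)] with a ha
    refine Eventually.of_forall fun ξ => ?_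
    rw [Real.norm_eq_abs, abs_le]
    constructor
    · have h1 : a - ξ ≤ |ξ - a| := by rw [abs_sub_comm]; exact le_abs_self _
      linarith [le_abs_self ξ, neg_abs_le ξ]
    · have h2 : |ξ - a| ≤ |ξ| + |a| := abs_sub _ _
      have : |a| = a := abs_of_nonneg ha
      nlinarith
  · refine Eventually.of_forall fun ξ => ?_
    have : ∀ᶠ a in atTop, |ξ - a| - a = -ξ := by
      filter_upwards [eventually_ge_atTop ξ] with a ha
      rw [abs_of_nonpos (by linarith)]; ring
    exact Tendsto.congr' (by filter_upwards [this] with a ha using ha.symm) tendsto_const_nhds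
/-- Given a convex, `1`-Lipschitz, nonnegative function `g` with the asymptotics of a
quantization error function, there is a probability measure with finite first moment whose
quantization error function is exactly `g`. -/
theorem exists_measure_e11_eq {g : ℝ → ℝ} (hconv : ConvexOn ℝ univ g)
    (hlip : ∀ a b, |g a - g b| ≤ |a - b|) {m : ℝ}
    (hBot : Tendsto (fun a => g a + a) atBot (𝓝 m))
    (hTop : Tendsto (fun a => g a - a) atTop (𝓝 (-m)))
    (hg0 : ∀ a, 0 ≤ g a) :
    ∃ μ' : Measure ℝ, IsProbabilityMeasure μ' ∧ HasFiniteMoment1 μ' ∧ ∀ a, e11 μ' a = g a := by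
  classical
  have hgcont : Continuous g := by
    have : LipschitzWith 1 g := LipschitzWith.of_dist_le_mul fun a b => by
      rw [Real.dist_eq, Real.dist_eq]; simpa using hlip a b
    exact this.continuous
  -- the right-derivative candidate
  set f : ℝ → ℝ := fun x => sInf (slope g x '' Ioi x) with hf_def
  have hslope_abs : ∀ x y : ℝ, x ≠ y → |slope g x y| ≤ 1 := by
    intro x y hxy
    rw [slope_def_field, abs_div]
    have h0 : 0 < |y - x| := abs_pos.2 (sub_ne_zero.2 (Ne.symm hxy))
    rw [div_le_one h0]
    exact hlip y x
  have hne : ∀ x : ℝ, (slope g x '' Ioi x).Nonempty :=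
    fun x => ⟨_, ⟨x + 1, by simp, rfl⟩⟩
  have hbdd : ∀ x : ℝ, BddBelow (slope g x '' Ioi x) := by
    rintro x
    refine ⟨-1, ?_⟩
    rintro v ⟨y, hy, rfl⟩
    have := hslope_abs x y (ne_of_lt hy)
    linarith [neg_abs_le (slope g x y), abs_nonneg (slope g x y)]
  have hf_le_slope : ∀ x y : ℝ, x < y → f x ≤ slope g x y :=
    fun x y hy => csInf_le (hbdd x) ⟨y, hy, rfl⟩
  have hslope_mono : ∀ x y z : ℝ, x ≠ y → z ≠ y → x ≤ z → slope g y x ≤ slope g y z := by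
    intro x y z hxy hzy hxz
    exact hconv.slope_mono (mem_univ y) ⟨mem_univ x, hxy⟩ ⟨mem_univ z, hzy⟩ hxz
  have hslope_le_f : ∀ x y : ℝ, x < y → slope g x y ≤ f y := by
    intro x y hxy
    refine le_csInf (hne y) ?_
    rintro v ⟨z, hz, rfl⟩
    rw [← slope_comm]
    exact hslope_mono x y z (ne_of_lt hxy) (ne_of_gt hz) (hxy.le.trans (le_of_lt hz))
  have hf_mono : Monotone f := by
    intro x y hxy
    rcases eq_or_lt_of_le hxy with rfl | h
    · exact le_rfl
    · exact (hf_le_slope x y h).trans (hslope_le_f x y h)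
  have hf_le_one : ∀ x, f x ≤ 1 := by
    intro x
    refine (hf_le_slope x (x + 1) (by linarith)).trans ?_
    have := hslope_abs x (x + 1) (by linarith)
    exact (le_abs_self _).trans this
  have hf_ge_negone : ∀ x, -1 ≤ f x := by
    intro x
    refine le_csInf (hne x) ?_
    rintro v ⟨y, hy, rfl⟩
    have := hslope_abs x y (ne_of_lt hy)
    linarith [neg_abs_le (slope g x y)]
  -- right continuity of f
  have hf_rc : ∀ x, Function.rightLim f x = f x := by
    intro x
    refine le_antisymm ?_ (hf_mono.le_rightLim le_rfl)
    refine le_csInf (hne x) ?_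
    rintro v ⟨y, hy, rfl⟩
    have tf : Tendsto f (𝓝[>] x) (𝓝 (Function.rightLim f x)) := hf_mono.tendsto_rightLim x
    have ts : Tendsto (fun z => slope g z y) (𝓝[>] x) (𝓝 (slope g x y)) := by
      have hc : ContinuousAt (fun z => (g y - g z) / (y - z)) x := by
        apply ContinuousAt.div
        · exact (continuous_const.sub hgcont).continuousAt
        · exact (continuous_const.sub continuous_id).continuousAt
        · simpa using sub_ne_zero.2 (ne_of_gt hy)
      have heq : ∀ᶠ z in 𝓝[>] x, (g y - g z) / (y - z) = slope g z y := by
        refine Eventually.of_forall fun z => ?_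
        rw [slope_def_field]
      rw [slope_def_field]
      exact Tendsto.congr' heq hc.continuousWithinAt
    have hev : ∀ᶠ z in 𝓝[>] x, f z ≤ slope g z y := by
      filter_upwards [Ioo_mem_nhdsGT_of_mem (Set.left_mem_Ico.2 hy)] with z hz
      exact hf_le_slope z y hz.2
    exact le_of_tendsto_of_tendsto tf ts hev
  have hf_meas : Measurable f := hf_mono.measurable
  -- the Stieltjes function given by `f`
  set S : StieltjesFunction ℝ :=
    ⟨f, hf_mono, fun x => continuousWithinAt_Ioi_iff_Ici.1
      (hf_mono.continuousWithinAt_Ioi_iff_rightLim_eq.2 (hf_rc x))⟩ with hS_def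
  have hS_app : ∀ x, S x = f x := fun x => rfl
  -- limits of `f` at `±∞`
  have hfTop : Tendsto f atTop (𝓝 1) := by
    have h1 : Tendsto (fun x : ℝ => (g x - x - g 0) / x + 1) atTop (𝓝 1) := by
      have h0 : Tendsto (fun x : ℝ => (g x - x - g 0) / x) atTop (𝓝 0) :=
        Tendsto.div_atTop (hTop.sub_const (g 0)) tendsto_id
      simpa using h0.add_const 1
    have h2 : Tendsto (fun x : ℝ => slope g 0 x) atTop (𝓝 1) := by
      refine Tendsto.congr' ?_ h1
      filter_upwards [eventually_gt_atTop (0 : ℝ)] with x hx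
      rw [slope_def_field]
      have hx0 : x ≠ 0 := ne_of_gt hx
      field_simp
      ring
    refine tendsto_of_tendsto_of_tendsto_of_le_of_le' h2 tendsto_const_nhds ?_
      (Eventually.of_forall hf_le_one)
    filter_upwards [eventually_gt_atTop (0 : ℝ)] with x hx
    exact hslope_le_f 0 x hx
  have hfBot : Tendsto f atBot (𝓝 (-1)) := by
    have h1 : Tendsto (fun x : ℝ => (g 0 - (g x + x)) / (-x) - 1) atBot (𝓝 (-1)) := by
      have h0 : Tendsto (fun x : ℝ => (g 0 - (g x + x)) / (-x)) atBot (𝓝 0) :=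
        Tendsto.div_atTop (tendsto_const_nhds.sub hBot) tendsto_neg_atBot_atTop
      simpa using h0.sub_const 1
    have h2 : Tendsto (fun x : ℝ => slope g x 0) atBot (𝓝 (-1)) := by
      refine Tendsto.congr' ?_ h1
      filter_upwards [eventually_lt_atBot (0 : ℝ)] with x hx
      rw [slope_def_field, zero_sub]
      have hx0 : (-x) ≠ 0 := neg_ne_zero.2 (ne_of_lt hx)
      rw [eq_div_iff hx0, sub_mul, div_mul_cancel₀ _ hx0]
      ring
    refine tendsto_of_tendsto_of_tendsto_of_le_of_le' tendsto_const_nhds h2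
      (Eventually.of_forall hf_ge_negone) ?_
    filter_upwards [eventually_lt_atBot (0 : ℝ)] with x hx
    exact hf_le_slope x 0 hx
  have hSBot : Tendsto (fun x => S x) atBot (𝓝 (-1)) := hfBot
  have hSTop : Tendsto (fun x => S x) atTop (𝓝 1) := hfTop
  -- fundamental theorem of calculus for `g` and `f`
  have hf_ii : ∀ x y : ℝ, IntervalIntegrable f volume x y := fun x y =>
    hf_mono.intervalIntegrable
  have hgderiv : ∀ z : ℝ, HasDerivWithinAt g (f z) (Ici z) z := by
    intro z
    rw [hasDerivWithinAt_iff_tendsto_slope, Ici_sdiff_left]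
    have hmono : MonotoneOn (slope g z) (Ioi z) := fun u hu v hv huv =>
      hslope_mono u z v (ne_of_gt hu) (ne_of_gt hv) huv
    exact hmono.tendsto_nhdsGT (hbdd z)
  have hGderiv : ∀ x z : ℝ, HasDerivWithinAt (fun u => ∫ t in x..u, f t) (f z) (Ici z) z := by
    intro x z
    exact intervalIntegral.integral_hasDerivWithinAt_right (s := Ici z) (t := Ioi z) (hf_ii x z)
      ⟨univ, univ_mem, hf_meas.aestronglyMeasurable.restrict⟩
      (hf_mono.continuousWithinAt_Ioi_iff_rightLim_eq.2 (hf_rc z))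
  have hFTC : ∀ x y : ℝ, x ≤ y → ∫ t in x..y, f t = g y - g x := by
    intro x y hxy
    have hcont : ContinuousOn (fun u => g u - ∫ t in x..u, f t) (Icc x y) := by
      refine (hgcont.continuousOn).sub ?_
      have h := intervalIntegral.continuousOn_primitive_interval' (μ := volume) (hf_ii x y)
        Set.left_mem_uIcc
      exact h.mono (by rw [uIcc_of_le hxy])
    have hderiv : ∀ z ∈ Ico x y, HasDerivWithinAt (fun u => g u - ∫ t in x..u, f t) 0 (Ici z) z :=
      fun z _ => by simpa [Pi.sub_def] using (hgderiv z).sub (hGderiv x z)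
    have hc := constant_of_has_deriv_right_zero hcont hderiv y (right_mem_Icc.2 hxy)
    simp only [intervalIntegral.integral_same] at hc
    linarith
  -- the candidate measure
  set μ' : Measure ℝ := (2 : ℝ≥0∞)⁻¹ • S.measure with hμ'_def
  have hScoe : ⇑S = f := rfl
  have hSleft : ∀ x, Function.leftLim (⇑S) x = Function.leftLim f x := by rw [hScoe]; intro x; rfl
  have h2ne : (2 : ℝ≥0∞) ≠ 0 := two_ne_zero
  have h2net : (2 : ℝ≥0∞) ≠ ⊤ := ENNReal.ofNat_ne_top
  have huniv : μ' univ = 1 := by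
    rw [hμ'_def, Measure.smul_apply, smul_eq_mul, S.measure_univ hSBot hSTop]
    have : ((1 : ℝ) - -1) = 2 := by norm_num
    rw [this]
    have : ENNReal.ofReal (2 : ℝ) = 2 := by norm_num
    rw [this, ENNReal.inv_mul_cancel h2ne h2net]
  haveI hprob' : IsProbabilityMeasure μ' := ⟨huniv⟩
  have hIic : ∀ x, μ' (Iic x) = 2⁻¹ * ENNReal.ofReal (f x + 1) := by
    intro x
    rw [hμ'_def, Measure.smul_apply, smul_eq_mul, S.measure_Iic hSBot, hScoe]
    norm_num
  have hIci : ∀ x, μ' (Ici x) = 2⁻¹ * ENNReal.ofReal (1 - Function.leftLim f x) := by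
    intro x
    rw [hμ'_def, Measure.smul_apply, smul_eq_mul, S.measure_Ici hSTop, hSleft]
  have hkey2 : ∀ u : ℝ, -1 ≤ u → u ≤ 1 →
      2⁻¹ * ENNReal.ofReal (u + 1) + 2⁻¹ * ENNReal.ofReal (1 - u) = 1 := by
    intro u h1 h2
    rw [← mul_add, ← ENNReal.ofReal_add (by linarith) (by linarith)]
    have h3 : u + 1 + (1 - u) = 2 := by ring
    rw [h3]
    have h4 : ENNReal.ofReal (2 : ℝ) = 2 := by norm_num
    rw [h4, ENNReal.inv_mul_cancel h2ne h2net]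
  have hfin : ∀ c : ℝ, 2⁻¹ * ENNReal.ofReal c ≠ ⊤ :=
    fun c => ENNReal.mul_ne_top (by simp) ENNReal.ofReal_ne_top
  have hIoi : ∀ x, μ' (Ioi x) = 2⁻¹ * ENNReal.ofReal (1 - f x) := by
    intro x
    have hs := measure_add_measure_compl (μ := μ') (measurableSet_Iic (a := x))
    rw [compl_Iic, huniv, hIic x] at hs
    have h2 : 2⁻¹ * ENNReal.ofReal (f x + 1) + 2⁻¹ * ENNReal.ofReal (1 - f x) = 1 :=
      hkey2 (f x) (hf_ge_negone x) (hf_le_one x)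
    exact (ENNReal.add_right_inj (hfin _)).1 (hs.trans h2.symm)
  have hleft_bounds : ∀ x, -1 ≤ Function.leftLim f x ∧ Function.leftLim f x ≤ 1 := by
    intro x
    constructor
    · exact (hf_ge_negone (x - 1)).trans (hf_mono.le_leftLim (by linarith))
    · exact (hf_mono.leftLim_le le_rfl).trans (hf_le_one x)
  have hIio : ∀ x, μ' (Iio x) = 2⁻¹ * ENNReal.ofReal (Function.leftLim f x + 1) := by
    intro x
    have hs := measure_add_measure_compl (μ := μ') (measurableSet_Ici (a := x))
    rw [compl_Ici, huniv, hIci x] at hs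
    have h2 : 2⁻¹ * ENNReal.ofReal (1 - Function.leftLim f x) +
        2⁻¹ * ENNReal.ofReal (Function.leftLim f x + 1) = 1 := by
      rw [add_comm]
      exact hkey2 _ (hleft_bounds x).1 (hleft_bounds x).2
    exact (ENNReal.add_right_inj (hfin _)).1 (hs.trans h2.symm)
  -- the set where `leftLim f ≠ f` is countable
  have hD : Set.Countable {x : ℝ | Function.leftLim f x ≠ f x} := by
    refine (hf_mono.countable_not_continuousAt).mono ?_
    intro x hx hc
    exact hx (hf_mono.continuousWithinAt_Iio_iff_leftLim_eq.1 hc.continuousWithinAt)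
  have hhalf : ∀ u : ℝ, 2⁻¹ * ENNReal.ofReal u = ENNReal.ofReal (u / 2) := by
    intro u
    rw [ENNReal.ofReal_div_of_pos (by norm_num : (0:ℝ) < 2)]
    have h4 : ENNReal.ofReal (2:ℝ) = 2 := by norm_num
    rw [h4, ENNReal.div_eq_inv_mul]
  -- the main computation
  have hmain : ∀ a : ℝ, ∫⁻ ξ, ENNReal.ofReal |ξ - a| ∂μ' = ENNReal.ofReal (g a) := by
    intro a
    have hlc : ∫⁻ ξ, ENNReal.ofReal |ξ - a| ∂μ' = ∫⁻ t in Ioi 0, μ' {ξ | t < |ξ - a|} :=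
      lintegral_eq_lintegral_meas_lt μ' (Eventually.of_forall fun ξ => abs_nonneg _)
        ((measurable_id.sub measurable_const).abs.aemeasurable)
    set φ : ℝ → ℝ := fun t => (2 + f (a - t) - f (a + t)) / 2 with hφ_def
    have hφ_nonneg : ∀ t, 0 ≤ φ t := by
      intro t
      have h1 := hf_ge_negone (a - t); have h2 := hf_le_one (a + t)
      have h3 : (0:ℝ) ≤ 2 + f (a - t) - f (a + t) := by linarith
      show (0:ℝ) ≤ (2 + f (a - t) - f (a + t)) / 2
      exact div_nonneg h3 (by norm_num)
    have hφ_le : ∀ t, φ t ≤ 2 := by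
      intro t
      have h1 := hf_le_one (a - t); have h2 := hf_ge_negone (a + t)
      show (2 + f (a - t) - f (a + t)) / 2 ≤ 2
      rw [div_le_iff₀ (by norm_num : (0:ℝ) < 2)]
      linarith
    have hφ_meas : Measurable φ := by
      apply Measurable.div_const
      exact (measurable_const.add
        (hf_meas.comp (measurable_const.sub measurable_id))).sub
        (hf_meas.comp (measurable_const.add measurable_id))
    have hset : ∀ t : ℝ, 0 < t → {ξ : ℝ | t < |ξ - a|} = Iio (a - t) ∪ Ioi (a + t) := by
      intro t ht
      ext ξ
      simp only [mem_setOf_eq, mem_union, mem_Iio, mem_Ioi, lt_abs]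
      constructor
      · rintro (h | h)
        · right; linarith
        · left; linarith
      · rintro (h | h)
        · right; linarith
        · left; linarith
    have hbadset : Set.Countable {t : ℝ | Function.leftLim f (a - t) ≠ f (a - t)} := by
      have himg : {t : ℝ | Function.leftLim f (a - t) ≠ f (a - t)} ⊆
          (fun x : ℝ => a - x) '' {x | Function.leftLim f x ≠ f x} :=
        fun t ht => ⟨a - t, ht, by ring⟩
      exact (hD.image _).mono himg
    have hbad : ∀ᵐ t : ℝ, Function.leftLim f (a - t) = f (a - t) := by
      rw [ae_iff]
      exact measure_mono_null (fun t ht => ht) (hbadset.measure_zero _)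
    have hmeasval : ∀ᵐ t ∂(volume.restrict (Ioi (0:ℝ))),
        μ' {ξ | t < |ξ - a|} = ENNReal.ofReal (φ t) := by
      filter_upwards [ae_restrict_of_ae hbad, self_mem_ae_restrict measurableSet_Ioi]
        with t hft ht
      have hdisj : Disjoint (Iio (a - t)) (Ioi (a + t)) := by
        rw [Set.disjoint_left]
        intro ξ h1 h2
        rw [mem_Iio] at h1; rw [mem_Ioi] at h2
        have ht' : (0:ℝ) < t := ht
        linarith
      rw [hset t ht, measure_union hdisj measurableSet_Ioi, hIio, hIoi, hft, hhalf, hhalf,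
        ← ENNReal.ofReal_add (div_nonneg (by linarith [hf_ge_negone (a - t)]) (by norm_num))
          (div_nonneg (by linarith [hf_le_one (a + t)]) (by norm_num))]
      congr 1
      rw [hφ_def]
      ring
    -- integrals over `Ioc 0 n`
    have hmono_int : ∀ n : ℕ, ∫⁻ t in Ioc (0:ℝ) (n:ℝ), ENNReal.ofReal (φ t)
        = ENNReal.ofReal (∫ t in (0:ℝ)..(n:ℝ), φ t) := by
      intro n
      haveI : IsFiniteMeasure (volume.restrict (Ioc (0:ℝ) (n:ℝ))) :=
        ⟨by rw [Measure.restrict_apply_univ]; exact measure_Ioc_lt_top⟩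
      have hφint : IntegrableOn φ (Ioc (0:ℝ) (n:ℝ)) volume := by
        refine Integrable.mono' (integrable_const 2) hφ_meas.aestronglyMeasurable.restrict
          (Eventually.of_forall fun t => ?_)
        rw [Real.norm_eq_abs, abs_of_nonneg (hφ_nonneg t)]
        exact hφ_le t
      rw [intervalIntegral.integral_of_le (by positivity : (0:ℝ) ≤ (n:ℝ)),
        ofReal_integral_eq_lintegral_ofReal hφint (Eventually.of_forall hφ_nonneg)]
    -- value of the real integrals
    have hAn : ∀ n : ℕ, ∫ t in (0:ℝ)..(n:ℝ), φ t
        = (n:ℝ) + (g a - g (a - n)) / 2 - (g (a + n) - g a) / 2 := by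
      intro n
      have hanti : Antitone fun t : ℝ => f (a - t) := fun u v huv => hf_mono (by linarith)
      have hmono2 : Monotone fun t : ℝ => f (a + t) := fun u v huv => hf_mono (by linarith)
      have hint1 : ∫ t in (0:ℝ)..(n:ℝ), f (a - t) = g a - g (a - n) := by
        rw [intervalIntegral.integral_comp_sub_left (fun t => f t) a]
        rw [sub_zero]
        exact hFTC (a - n) a (by linarith [Nat.cast_nonneg (α := ℝ) n])
      have hint2 : ∫ t in (0:ℝ)..(n:ℝ), f (a + t) = g (a + n) - g a := by
        rw [intervalIntegral.integral_comp_add_left (fun t => f t) a]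
        rw [add_zero]
        exact hFTC a (a + n) (by linarith [Nat.cast_nonneg (α := ℝ) n])
      have hφeq : φ = fun t => (1 + (f (a - t) / 2 - f (a + t) / 2)) := by
        funext t
        show (2 + f (a - t) - f (a + t)) / 2 = _
        ring
      rw [hφeq]
      rw [intervalIntegral.integral_add intervalIntegrable_const
        (((hanti.intervalIntegrable).div_const 2).sub
          ((hmono2.intervalIntegrable).div_const 2)),
        intervalIntegral.integral_sub ((hanti.intervalIntegrable).div_const 2)
          ((hmono2.intervalIntegrable).div_const 2),
        intervalIntegral.integral_div, intervalIntegral.integral_div, hint1, hint2]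
      simp
      ring
    -- convergence of the real integrals to `g a`
    have hAtendsto : Tendsto (fun n : ℕ => ∫ t in (0:ℝ)..(n:ℝ), φ t) atTop (𝓝 (g a)) := by
      have hcast : Tendsto (fun n : ℕ => (n:ℝ)) atTop atTop := tendsto_natCast_atTop_atTop
      have hnBot : Tendsto (fun n : ℕ => a - (n:ℝ)) atTop atBot := by
        have h1 : Tendsto (fun n : ℕ => -(n:ℝ)) atTop atBot :=
          tendsto_neg_atTop_atBot.comp hcast
        have h2 := tendsto_atBot_add_const_left atTop a h1
        refine h2.congr fun n => ?_
        ring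
      have hnTop : Tendsto (fun n : ℕ => a + (n:ℝ)) atTop atTop :=
        tendsto_atTop_add_const_left atTop a hcast
      have h1 : Tendsto (fun n : ℕ => g (a - n) + (a - n)) atTop (𝓝 m) := hBot.comp hnBot
      have h2 : Tendsto (fun n : ℕ => g (a + n) - (a + n)) atTop (𝓝 (-m)) := hTop.comp hnTop
      have h3 : Tendsto (fun n : ℕ =>
          g a - ((g (a - n) + (a - n)) + (g (a + n) - (a + n))) / 2) atTop
          (𝓝 (g a - (m + -m) / 2)) :=
        tendsto_const_nhds.sub ((h1.add h2).div_const 2)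
      have h4 : ∀ n : ℕ, ∫ t in (0:ℝ)..(n:ℝ), φ t
          = g a - ((g (a - n) + (a - n)) + (g (a + n) - (a + n))) / 2 := by
        intro n
        rw [hAn n]
        ring
      simp only [h4]
      simpa using h3
    -- monotone convergence over `Ioi 0`
    have hiSup : ∫⁻ t in Ioi (0:ℝ), ENNReal.ofReal (φ t)
        = ⨆ n : ℕ, ∫⁻ t in Ioc (0:ℝ) (n:ℝ), ENNReal.ofReal (φ t) := by
      rw [← lintegral_indicator measurableSet_Ioi _]
      have hind : (Ioi (0:ℝ)).indicator (fun t => ENNReal.ofReal (φ t))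
          = fun t => ⨆ n : ℕ, (Ioc (0:ℝ) (n:ℝ)).indicator (fun t => ENNReal.ofReal (φ t)) t := by
        funext t
        by_cases ht : 0 < t
        · rw [indicator_of_mem (mem_Ioi.2 ht)]
          refine le_antisymm ?_ (iSup_le fun n => ?_)
          · obtain ⟨n, hn⟩ := exists_nat_ge t
            refine le_iSup_of_le n ?_
            rw [indicator_of_mem (mem_Ioc.2 ⟨ht, hn⟩)]
          · by_cases h : t ∈ Ioc (0:ℝ) (n:ℝ)
            · rw [indicator_of_mem h]
            · rw [indicator_of_notMem h]; exact zero_le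
        · rw [indicator_of_notMem (by simpa using ht)]
          symm
          simp only [ENNReal.iSup_eq_zero]
          intro n
          rw [indicator_of_notMem]
          intro hmem
          exact ht hmem.1
      rw [hind, lintegral_iSup (fun n => (hφ_meas.ennreal_ofReal).indicator measurableSet_Ioc)
        (fun p q hpq => indicator_le_indicator_of_subset
          (Ioc_subset_Ioc_right (by exact_mod_cast hpq)) (fun t => zero_le))]
      congr 1
      funext n
      rw [lintegral_indicator measurableSet_Ioc _]
    -- put everything together
    have hseq_mono : Monotone fun n : ℕ => ∫⁻ t in Ioc (0:ℝ) (n:ℝ), ENNReal.ofReal (φ t) :=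
      fun p q hpq => lintegral_mono_set (Ioc_subset_Ioc_right (by exact_mod_cast hpq))
    have hlim1 : Tendsto (fun n : ℕ => ∫⁻ t in Ioc (0:ℝ) (n:ℝ), ENNReal.ofReal (φ t)) atTop
        (𝓝 (⨆ n : ℕ, ∫⁻ t in Ioc (0:ℝ) (n:ℝ), ENNReal.ofReal (φ t))) :=
      tendsto_atTop_iSup hseq_mono
    have hlim2 : Tendsto (fun n : ℕ => ∫⁻ t in Ioc (0:ℝ) (n:ℝ), ENNReal.ofReal (φ t)) atTop
        (𝓝 (ENNReal.ofReal (g a))) := by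
      simp only [hmono_int]
      exact (ENNReal.continuous_ofReal.tendsto _).comp hAtendsto
    rw [hlc, lintegral_congr_ae hmeasval, hiSup]
    exact tendsto_nhds_unique hlim1 hlim2
  -- conclusion
  have hmom' : HasFiniteMoment1 μ' := by
    have heq : (fun ξ : ℝ => (‖ξ‖₊ : ℝ≥0∞)) = fun ξ => ENNReal.ofReal |ξ - 0| := by
      funext ξ
      rw [sub_zero]; exact Real.enorm_eq_ofReal_abs ξ
    rw [HasFiniteMoment1, heq, hmain 0]
    exact ENNReal.ofReal_ne_top
  refine ⟨μ', hprob', hmom', fun a => ?_⟩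
  rw [e11, integral_eq_lintegral_of_nonneg_ae (f := fun ξ : ℝ => |ξ - a|) (μ := μ')
    (Eventually.of_forall fun ξ => abs_nonneg _)
    ((continuous_sub_right a).abs.aestronglyMeasurable), hmain a,
    ENNReal.toReal_ofReal (hg0 a)]
/-- the metric space `(P₁(ℝ), Q_{1,1})` is complete: every sequence of
probability measures on `ℝ` with finite first moments that is Cauchy for `Q_{1,1}` converges
for `Q_{1,1}` to a probability measure on `ℝ` with finite first moment. -/
theorem stmt18 (μ : ℕ → Measure ℝ)
    (hprob : ∀ n, IsProbabilityMeasure (μ n))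
    (hmom : ∀ n, HasFiniteMoment1 (μ n))
    (hcauchy : ∀ ε : ℝ, 0 < ε → ∃ M : ℕ, ∀ m ≥ M, ∀ n ≥ M, q11 (μ m) (μ n) < ε) :
    ∃ μ' : Measure ℝ, IsProbabilityMeasure μ' ∧ HasFiniteMoment1 μ' ∧
      Tendsto (fun n => q11 (μ n) μ') atTop (𝓝 0) := by
  have key : ∀ p q a, |e11 (μ p) a - e11 (μ q) a| ≤ q11 (μ p) (μ q) :=
    fun p q a => abs_e11_sub_le_q11 (hprob p) (hmom p) (hprob q) (hmom q) a
  -- pointwise limit `g` of the error functions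
  have hcau : ∀ a : ℝ, CauchySeq fun n => e11 (μ n) a := by
    intro a
    rw [Metric.cauchySeq_iff]
    intro ε hε
    obtain ⟨M, hM⟩ := hcauchy ε hε
    exact ⟨M, fun p hp q hq => by
      rw [Real.dist_eq]
      exact lt_of_le_of_lt (key p q a) (hM p hp q hq)⟩
  have hglim : ∀ a : ℝ, ∃ l : ℝ, Tendsto (fun n => e11 (μ n) a) atTop (𝓝 l) :=
    fun a => cauchySeq_tendsto_of_complete (hcau a)
  choose g hg using hglim
  -- uniform convergence
  have hunif : ∀ ε : ℝ, 0 < ε → ∃ M : ℕ, ∀ n ≥ M, ∀ a, |e11 (μ n) a - g a| ≤ ε := by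
    intro ε hε
    obtain ⟨M, hM⟩ := hcauchy ε hε
    refine ⟨M, fun n hn a => ?_⟩
    have h1 : Tendsto (fun p => |e11 (μ n) a - e11 (μ p) a|) atTop (𝓝 |e11 (μ n) a - g a|) :=
      (tendsto_const_nhds.sub (hg a)).abs
    refine le_of_tendsto h1 ?_
    filter_upwards [eventually_ge_atTop M] with p hp
    exact (key n p a).trans (hM n hn p hp).le
  -- properties of `g`
  have hg0 : ∀ a, 0 ≤ g a := by
    intro a
    refine ge_of_tendsto (hg a) (Eventually.of_forall fun n => ?_)
    rw [e11]
    exact integral_nonneg fun ξ => abs_nonneg _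
  have hlip : ∀ a b, |g a - g b| ≤ |a - b| := by
    intro a b
    have h1 : Tendsto (fun n => |e11 (μ n) a - e11 (μ n) b|) atTop (𝓝 |g a - g b|) :=
      ((hg a).sub (hg b)).abs
    exact le_of_tendsto h1 (Eventually.of_forall fun n => e11_lip (hprob n) (hmom n) a b)
  have hconv : ConvexOn ℝ Set.univ g := by
    refine ⟨convex_univ, fun a _ b _ s t hs ht hst => ?_⟩
    simp only [smul_eq_mul]
    have h1 : Tendsto (fun n => e11 (μ n) (s * a + t * b)) atTop (𝓝 (g (s * a + t * b))) := hg _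
    have h2 : Tendsto (fun n => s * e11 (μ n) a + t * e11 (μ n) b) atTop
        (𝓝 (s * g a + t * g b)) := ((hg a).const_mul s).add ((hg b).const_mul t)
    exact le_of_tendsto_of_tendsto' h1 h2 fun n => e11_convex (hprob n) (hmom n) hs ht hst
  -- the means converge
  have hmean : ∀ n, Tendsto (fun a => e11 (μ n) a + a) atBot (𝓝 (∫ ξ, ξ ∂(μ n))) :=
    fun n => e11_tendsto_atBot (hprob n) (hmom n)
  have hmean' : ∀ n, Tendsto (fun a => e11 (μ n) a - a) atTop (𝓝 (-∫ ξ, ξ ∂(μ n))) :=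
    fun n => e11_tendsto_atTop (hprob n) (hmom n)
  have hmcau : CauchySeq fun n => ∫ ξ, ξ ∂(μ n) := by
    rw [Metric.cauchySeq_iff]
    intro ε hε
    obtain ⟨M, hM⟩ := hcauchy ε hε
    refine ⟨M, fun p hp q hq => ?_⟩
    rw [Real.dist_eq]
    have h1 : Tendsto (fun a => |(e11 (μ p) a + a) - (e11 (μ q) a + a)|) atBot
        (𝓝 |(∫ ξ, ξ ∂(μ p)) - ∫ ξ, ξ ∂(μ q)|) := ((hmean p).sub (hmean q)).abs
    refine lt_of_le_of_lt (le_of_tendsto h1 (Eventually.of_forall fun a => ?_))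
      (hM p hp q hq)
    have heq : (e11 (μ p) a + a) - (e11 (μ q) a + a) = e11 (μ p) a - e11 (μ q) a := by ring
    rw [heq]
    exact key p q a
  obtain ⟨m, hm⟩ := cauchySeq_tendsto_of_complete hmcau
  -- asymptotics of `g`
  have hgBot : Tendsto (fun a => g a + a) atBot (𝓝 m) := by
    rw [Metric.tendsto_nhds]
    intro ε hε
    obtain ⟨M₁, hM₁⟩ := hunif (ε / 3) (by linarith)
    obtain ⟨M₂, hM₂⟩ := Metric.tendsto_atTop.1 hm (ε / 3) (by linarith)
    set n₀ := max M₁ M₂ with hn₀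
    have hn₁ := hM₁ n₀ (le_max_left _ _)
    have hn₂ := hM₂ n₀ (le_max_right _ _)
    have h3 := Metric.tendsto_nhds.1 (hmean n₀) (ε / 3) (by linarith)
    filter_upwards [h3] with a ha
    rw [Real.dist_eq] at ha hn₂ ⊢
    have e1 : |e11 (μ n₀) a - g a| ≤ ε / 3 := hn₁ a
    have heq : (g a + a) - m = (g a - e11 (μ n₀) a) + ((e11 (μ n₀) a + a) - ∫ ξ, ξ ∂(μ n₀))
        + ((∫ ξ, ξ ∂(μ n₀)) - m) := by ring
    rw [heq]
    calc |_ + _ + _| ≤ |g a - e11 (μ n₀) a| + |(e11 (μ n₀) a + a) - ∫ ξ, ξ ∂(μ n₀)|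
        + |(∫ ξ, ξ ∂(μ n₀)) - m| := abs_add_three _ _ _
      _ < ε := by
        rw [abs_sub_comm (g a) (e11 (μ n₀) a)]
        linarith
  have hgTop : Tendsto (fun a => g a - a) atTop (𝓝 (-m)) := by
    rw [Metric.tendsto_nhds]
    intro ε hε
    obtain ⟨M₁, hM₁⟩ := hunif (ε / 3) (by linarith)
    obtain ⟨M₂, hM₂⟩ := Metric.tendsto_atTop.1 hm (ε / 3) (by linarith)
    set n₀ := max M₁ M₂ with hn₀
    have hn₁ := hM₁ n₀ (le_max_left _ _)
    have hn₂ := hM₂ n₀ (le_max_right _ _)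
    have h3 := Metric.tendsto_nhds.1 (hmean' n₀) (ε / 3) (by linarith)
    filter_upwards [h3] with a ha
    rw [Real.dist_eq] at ha hn₂ ⊢
    have e1 : |e11 (μ n₀) a - g a| ≤ ε / 3 := hn₁ a
    have heq : (g a - a) - (-m) = (g a - e11 (μ n₀) a)
        + ((e11 (μ n₀) a - a) - (-∫ ξ, ξ ∂(μ n₀))) + (m - (∫ ξ, ξ ∂(μ n₀))) + (0:ℝ) := by ring
    rw [heq]
    calc |_ + _| ≤ |(g a - e11 (μ n₀) a)
        + ((e11 (μ n₀) a - a) - (-∫ ξ, ξ ∂(μ n₀))) + (m - (∫ ξ, ξ ∂(μ n₀)))| + |(0:ℝ)| :=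
          abs_add_le _ _
      _ ≤ |g a - e11 (μ n₀) a| + |(e11 (μ n₀) a - a) - (-∫ ξ, ξ ∂(μ n₀))|
        + |m - (∫ ξ, ξ ∂(μ n₀))| + |(0:ℝ)| := by
          gcongr
          exact abs_add_three _ _ _
      _ < ε := by
        rw [abs_sub_comm (g a) (e11 (μ n₀) a), abs_sub_comm m (∫ ξ, ξ ∂(μ n₀))]
        simp only [abs_zero]
        linarith
  -- the limit measure
  obtain ⟨μ', hprob', hmom', he⟩ := exists_measure_e11_eq hconv hlip hgBot hgTop hg0
  refine ⟨μ', hprob', hmom', ?_⟩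
  rw [Metric.tendsto_atTop]
  intro ε hε
  obtain ⟨M, hM⟩ := hunif (ε / 2) (by linarith)
  refine ⟨M, fun n hn => ?_⟩
  rw [Real.dist_eq, sub_zero, abs_of_nonneg (q11_nonneg _ _)]
  have hle : q11 (μ n) μ' ≤ ε / 2 := q11_le fun a => by rw [he a]; exact hM n hn a
  linarith
end
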